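/- arXiv:1608.00471 — 6 statements merged into one kernel-verified Lean document; each statement's English description precedes it below -/
import Mathlib

section
/- A sequence of random variables that is spreadable (i.e., its law is invariant under selection of any infinite subsequence) is exchangeable. -/
open MeasureTheory ProbabilityTheory Filter Finset
set_option linter.unusedSectionVars false

namespace SpreadAux

variable {Ω E : Type*} {mΩ : MeasurableSpace Ω} [MeasurableSpace E]
  {P : Measure Ω} [IsProbabilityMeasure P] {X : ℕ → Ω → E}

def Spread (P : Measure Ω) (X : ℕ → Ω → E) : Prop :=
  ∀ k : ℕ → ℕ, StrictMono k →
    Measure.map (fun ω => fun n => X (k n) ω) P = Measure.map (fun ω => fun n => X n ω) P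

lemma integrable_bdd {h : Ω → ℝ} (hm : Measurable h) {C : ℝ} (hb : ∀ ω, |h ω| ≤ C) :
    Integrable h P :=
  Integrable.mono' (integrable_const C) hm.aestronglyMeasurable
    (Filter.Eventually.of_forall fun ω => by simpa [Real.norm_eq_abs] using hb ω)

omit [IsProbabilityMeasure P] in
lemma stepA (hX : ∀ n, Measurable (X n)) (hsp : Spread P X)
    (k : ℕ → ℕ) (hk : StrictMono k) (n : ℕ) (f : Fin n → E → ℝ) (hf : ∀ i, Measurable (f i)) :
    ∫ ω, ∏ i : Fin n, f i (X (k i) ω) ∂P = ∫ ω, ∏ i : Fin n, f i (X (i : ℕ) ω) ∂P := by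
  have hg : Measurable (fun y : ℕ → E => ∏ i : Fin n, f i (y i)) :=
    Finset.measurable_prod _ fun i _ => (hf i).comp (measurable_pi_apply _)
  have h1 : Measurable (fun ω => fun m => X (k m) ω) :=
    measurable_pi_lambda _ fun m => hX (k m)
  have h2 : Measurable (fun ω => fun m => X m ω) := measurable_pi_lambda _ fun m => hX m
  calc ∫ ω, ∏ i : Fin n, f i (X (k i) ω) ∂P
      = ∫ y, (∏ i : Fin n, f i (y i)) ∂(Measure.map (fun ω => fun m => X (k m) ω) P) :=
        (integral_map h1.aemeasurable hg.aestronglyMeasurable).symm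
    _ = ∫ y, (∏ i : Fin n, f i (y i)) ∂(Measure.map (fun ω => fun m => X m ω) P) := by
        rw [hsp k hk]
    _ = ∫ ω, ∏ i : Fin n, f i (X (i : ℕ) ω) ∂P :=
        integral_map h2.aemeasurable hg.aestronglyMeasurable

omit [IsProbabilityMeasure P] in
lemma stepB (hX : ∀ n, Measurable (X n)) (hsp : Spread P X)
    {n N : ℕ} (hN : 0 < N) (j : Fin n → ℕ)
    (hj : ∀ i : Fin n, (i : ℕ) * N ≤ j i ∧ j i < (i : ℕ) * N + N)
    (f : Fin n → E → ℝ) (hf : ∀ i, Measurable (f i)) :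
    ∫ ω, ∏ i : Fin n, f i (X (j i) ω) ∂P = ∫ ω, ∏ i : Fin n, f i (X (i : ℕ) ω) ∂P := by
  classical
  set k : ℕ → ℕ := fun m => if h : m < n then j ⟨m, h⟩ else m * N with hk_def
  have hkw : ∀ m, m * N ≤ k m ∧ k m < m * N + N := by
    intro m; by_cases h : m < n
    · simpa [hk_def, h] using hj ⟨m, h⟩
    · simp [hk_def, h, hN]
  have hk : StrictMono k := strictMono_nat_of_lt_succ (fun m => by
    have h1 := (hkw m).2
    have h2 := (hkw (m + 1)).1
    have h3 : (m + 1) * N = m * N + N := by ring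
    omega)
  have hkj : ∀ i : Fin n, k (i : ℕ) = j i := fun i => by simp [hk_def, i.isLt]
  have h := stepA hX hsp k hk n f hf
  simpa [hkj] using h

omit [IsProbabilityMeasure P] in
lemma pair (hX : ∀ n, Measurable (X n)) (hsp : Spread P X)
    {p q : ℕ} (hpq : p < q) {f g : E → ℝ} (hf : Measurable f) (hg : Measurable g) :
    ∫ ω, f (X p ω) * g (X q ω) ∂P = ∫ ω, f (X 0 ω) * g (X 1 ω) ∂P := by
  have hk : StrictMono (fun m => p + m * (q - p)) := by
    intro a b hab
    have : 0 < q - p := by omega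
    simp only
    have := Nat.mul_lt_mul_of_lt_of_le hab (le_refl (q - p)) this
    omega
  have h := stepA hX hsp (fun m => p + m * (q - p)) hk 2 ![f, g]
    (fun i => by fin_cases i <;> simpa)
  have e0 : p + (0 : Fin 2).val * (q - p) = p := by simp
  have e1 : p + (q - p) = q := by omega
  simpa [Fin.prod_univ_two, e0, e1] using h

omit [IsProbabilityMeasure P] in
lemma single (hX : ∀ n, Measurable (X n)) (hsp : Spread P X)
    (p : ℕ) {f : E → ℝ} (hf : Measurable f) :
    ∫ ω, f (X p ω) ∂P = ∫ ω, f (X 0 ω) ∂P := by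
  have hk : StrictMono (fun m => p + m) := fun a b h => by simp only []; omega
  have h := stepA hX hsp (fun m => p + m) hk 1 ![f] (fun i => by fin_cases i <;> simpa)
  simpa [Fin.prod_univ_one] using h

/-- Cesàro average of `f ∘ X` over the index window `[s, s+N)`. -/
noncomputable def avg (X : ℕ → Ω → E) (f : E → ℝ) (N s : ℕ) (ω : Ω) : ℝ :=
  (N : ℝ)⁻¹ * ∑ u ∈ Finset.range N, f (X (s + u) ω)

omit [IsProbabilityMeasure P] in
lemma avg_meas (hX : ∀ n, Measurable (X n)) {f : E → ℝ} (hf : Measurable f) (N s : ℕ) :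
    Measurable (avg X f N s) :=
  (Finset.measurable_sum _ fun u _ => hf.comp (hX (s + u))).const_mul _

omit [IsProbabilityMeasure P] in
lemma avg_bdd {f : E → ℝ} (hb : ∀ x, |f x| ≤ 1) (N s : ℕ) (ω : Ω) :
    |avg X f N s ω| ≤ 1 := by
  rcases Nat.eq_zero_or_pos N with h | h
  · simp [avg, h]
  · have h1 : |∑ u ∈ Finset.range N, f (X (s + u) ω)| ≤ (N : ℝ) := by
      calc |∑ u ∈ Finset.range N, f (X (s + u) ω)|
          ≤ ∑ u ∈ Finset.range N, |f (X (s + u) ω)| := Finset.abs_sum_le_sum_abs _ _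
        _ ≤ ∑ _u ∈ Finset.range N, (1 : ℝ) := Finset.sum_le_sum fun u _ => hb _
        _ = (N : ℝ) := by simp
    have hN : (0 : ℝ) < (N : ℝ) := by exact_mod_cast h
    rw [avg, abs_mul, abs_inv, abs_of_nonneg hN.le]
    calc (N : ℝ)⁻¹ * |∑ u ∈ Finset.range N, f (X (s + u) ω)| ≤ (N : ℝ)⁻¹ * (N : ℝ) :=
          mul_le_mul_of_nonneg_left h1 (by positivity)
      _ = 1 := by field_simp

lemma avg_cross (hX : ∀ n, Measurable (X n)) (hsp : Spread P X)
    {N : ℕ} (hN : 0 < N) {s t : ℕ}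
    (hst : ∀ u v : ℕ, u < N → v < N → s + u ≠ t + v)
    {f : E → ℝ} (hf : Measurable f) (hb : ∀ x, |f x| ≤ 1) :
    ∫ ω, avg X f N s ω * avg X f N t ω ∂P = ∫ ω, f (X 0 ω) * f (X 1 ω) ∂P := by
  have hint : ∀ p q : ℕ, Integrable (fun ω => f (X p ω) * f (X q ω)) P := fun p q =>
    integrable_bdd (((hf.comp (hX p)).mul (hf.comp (hX q)))) (C := 1) (fun ω => by
      rw [abs_mul]
      exact mul_le_one₀ (hb _) (abs_nonneg _) (hb _))
  have hterm : ∀ p q : ℕ, p ≠ q →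
      ∫ ω, f (X p ω) * f (X q ω) ∂P = ∫ ω, f (X 0 ω) * f (X 1 ω) ∂P := by
    intro p q hpq
    rcases lt_or_gt_of_ne hpq with h | h
    · exact pair hX hsp h hf hf
    · calc ∫ ω, f (X p ω) * f (X q ω) ∂P = ∫ ω, f (X q ω) * f (X p ω) ∂P := by
            simp_rw [mul_comm]
        _ = _ := pair hX hsp h hf hf
  have hpt : ∀ ω, avg X f N s ω * avg X f N t ω
      = (N : ℝ)⁻¹ * (N : ℝ)⁻¹ *
        ∑ u ∈ Finset.range N, ∑ v ∈ Finset.range N, f (X (s + u) ω) * f (X (t + v) ω) := by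
    intro ω
    simp only [avg]
    rw [mul_mul_mul_comm]
    congr 1
    exact Finset.sum_mul_sum _ _ _ _
  simp_rw [hpt]
  rw [integral_const_mul]
  rw [integral_finset_sum _ (fun u _ => integrable_finset_sum _ (fun v _ => hint _ _))]
  rw [Finset.sum_congr rfl (fun u (hu : u ∈ Finset.range N) =>
    integral_finset_sum _ (fun v _ => hint _ _))]
  rw [Finset.sum_congr rfl (fun u (hu : u ∈ Finset.range N) =>
    Finset.sum_congr rfl (fun v (hv : v ∈ Finset.range N) =>
      hterm _ _ (hst u v (Finset.mem_range.mp hu) (Finset.mem_range.mp hv))))]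
  rw [Finset.sum_const, Finset.sum_const, Finset.card_range]
  have hNR : ((N : ℝ)) ≠ 0 := by positivity
  rw [nsmul_eq_mul, nsmul_eq_mul]
  field_simp

lemma avg_self (hX : ∀ n, Measurable (X n)) (hsp : Spread P X)
    {N : ℕ} (hN : 0 < N) (s : ℕ)
    {f : E → ℝ} (hf : Measurable f) (hb : ∀ x, |f x| ≤ 1) :
    ∫ ω, avg X f N s ω * avg X f N s ω ∂P
      = ∫ ω, f (X 0 ω) * f (X 1 ω) ∂P
        + ((∫ ω, f (X 0 ω) * f (X 0 ω) ∂P) - ∫ ω, f (X 0 ω) * f (X 1 ω) ∂P) / N := by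
  set α := ∫ ω, f (X 0 ω) * f (X 1 ω) ∂P with hα
  set β := ∫ ω, f (X 0 ω) * f (X 0 ω) ∂P with hβ
  have hint : ∀ p q : ℕ, Integrable (fun ω => f (X p ω) * f (X q ω)) P := fun p q =>
    integrable_bdd (((hf.comp (hX p)).mul (hf.comp (hX q)))) (C := 1) (fun ω => by
      rw [abs_mul]
      exact mul_le_one₀ (hb _) (abs_nonneg _) (hb _))
  have hterm : ∀ p q : ℕ, p ≠ q →
      ∫ ω, f (X p ω) * f (X q ω) ∂P = α := by
    intro p q hpq
    rcases lt_or_gt_of_ne hpq with h | h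
    · exact pair hX hsp h hf hf
    · calc ∫ ω, f (X p ω) * f (X q ω) ∂P = ∫ ω, f (X q ω) * f (X p ω) ∂P := by
            simp_rw [mul_comm]
        _ = _ := pair hX hsp h hf hf
  have hdiag : ∀ p : ℕ, ∫ ω, f (X p ω) * f (X p ω) ∂P = β := by
    intro p
    exact single hX hsp p (f := fun x => f x * f x) (hf.mul hf)
  have hval : ∀ p q : ℕ, ∫ ω, f (X p ω) * f (X q ω) ∂P
      = α + (if p = q then β - α else 0) := by
    intro p q
    by_cases h : p = q
    · subst h; rw [hdiag]; simp
    · rw [hterm p q h]; simp [h]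
  have hpt : ∀ ω, avg X f N s ω * avg X f N s ω
      = (N : ℝ)⁻¹ * (N : ℝ)⁻¹ *
        ∑ u ∈ Finset.range N, ∑ v ∈ Finset.range N, f (X (s + u) ω) * f (X (s + v) ω) := by
    intro ω
    simp only [avg]
    rw [mul_mul_mul_comm]
    congr 1
    exact Finset.sum_mul_sum _ _ _ _
  simp_rw [hpt]
  rw [integral_const_mul]
  rw [integral_finset_sum _ (fun u _ => integrable_finset_sum _ (fun v _ => hint _ _))]
  rw [Finset.sum_congr rfl (fun u (hu : u ∈ Finset.range N) =>
    integral_finset_sum _ (fun v _ => hint _ _))]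
  rw [Finset.sum_congr rfl (fun u (hu : u ∈ Finset.range N) =>
    Finset.sum_congr rfl (fun v (hv : v ∈ Finset.range N) => hval (s + u) (s + v)))]
  have hite : ∀ u ∈ Finset.range N,
      ∑ v ∈ Finset.range N, (α + (if s + u = s + v then β - α else 0))
        = (N : ℝ) * α + (β - α) := by
    intro u hu
    rw [Finset.sum_add_distrib, Finset.sum_const, Finset.card_range, nsmul_eq_mul]
    congr 1
    have : ∀ v, (s + u = s + v) ↔ (v = u) := fun v => by omega
    simp_rw [this]
    rw [Finset.sum_ite_eq' (Finset.range N) u (fun _ => β - α)]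
    simp [Finset.mem_range.mpr (Finset.mem_range.mp hu)]
  rw [Finset.sum_congr rfl hite, Finset.sum_const, Finset.card_range, nsmul_eq_mul]
  have hNR : ((N : ℝ)) ≠ 0 := by positivity
  field_simp

lemma norm_int_le_one {g : Ω → ℝ} (hb : ∀ ω, |g ω| ≤ 1) : |∫ ω, g ω ∂P| ≤ 1 := by
  have := norm_integral_le_of_norm_le_const (μ := P) (f := g) (C := 1)
    (Filter.Eventually.of_forall fun ω => by simpa [Real.norm_eq_abs] using hb ω)
  simpa [Real.norm_eq_abs] using this

lemma avg_sq_diff (hX : ∀ n, Measurable (X n)) (hsp : Spread P X)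
    {N : ℕ} (hN : 0 < N) (a b : ℕ)
    {f : E → ℝ} (hf : Measurable f) (hb : ∀ x, |f x| ≤ 1) :
    ∫ ω, (avg X f N (a * N) ω - avg X f N (b * N) ω) ^ 2 ∂P ≤ 4 / N := by
  have hNR : (0 : ℝ) < (N : ℝ) := by exact_mod_cast hN
  by_cases hab : a = b
  · subst hab
    simp only [sub_self]
    rw [show (fun (_ : Ω) => (0:ℝ) ^ 2) = fun _ => (0:ℝ) by funext; ring, integral_zero]
    positivity
  · set α := ∫ ω, f (X 0 ω) * f (X 1 ω) ∂P with hα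
    set β := ∫ ω, f (X 0 ω) * f (X 0 ω) ∂P with hβ
    have hdisj : ∀ s t : ℕ, s ≠ t → ∀ u v : ℕ, u < N → v < N → s * N + u ≠ t * N + v := by
      intro s t hst u v hu hv heq
      rcases lt_or_gt_of_ne hst with h | h
      · have h1 : (s + 1) * N ≤ t * N := Nat.mul_le_mul_right _ (by omega)
        have h2 : (s + 1) * N = s * N + N := by ring
        omega
      · have h1 : (t + 1) * N ≤ s * N := Nat.mul_le_mul_right _ (by omega)
        have h2 : (t + 1) * N = t * N + N := by ring
        omega
    have hAmeas : ∀ s : ℕ, Measurable (avg X f N s) := fun s => avg_meas hX hf N s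
    have hAbdd : ∀ s : ℕ, ∀ ω, |avg X f N s ω| ≤ 1 := fun s ω => avg_bdd hb N s ω
    have hintAB : ∀ s t : ℕ, Integrable (fun ω => avg X f N s ω * avg X f N t ω) P :=
      fun s t => integrable_bdd ((hAmeas s).mul (hAmeas t)) (C := 1) (fun ω => by
        rw [abs_mul]; exact mul_le_one₀ (hAbdd s ω) (abs_nonneg _) (hAbdd t ω))
    have hexp : ∫ ω, (avg X f N (a * N) ω - avg X f N (b * N) ω) ^ 2 ∂P
        = (∫ ω, avg X f N (a*N) ω * avg X f N (a*N) ω ∂P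
            + ∫ ω, avg X f N (b*N) ω * avg X f N (b*N) ω ∂P)
          - (∫ ω, avg X f N (a*N) ω * avg X f N (b*N) ω ∂P
            + ∫ ω, avg X f N (b*N) ω * avg X f N (a*N) ω ∂P) := by
      rw [show (fun ω => (avg X f N (a * N) ω - avg X f N (b * N) ω) ^ 2)
          = (fun ω => (avg X f N (a*N) ω * avg X f N (a*N) ω
              + avg X f N (b*N) ω * avg X f N (b*N) ω)
            - (avg X f N (a*N) ω * avg X f N (b*N) ω
              + avg X f N (b*N) ω * avg X f N (a*N) ω)) from funext fun ω => by ring]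
      have hI1 : Integrable (fun ω => avg X f N (a*N) ω * avg X f N (a*N) ω
          + avg X f N (b*N) ω * avg X f N (b*N) ω) P := (hintAB _ _).add (hintAB _ _)
      have hI2 : Integrable (fun ω => avg X f N (a*N) ω * avg X f N (b*N) ω
          + avg X f N (b*N) ω * avg X f N (a*N) ω) P := (hintAB _ _).add (hintAB _ _)
      rw [integral_sub hI1 hI2, integral_add (hintAB _ _) (hintAB _ _),
        integral_add (hintAB _ _) (hintAB _ _)]
    rw [hexp, avg_self hX hsp hN _ hf hb, avg_self hX hsp hN _ hf hb,
      avg_cross hX hsp hN (hdisj a b hab) hf hb, avg_cross hX hsp hN (hdisj b a (Ne.symm hab)) hf hb]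
    have hαβ : |α| ≤ 1 ∧ |β| ≤ 1 := by
      constructor
      · exact norm_int_le_one (fun ω => by
          rw [abs_mul]; exact mul_le_one₀ (hb _) (abs_nonneg _) (hb _))
      · exact norm_int_le_one (fun ω => by
          rw [abs_mul]; exact mul_le_one₀ (hb _) (abs_nonneg _) (hb _))
    obtain ⟨h1, h2⟩ := hαβ
    rw [abs_le] at h1 h2
    rw [← hα, ← hβ]
    have heq : α + (β - α) / ↑N + (α + (β - α) / ↑N) - (α + α) = 2 * (β - α) / ↑N := by ring
    rw [heq, div_le_div_iff₀ hNR hNR]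
    nlinarith

lemma prod_sub_prod_le {n : ℕ} (a b : Fin n → ℝ) (ha : ∀ i, |a i| ≤ 1) (hb : ∀ i, |b i| ≤ 1) :
    |∏ i, a i - ∏ i, b i| ≤ ∑ i, |a i - b i| := by
  induction n with
  | zero => simp
  | succ m ih =>
    rw [Fin.prod_univ_succ, Fin.prod_univ_succ, Fin.sum_univ_succ]
    have habs : |∏ i : Fin m, b i.succ| ≤ 1 := by
      rw [Finset.abs_prod]
      exact Finset.prod_le_one (fun i _ => abs_nonneg _) (fun i _ => hb _)
    calc |a 0 * ∏ i : Fin m, a i.succ - b 0 * ∏ i : Fin m, b i.succ|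
        = |a 0 * (∏ i : Fin m, a i.succ - ∏ i : Fin m, b i.succ)
            + (a 0 - b 0) * ∏ i : Fin m, b i.succ| := by ring_nf
      _ ≤ |a 0 * (∏ i : Fin m, a i.succ - ∏ i : Fin m, b i.succ)|
            + |(a 0 - b 0) * ∏ i : Fin m, b i.succ| := abs_add_le _ _
      _ ≤ |a 0 - b 0| + ∑ i : Fin m, |a i.succ - b i.succ| := by
          rw [abs_mul, abs_mul]
          have h1 : |a 0| * |∏ i : Fin m, a i.succ - ∏ i : Fin m, b i.succ|
              ≤ 1 * |∏ i : Fin m, a i.succ - ∏ i : Fin m, b i.succ| :=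
            mul_le_mul_of_nonneg_right (ha 0) (abs_nonneg _)
          have h2 : |a 0 - b 0| * |∏ i : Fin m, b i.succ| ≤ |a 0 - b 0| * 1 :=
            mul_le_mul_of_nonneg_left habs (abs_nonneg _)
          have h3 := ih (fun i => a i.succ) (fun i => b i.succ) (fun i => ha _) (fun i => hb _)
          simp only [one_mul, mul_one] at h1 h2
          linarith

lemma stepC (hX : ∀ n, Measurable (X n)) (hsp : Spread P X)
    {n N : ℕ} (hN : 0 < N) (f : Fin n → E → ℝ)
    (hf : ∀ i, Measurable (f i)) (hb : ∀ i x, |f i x| ≤ 1) :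
    ∫ ω, ∏ i : Fin n, avg X (f i) N ((i : ℕ) * N) ω ∂P
      = ∫ ω, ∏ i : Fin n, f i (X (i : ℕ) ω) ∂P := by
  classical
  have hNR : ((N : ℝ)) ≠ 0 := by positivity
  have hpt : ∀ ω, ∏ i : Fin n, avg X (f i) N ((i : ℕ) * N) ω
      = ((N : ℝ)⁻¹) ^ n * ∑ p ∈ Fintype.piFinset (fun _ : Fin n => Finset.range N),
          ∏ i : Fin n, f i (X ((i : ℕ) * N + p i) ω) := by
    intro ω
    simp only [avg]
    rw [Finset.prod_mul_distrib, Finset.prod_const, Finset.card_univ, Fintype.card_fin,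
      Finset.prod_univ_sum]
  have hintp : ∀ p : Fin n → ℕ,
      Integrable (fun ω => ∏ i : Fin n, f i (X ((i : ℕ) * N + p i) ω)) P := by
    intro p
    refine integrable_bdd (Finset.measurable_prod _ fun i _ => (hf i).comp (hX _)) (C := 1) ?_
    intro ω
    rw [Finset.abs_prod]
    exact Finset.prod_le_one (fun i _ => abs_nonneg _) (fun i _ => hb _ _)
  simp_rw [hpt]
  rw [integral_const_mul, integral_finset_sum _ (fun p _ => hintp p)]
  rw [Finset.sum_congr rfl (fun p (hp : p ∈ Fintype.piFinset fun _ : Fin n => Finset.range N) => by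
    refine stepB hX hsp hN (fun i => (i : ℕ) * N + p i) (fun i => ?_) f hf
    have hpi : p i < N := Finset.mem_range.mp (Fintype.mem_piFinset.mp hp i)
    exact ⟨Nat.le_add_right _ _, Nat.add_lt_add_left hpi _⟩)]
  rw [Finset.sum_const, Fintype.card_piFinset]
  simp only [Finset.card_range, Finset.prod_const, Finset.card_univ, Fintype.card_fin,
    nsmul_eq_mul]
  rw [← mul_assoc, Nat.cast_pow, inv_pow, inv_mul_cancel₀ (by positivity), one_mul]

lemma abs_le_quad {d c : ℝ} (hc : 0 < c) : |d| ≤ (d ^ 2 + c ^ 2) / (2 * c) := by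
  rw [le_div_iff₀ (by positivity)]
  nlinarith [sq_nonneg (|d| - c), sq_abs d, abs_nonneg d]

lemma FE (hX : ∀ n, Measurable (X n)) (hsp : Spread P X)
    {n : ℕ} (σ : Equiv.Perm (Fin n)) (f : Fin n → E → ℝ)
    (hf : ∀ i, Measurable (f i)) (hb : ∀ i x, |f i x| ≤ 1) :
    ∫ ω, ∏ i : Fin n, f i (X ((σ i : ℕ)) ω) ∂P
      = ∫ ω, ∏ i : Fin n, f i (X (i : ℕ) ω) ∂P := by
  classical
  have hL : ∀ ω, ∏ i : Fin n, f i (X ((σ i : ℕ)) ω)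
      = ∏ j : Fin n, f (σ.symm j) (X (j : ℕ) ω) := by
    intro ω
    rw [← Equiv.prod_comp σ (fun j => f (σ.symm j) (X (j : ℕ) ω))]
    simp
  simp_rw [hL]
  set g : Fin n → E → ℝ := fun j => f (σ.symm j) with hgdef
  have hg : ∀ j, Measurable (g j) := fun j => hf _
  have hgb : ∀ (j : Fin n) x, |g j x| ≤ 1 := fun j x => hb _ _
  have key : ∀ c : ℝ, 0 < c → ∀ N : ℕ, 0 < N →
      |(∫ ω, ∏ j : Fin n, g j (X (j : ℕ) ω) ∂P) - ∫ ω, ∏ i : Fin n, f i (X (i : ℕ) ω) ∂P|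
        ≤ (n : ℝ) * ((4 / N + c ^ 2) / (2 * c)) := by
    intro c hc N hN
    have hNR : (0 : ℝ) < (N : ℝ) := by exact_mod_cast hN
    rw [← stepC hX hsp hN g hg hgb, ← stepC hX hsp hN f hf hb]
    have hre : ∀ ω, ∏ j : Fin n, avg X (g j) N ((j : ℕ) * N) ω
        = ∏ i : Fin n, avg X (f i) N (((σ i) : ℕ) * N) ω := by
      intro ω
      rw [← Equiv.prod_comp σ (fun j => avg X (g j) N ((j : ℕ) * N) ω)]
      simp [hgdef]
    simp_rw [hre]
    have hPmeas : ∀ (k : Fin n → ℕ), Measurable (fun ω => ∏ i : Fin n, avg X (f i) N (k i) ω) :=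
      fun k => Finset.measurable_prod _ fun i _ => avg_meas hX (hf i) N (k i)
    have hPbd : ∀ (k : Fin n → ℕ) ω, |∏ i : Fin n, avg X (f i) N (k i) ω| ≤ 1 := by
      intro k ω
      rw [Finset.abs_prod]
      exact Finset.prod_le_one (fun i _ => abs_nonneg _) (fun i _ => avg_bdd (hb i) _ _ _)
    have hPint : ∀ (k : Fin n → ℕ), Integrable (fun ω => ∏ i : Fin n, avg X (f i) N (k i) ω) P :=
      fun k => integrable_bdd (hPmeas k) (hPbd k)
    rw [← integral_sub (hPint fun i => ((σ i : ℕ) * N)) (hPint fun i => ((i : ℕ) * N))]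
    have h1 : |∫ ω, (∏ i : Fin n, avg X (f i) N (((σ i) : ℕ) * N) ω
          - ∏ i : Fin n, avg X (f i) N ((i : ℕ) * N) ω) ∂P|
        ≤ ∫ ω, |∏ i : Fin n, avg X (f i) N (((σ i) : ℕ) * N) ω
          - ∏ i : Fin n, avg X (f i) N ((i : ℕ) * N) ω| ∂P := by
      simpa [Real.norm_eq_abs] using
        norm_integral_le_integral_norm (μ := P)
          (f := fun ω => ∏ i : Fin n, avg X (f i) N (((σ i) : ℕ) * N) ω
            - ∏ i : Fin n, avg X (f i) N ((i : ℕ) * N) ω)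
    refine h1.trans ?_
    have hdmeas : ∀ i : Fin n, Measurable (fun ω =>
        avg X (f i) N (((σ i) : ℕ) * N) ω - avg X (f i) N ((i : ℕ) * N) ω) :=
      fun i => (avg_meas hX (hf i) N _).sub (avg_meas hX (hf i) N _)
    have hdbd : ∀ (i : Fin n) ω,
        |avg X (f i) N (((σ i) : ℕ) * N) ω - avg X (f i) N ((i : ℕ) * N) ω| ≤ 2 := by
      intro i ω
      have h1 := avg_bdd (X := X) (hb i) N ((σ i : ℕ) * N) ω
      have h2 := avg_bdd (X := X) (hb i) N ((i : ℕ) * N) ω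
      calc |avg X (f i) N (((σ i) : ℕ) * N) ω - avg X (f i) N ((i : ℕ) * N) ω|
          ≤ |avg X (f i) N (((σ i) : ℕ) * N) ω| + |avg X (f i) N ((i : ℕ) * N) ω| :=
            abs_sub _ _
        _ ≤ 2 := by linarith
    have hd2int : ∀ i : Fin n, Integrable (fun ω =>
        (avg X (f i) N (((σ i) : ℕ) * N) ω - avg X (f i) N ((i : ℕ) * N) ω) ^ 2) P := by
      intro i
      refine integrable_bdd ((hdmeas i).pow_const 2) (C := 4) (fun ω => ?_)
      rw [abs_pow]
      calc |avg X (f i) N (((σ i) : ℕ) * N) ω - avg X (f i) N ((i : ℕ) * N) ω| ^ 2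
          ≤ 2 ^ 2 := pow_le_pow_left₀ (abs_nonneg _) (hdbd i ω) 2
        _ = 4 := by norm_num
    have hmono : ∫ ω, |∏ i : Fin n, avg X (f i) N (((σ i) : ℕ) * N) ω
          - ∏ i : Fin n, avg X (f i) N ((i : ℕ) * N) ω| ∂P
        ≤ ∫ ω, ∑ i : Fin n,
            ((avg X (f i) N (((σ i) : ℕ) * N) ω - avg X (f i) N ((i : ℕ) * N) ω) ^ 2 + c ^ 2)
              / (2 * c) ∂P := by
      refine integral_mono (((hPint _).sub (hPint _)).abs)
        (integrable_finset_sum _ fun i _ =>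
          (((hd2int i).add (integrable_const _)).div_const _)) (fun ω => ?_)
      refine (prod_sub_prod_le _ _ (fun i => avg_bdd (hb i) _ _ _)
        (fun i => avg_bdd (hb i) _ _ _)).trans ?_
      exact Finset.sum_le_sum fun i _ => abs_le_quad hc
    refine hmono.trans ?_
    have hsummand : ∀ i : Fin n, Integrable (fun ω =>
        ((avg X (f i) N (((σ i) : ℕ) * N) ω - avg X (f i) N ((i : ℕ) * N) ω) ^ 2 + c ^ 2)
          / (2 * c)) P := fun i => ((hd2int i).add (integrable_const _)).div_const _
    rw [integral_finset_sum _ (fun i _ => hsummand i)]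
    have hper : ∀ i : Fin n,
        ∫ ω, ((avg X (f i) N (((σ i) : ℕ) * N) ω - avg X (f i) N ((i : ℕ) * N) ω) ^ 2 + c ^ 2)
            / (2 * c) ∂P ≤ (4 / N + c ^ 2) / (2 * c) := by
      intro i
      rw [integral_div, integral_add (hd2int i) (integrable_const _), integral_const]
      have h4 := avg_sq_diff hX hsp hN (σ i : ℕ) (i : ℕ) (hf i) (hb i)
      have hcc : P.real Set.univ • (c ^ 2) = c ^ 2 := by simp
      rw [hcc]
      gcongr
    calc ∑ i : Fin n,
        ∫ ω, ((avg X (f i) N (((σ i) : ℕ) * N) ω - avg X (f i) N ((i : ℕ) * N) ω) ^ 2 + c ^ 2)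
            / (2 * c) ∂P
        ≤ ∑ _i : Fin n, (4 / N + c ^ 2) / (2 * c) := Finset.sum_le_sum fun i _ => hper i
      _ = (n : ℝ) * ((4 / N + c ^ 2) / (2 * c)) := by
          rw [Finset.sum_const, Finset.card_univ, Fintype.card_fin, nsmul_eq_mul]
  have h2 : ∀ c : ℝ, 0 < c →
      |(∫ ω, ∏ j : Fin n, g j (X (j : ℕ) ω) ∂P) - ∫ ω, ∏ i : Fin n, f i (X (i : ℕ) ω) ∂P|
        ≤ (n : ℝ) * ((0 + c ^ 2) / (2 * c)) := by
    intro c hc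
    refine ge_of_tendsto ((((tendsto_const_div_atTop_nhds_zero_nat 4).add
        (tendsto_const_nhds (x := c ^ 2))).div_const (2 * c)).const_mul (n : ℝ))
      (Filter.eventually_atTop.mpr ⟨1, fun N hN => key c hc N (by omega)⟩)
  have h3 : |(∫ ω, ∏ j : Fin n, g j (X (j : ℕ) ω) ∂P)
      - ∫ ω, ∏ i : Fin n, f i (X (i : ℕ) ω) ∂P| ≤ 0 := by
    refine le_of_forall_pos_le_add (fun ε hε => ?_)
    have hc : (0 : ℝ) < ε / ((n : ℝ) + 1) := by positivity
    refine (h2 _ hc).trans ?_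
    rw [zero_add]
    have h6 : (ε / ((n : ℝ) + 1)) ^ 2 / (2 * (ε / ((n : ℝ) + 1))) = ε / ((n : ℝ) + 1) / 2 := by
      rw [sq]
      field_simp
    rw [h6, zero_add]
    have hq : (n : ℝ) * (ε / ((n : ℝ) + 1) / 2) = (n : ℝ) * ε / (((n : ℝ) + 1) * 2) := by
      rw [div_div, mul_div_assoc]
    rw [hq, div_le_iff₀ (by positivity)]
    nlinarith [Nat.cast_nonneg (α := ℝ) n, hε.le, mul_nonneg (Nat.cast_nonneg (α := ℝ) n) hε.le]
  have h4 := abs_nonpos_iff.mp h3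
  exact sub_eq_zero.mp h4

end SpreadAux

open MeasureTheory ProbabilityTheory Filter
open scoped ENNReal NNReal Topology

/-- A spreadable sequence of random variables with values in a Polish space is
exchangeable: invariance of the law under selection of arbitrary strictly increasing
subsequences implies invariance under every finite permutation of the indices. -/
theorem spreadable_is_exchangeable
    {Ω E : Type*} {mΩ : MeasurableSpace Ω} [MeasurableSpace E]
    [TopologicalSpace E] [PolishSpace E] [BorelSpace E]
    (P : Measure Ω) [IsProbabilityMeasure P]
    (X : ℕ → Ω → E) (hX : ∀ n, Measurable (X n))
    (hspread : ∀ k : ℕ → ℕ, StrictMono k →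
      Measure.map (fun ω => fun n => X (k n) ω) P =
        Measure.map (fun ω => fun n => X n ω) P)
    (π : Equiv.Perm ℕ) (hπ : ∃ N, ∀ n, N ≤ n → π n = n) :
    Measure.map (fun ω => fun n => X (π n) ω) P =
      Measure.map (fun ω => fun n => X n ω) P := by
  classical
  obtain ⟨N₀, hN₀⟩ := hπ
  have hsp : SpreadAux.Spread P X := hspread
  have hmap : ∀ g : ℕ → ℕ, Measurable (fun ω => fun n => X (g n) ω) :=
    fun g => measurable_pi_lambda _ fun n => hX (g n)
  have hmapid : Measurable (fun ω => fun n => X n ω) :=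
    measurable_pi_lambda _ fun n => hX n
  have hprob1 : IsProbabilityMeasure (Measure.map (fun ω => fun n => X (π n) ω) P) :=
    Measure.isProbabilityMeasure_map (hmap fun n => π n).aemeasurable
  have hprob2 : IsProbabilityMeasure (Measure.map (fun ω => fun n => X n ω) P) :=
    Measure.isProbabilityMeasure_map hmapid.aemeasurable
  refine ext_of_generate_finite
    (squareCylinders fun _ : ℕ => {u : Set E | MeasurableSet u})
    generateFrom_squareCylinders.symm
    (isPiSystem_squareCylinders (fun i => fun a ha b hb _ => ha.inter hb)
      (fun i => MeasurableSet.univ)) ?_ (by rw [hprob1.measure_univ, hprob2.measure_univ])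
  rintro S ⟨s, t, ht, rfl⟩
  simp only [Set.mem_univ_pi, Set.mem_setOf_eq] at ht
  have hSmeas : MeasurableSet ((s : Set ℕ).pi t) :=
    MeasurableSet.pi s.countable_toSet fun i _ => ht i
  set M : ℕ := N₀ + (s.sup id + 1) with hM
  have hsM : ∀ i ∈ s, i < M := fun i hi => by
    have := Finset.le_sup (f := id) hi
    simp only [id] at this
    omega
  have hπM : ∀ i : ℕ, i < M → π i < M := by
    intro i hi
    by_contra h
    push_neg at h
    have h2 : π (π i) = π i := hN₀ _ (le_trans (by omega) h)
    have h3 : π i = i := π.injective h2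
    omega
  have hπ'M : ∀ i : ℕ, i < M → π.symm i < M := by
    intro i hi
    by_contra h
    push_neg at h
    have h2 : π (π.symm i) = π.symm i := hN₀ _ (by omega)
    rw [Equiv.apply_symm_apply] at h2
    omega
  set σ : Equiv.Perm (Fin M) :=
    { toFun := fun i => ⟨π i, hπM i i.isLt⟩
      invFun := fun i => ⟨π.symm i, hπ'M i i.isLt⟩
      left_inv := fun i => by
        ext
        simp
      right_inv := fun i => by
        ext
        simp } with hσ
  have hσval : ∀ i : Fin M, ((σ i : Fin M) : ℕ) = π (i : ℕ) := fun i => rfl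
  set B : ℕ → Set E := fun i => if i ∈ s then t i else Set.univ with hB
  have hBmeas : ∀ i, MeasurableSet (B i) := fun i => by
    by_cases h : i ∈ s <;> simp [hB, h, ht i]
  set f : ℕ → E → ℝ := fun i => (B i).indicator (fun _ => (1 : ℝ)) with hf_def
  have hfm : ∀ i : ℕ, Measurable (f i) := fun i => measurable_const.indicator (hBmeas i)
  have hfb : ∀ (i : ℕ) (x : E), |f i x| ≤ 1 := fun i x => by
    by_cases h : x ∈ B i <;> simp [hf_def, h]
  have hTmeas : ∀ g : ℕ → ℕ, MeasurableSet (⋂ i ∈ Finset.range M, X (g i) ⁻¹' B i) := fun g =>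
    MeasurableSet.biInter (Finset.range M).countable_toSet fun i _ => (hX (g i)) (hBmeas i)
  have hpre : ∀ g : ℕ → ℕ, (fun ω => fun n => X (g n) ω) ⁻¹' ((s : Set ℕ).pi t)
      = ⋂ i ∈ Finset.range M, X (g i) ⁻¹' B i := by
    intro g
    ext ω
    simp only [Set.mem_preimage, Set.mem_pi, Finset.mem_coe, Set.mem_iInter, Finset.mem_range]
    constructor
    · intro h i hiM
      by_cases his : i ∈ s
      · simpa [hB, his] using h i his
      · simp [hB, his]
    · intro h i his
      have h2 := h i (hsM i his)
      simpa [hB, his] using h2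
  have hind : ∀ g : ℕ → ℕ, ∀ ω, (∏ i ∈ Finset.range M, f i (X (g i) ω))
      = (⋂ i ∈ Finset.range M, X (g i) ⁻¹' B i).indicator (fun _ => (1 : ℝ)) ω := by
    intro g ω
    by_cases hω : ω ∈ ⋂ i ∈ Finset.range M, X (g i) ⁻¹' B i
    · rw [Set.indicator_of_mem hω]
      refine Finset.prod_eq_one fun i hi => ?_
      simp only [Set.mem_iInter, Set.mem_preimage] at hω
      have hmem : X (g i) ω ∈ B i := hω i hi
      simp [hf_def, hmem]
    · rw [Set.indicator_of_notMem hω]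
      simp only [Set.mem_iInter, Set.mem_preimage, not_forall] at hω
      obtain ⟨i, hi, hnot⟩ := hω
      exact Finset.prod_eq_zero hi (by simp [hf_def, hnot])
  have hint : ∀ g : ℕ → ℕ, ∫ ω, ∏ i ∈ Finset.range M, f i (X (g i) ω) ∂P
      = (P (⋂ i ∈ Finset.range M, X (g i) ⁻¹' B i)).toReal := by
    intro g
    rw [show (fun ω => ∏ i ∈ Finset.range M, f i (X (g i) ω))
        = (⋂ i ∈ Finset.range M, X (g i) ⁻¹' B i).indicator (fun _ => (1 : ℝ)) from
      funext (hind g)]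
    rw [integral_indicator_const (1 : ℝ) (hTmeas g)]
    simp
    rfl
  have hFE := SpreadAux.FE hX hsp σ (fun i : Fin M => f (i : ℕ))
    (fun i => hfm _) (fun i x => hfb _ _)
  have hFE' : (P (⋂ i ∈ Finset.range M, X (π i) ⁻¹' B i)).toReal
      = (P (⋂ i ∈ Finset.range M, X i ⁻¹' B i)).toReal := by
    have hintid := hint id
    simp only [id_eq] at hintid
    rw [← hint (fun i => π i), ← hintid]
    have e1 : ∀ ω, ∏ i : Fin M, f (i : ℕ) (X ((σ i : Fin M) : ℕ) ω)
        = ∏ i ∈ Finset.range M, f i (X (π i) ω) := by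
      intro ω
      rw [← Fin.prod_univ_eq_prod_range (fun j => f j (X (π j) ω)) M]
      rfl
    have e2 : ∀ ω, ∏ i : Fin M, f (i : ℕ) (X ((i : Fin M) : ℕ) ω)
        = ∏ i ∈ Finset.range M, f i (X i ω) := by
      intro ω
      rw [← Fin.prod_univ_eq_prod_range (fun j => f j (X j ω)) M]
    calc ∫ ω, ∏ i ∈ Finset.range M, f i (X (π i) ω) ∂P
        = ∫ ω, ∏ i : Fin M, f (i : ℕ) (X ((σ i : Fin M) : ℕ) ω) ∂P := by simp_rw [e1]
      _ = ∫ ω, ∏ i : Fin M, f (i : ℕ) (X ((i : Fin M) : ℕ) ω) ∂P := hFE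
      _ = ∫ ω, ∏ i ∈ Finset.range M, f i (X i ω) ∂P := by simp_rw [e2]
  have hmeasureeq : P (⋂ i ∈ Finset.range M, X (π i) ⁻¹' B i)
      = P (⋂ i ∈ Finset.range M, X i ⁻¹' B i) :=
    (ENNReal.toReal_eq_toReal_iff' (measure_ne_top P _) (measure_ne_top P _)).mp hFE'
  rw [Measure.map_apply (hmap fun n => π n) hSmeas, Measure.map_apply hmapid hSmeas]
  have hpreid := hpre id
  simp only [id_eq] at hpreid
  rw [hpre (fun n => π n), hpreid]
  exact hmeasureeq
end

section
/- For a sequence (X_n) adapted to a filtration G = (G_n)_{n≥0}, the following are equivalent: (i) (X_n) is G-c.i.d., i.e., E[f(X_{n+k}) | G_n] = E[f(X_{n+1}) | G_n] a.s. for all k ≥ 1, n ≥ 0 and bounded measurable f; (ii) for every bounded measurable f, the process (E[f(X_{n+1}) | G_n])_{n≥0} is a G-martingale; (iii) for every finite G-stopping time τ, X_{τ+1} has the same distribution as X_1. -/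
open MeasureTheory ProbabilityTheory Filter
open scoped ENNReal NNReal Topology

/-! Fix a bounded measurable test function `f`, and put `Y n = f ∘ X n` and
`M n = E[Y n | ℱ n]`. By the tower property, (i) for `f` says exactly that `M` is a martingale,
which in turn amounts to `∫_A Y n = ∫_A Y N` for all `n ≤ N` and `A ∈ ℱ n`. Summing the latter
over the events `{τ = n}` gives `E[Y τ] = E[Y N] = E[Y 0]` for a stopping time `τ ≤ N`, and
dominated convergence along `min τ N` removes the bound. Conversely, comparing the constant time
`n` with the stopping time that equals `n` on `A ∈ ℱ n` and `n + 1` off `A` yields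
`∫_A Y n = ∫_A Y (n + 1)`, which makes `M` a martingale. Since indicators are bounded test
functions, two laws agree as soon as they give the same expectation to every such `f`. -/

namespace MeasureTheory

variable {Ω : Type*} {mΩ : MeasurableSpace Ω} {μ : Measure Ω} {ℱ : Filtration ℕ mΩ}

theorem martingale_condExp_iff {F : Type*} [NormedAddCommGroup F] [NormedSpace ℝ F]
    [CompleteSpace F] [SigmaFiniteFiltration μ ℱ] {Y : ℕ → Ω → F} :
    Martingale (fun n => μ[Y n | ℱ n]) ℱ μ ↔
      ∀ n k, μ[Y (n + k) | ℱ n] =ᵐ[μ] μ[Y n | ℱ n] := by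
  have tower : ∀ {i j}, i ≤ j → μ[μ[Y j | ℱ j] | ℱ i] =ᵐ[μ] μ[Y j | ℱ i] :=
    fun hij => condExp_condExp_of_le (ℱ.mono hij) (ℱ.le _)
  refine ⟨fun h n k => (tower (n.le_add_right k)).symm.trans (h.condExp_ae_eq (n.le_add_right k)),
    fun h => ⟨fun _ => stronglyMeasurable_condExp, fun i j hij => ?_⟩⟩
  obtain ⟨k, rfl⟩ := Nat.exists_eq_add_of_le hij
  exact (tower hij).trans (h i k)

theorem _root_.measurable_apply_randomIndex {β : Type*} [MeasurableSpace β] {Y : ℕ → Ω → β}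
    (hY : ∀ n, Measurable (Y n)) {τ : Ω → ℕ} (hτ : Measurable τ) :
    Measurable fun ω => Y (τ ω) ω :=
  (measurable_from_prod_countable_left (f := fun p : Ω × ℕ => Y p.2 p.1) hY).comp
    (measurable_id.prodMk hτ)

theorem IsStoppingTime.measurableSet_eq_nat {τ : Ω → ℕ}
    (hτ : IsStoppingTime ℱ (fun ω => (τ ω : WithTop ℕ))) (n : ℕ) :
    MeasurableSet[ℱ n] {ω | τ ω = n} := by
  simpa only [ENat.some_eq_natCast, Nat.cast_inj] using hτ.measurableSet_eq n

theorem IsStoppingTime.measurable_nat {τ : Ω → ℕ}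
    (hτ : IsStoppingTime ℱ (fun ω => (τ ω : WithTop ℕ))) : Measurable τ :=
  measurable_to_countable' fun n => ℱ.le n _ (hτ.measurableSet_eq_nat n)

section RealValued

variable {Y : ℕ → Ω → ℝ}

theorem integral_randomIndex_eq_sum (hY : ∀ n, Integrable (Y n) μ)
    {τ : Ω → ℕ} (hτ : ∀ n, MeasurableSet {ω | τ ω = n}) {N : ℕ} (hτN : ∀ ω, τ ω ≤ N) :
    ∫ ω, Y (τ ω) ω ∂μ = ∑ n ∈ Finset.range (N + 1), ∫ ω in {ω | τ ω = n}, Y n ω ∂μ := by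
  have hsum : ∀ ω, Y (τ ω) ω = ∑ n ∈ Finset.range (N + 1), {ω | τ ω = n}.indicator (Y n) ω := by
    intro ω
    rw [Finset.sum_eq_single_of_mem (τ ω) (Finset.mem_range.mpr (Nat.lt_succ_of_le (hτN ω))),
      Set.indicator_of_mem (show ω ∈ {ω' | τ ω' = τ ω} from rfl)]
    exact fun n _ hn =>
      Set.indicator_of_notMem (show ω ∉ {ω' | τ ω' = n} from fun h => hn h.symm) _
  simp_rw [hsum]
  rw [integral_finsetSum _ fun n _ => (hY n).indicator (hτ n)]
  exact Finset.sum_congr rfl fun n _ => integral_indicator (hτ n)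

theorem integral_randomIndex_eq_of_setIntegral_eq (hY : ∀ n, Integrable (Y n) μ) {τ : Ω → ℕ}
    (hτ : IsStoppingTime ℱ (fun ω => (τ ω : WithTop ℕ))) {N : ℕ} (hτN : ∀ ω, τ ω ≤ N)
    (h : ∀ n ≤ N, ∀ s, MeasurableSet[ℱ n] s → ∫ ω in s, Y n ω ∂μ = ∫ ω in s, Y N ω ∂μ) :
    ∫ ω, Y (τ ω) ω ∂μ = ∫ ω, Y N ω ∂μ := by
  have hmeas n : MeasurableSet {ω | τ ω = n} := ℱ.le n _ (hτ.measurableSet_eq_nat n)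
  rw [integral_randomIndex_eq_sum hY hmeas hτN,
    integral_randomIndex_eq_sum (Y := fun _ => Y N) (fun _ => hY N) hmeas hτN]
  exact Finset.sum_congr rfl fun n hn =>
    h n (Nat.lt_succ_iff.mp (Finset.mem_range.mp hn)) _ (hτ.measurableSet_eq_nat n)

theorem setIntegral_succ_eq_of_integral_randomIndex_eq (hY : ∀ n, Integrable (Y n) μ)
    (h : ∀ τ : Ω → ℕ, IsStoppingTime ℱ (fun ω => (τ ω : WithTop ℕ)) →
      ∫ ω, Y (τ ω) ω ∂μ = ∫ ω, Y 0 ω ∂μ)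
    (n : ℕ) {s : Set Ω} (hs : MeasurableSet[ℱ n] s) :
    ∫ ω in s, Y n ω ∂μ = ∫ ω in s, Y (n + 1) ω ∂μ := by
  classical
  have hsm : MeasurableSet s := ℱ.le n s hs
  set σ : Ω → ℕ := s.piecewise (fun _ => n) (fun _ => n + 1)
  have hσ : IsStoppingTime ℱ (fun ω => (σ ω : WithTop ℕ)) := by
    convert isStoppingTime_piecewise_const (𝒢 := ℱ) n.le_succ hs using 1
    ext ω
    by_cases hω : ω ∈ s <;> simp [σ, hω]
  have hYσ : (fun ω => Y (σ ω) ω) = s.piecewise (Y n) (Y (n + 1)) := by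
    ext ω
    by_cases hω : ω ∈ s <;> simp [σ, hω]
  have hconst m : ∫ ω, Y m ω ∂μ = ∫ ω, Y 0 ω ∂μ := h (fun _ => m) (isStoppingTime_const ℱ m)
  have hcompl : ∫ ω in sᶜ, Y (n + 1) ω ∂μ = ∫ ω in sᶜ, Y n ω ∂μ := by
    have hσ_eq := (h σ hσ).trans (hconst n).symm
    rw [hYσ, integral_piecewise hsm (hY n).integrableOn (hY (n + 1)).integrableOn,
      ← integral_add_compl hsm (hY n)] at hσ_eq
    exact add_left_cancel hσ_eq
  have htotal := (hconst (n + 1)).trans (hconst n).symm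
  rw [← integral_add_compl hsm (hY n), ← integral_add_compl hsm (hY (n + 1)), hcompl] at htotal
  exact (add_right_cancel htotal).symm

theorem Martingale.setIntegral_eq_of_condExp [SigmaFiniteFiltration μ ℱ]
    (hY : ∀ n, Integrable (Y n) μ) (h : Martingale (fun n => μ[Y n | ℱ n]) ℱ μ) {n N : ℕ}
    (hnN : n ≤ N) {s : Set Ω} (hs : MeasurableSet[ℱ n] s) :
    ∫ ω in s, Y n ω ∂μ = ∫ ω in s, Y N ω ∂μ := by
  rw [← setIntegral_condExp (ℱ.le n) (hY n) hs, h.setIntegral_eq hnN hs,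
    setIntegral_condExp (ℱ.le N) (hY N) (ℱ.mono hnN s hs)]

variable [IsFiniteMeasure μ]

theorem martingale_condExp_of_setIntegral_eq_succ (hY : ∀ n, Integrable (Y n) μ)
    (h : ∀ n s, MeasurableSet[ℱ n] s → ∫ ω in s, Y n ω ∂μ = ∫ ω in s, Y (n + 1) ω ∂μ) :
    Martingale (fun n => μ[Y n | ℱ n]) ℱ μ := by
  refine martingale_of_setIntegral_eq_succ (fun _ => stronglyMeasurable_condExp)
    (fun _ => integrable_condExp) fun n s hs => ?_
  rw [setIntegral_condExp (ℱ.le n) (hY n) hs,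
    setIntegral_condExp (ℱ.le (n + 1)) (hY (n + 1)) (ℱ.mono n.le_succ s hs)]
  exact h n s hs

theorem tendsto_integral_randomIndex_min (hY : ∀ n, Measurable (Y n)) {C : ℝ}
    (hC : ∀ n ω, |Y n ω| ≤ C) {τ : Ω → ℕ} (hτ : Measurable τ) :
    Tendsto (fun N => ∫ ω, Y (min (τ ω) N) ω ∂μ) atTop (𝓝 (∫ ω, Y (τ ω) ω ∂μ)) := by
  refine tendsto_integral_of_dominated_convergence (fun _ => C)
    (fun N => (measurable_apply_randomIndex hY (hτ.min measurable_const)).aestronglyMeasurable)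
    (integrable_const C) (fun N => ae_of_all _ fun ω => hC _ ω) (ae_of_all _ fun ω => ?_)
  exact tendsto_const_nhds.congr' <| (eventually_ge_atTop (τ ω)).mono fun N hN => by
    simp only [min_eq_left hN]

theorem Martingale.integral_randomIndex_eq (hY : ∀ n, Measurable (Y n)) {C : ℝ}
    (hC : ∀ n ω, |Y n ω| ≤ C) (h : Martingale (fun n => μ[Y n | ℱ n]) ℱ μ) {τ : Ω → ℕ}
    (hτ : IsStoppingTime ℱ (fun ω => (τ ω : WithTop ℕ))) :
    ∫ ω, Y (τ ω) ω ∂μ = ∫ ω, Y 0 ω ∂μ := by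
  have hint n : Integrable (Y n) μ :=
    .of_bound (hY n).aestronglyMeasurable C (ae_of_all _ (hC n))
  have hmin N : IsStoppingTime ℱ (fun ω => (min (τ ω) N : ℕ)) := by
    convert hτ.min_const N using 2
    · rfl
    · exact WithTop.coe_min _ _
  have hbdd N : ∫ ω, Y (min (τ ω) N) ω ∂μ = ∫ ω, Y 0 ω ∂μ := by
    rw [integral_randomIndex_eq_of_setIntegral_eq hint (hmin N) (fun ω => min_le_right _ N)
      fun n hn s hs => h.setIntegral_eq_of_condExp hint hn hs]
    simpa using (h.setIntegral_eq_of_condExp hint N.zero_le MeasurableSet.univ).symm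
  refine tendsto_nhds_unique (tendsto_integral_randomIndex_min hY hC hτ.measurable_nat) ?_
  simpa only [hbdd] using tendsto_const_nhds

theorem martingale_condExp_iff_integral_randomIndex_eq (hY : ∀ n, Measurable (Y n)) {C : ℝ}
    (hC : ∀ n ω, |Y n ω| ≤ C) :
    Martingale (fun n => μ[Y n | ℱ n]) ℱ μ ↔
      ∀ τ : Ω → ℕ, IsStoppingTime ℱ (fun ω => (τ ω : WithTop ℕ)) →
        ∫ ω, Y (τ ω) ω ∂μ = ∫ ω, Y 0 ω ∂μ := by
  have hint n : Integrable (Y n) μ :=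
    .of_bound (hY n).aestronglyMeasurable C (ae_of_all _ (hC n))
  exact ⟨fun h _ hτ => h.integral_randomIndex_eq hY hC hτ, fun h =>
    martingale_condExp_of_setIntegral_eq_succ hint fun n _ hs =>
      setIntegral_succ_eq_of_integral_randomIndex_eq hint h n hs⟩

end RealValued

theorem map_eq_map_iff_integral_comp_eq [IsFiniteMeasure μ] {E : Type*} [MeasurableSpace E]
    {g h : Ω → E} (hg : Measurable g) (hh : Measurable h) :
    μ.map g = μ.map h ↔ ∀ f : E → ℝ, Measurable f → (∃ C, ∀ x, |f x| ≤ C) →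
      ∫ ω, f (g ω) ∂μ = ∫ ω, f (h ω) ∂μ := by
  refine ⟨fun hgh f hf _ => ?_, fun H => Measure.ext fun s hs => ?_⟩
  · rw [← integral_map hg.aemeasurable hf.aestronglyMeasurable, hgh,
      integral_map hh.aemeasurable hf.aestronglyMeasurable]
  · have hind := H (s.indicator 1) (measurable_one.indicator hs)
      ⟨1, fun x => by by_cases hx : x ∈ s <;> simp [hx]⟩
    simp only [← Set.indicator_comp_right, Pi.one_comp] at hind
    rw [integral_indicator_one (hg hs), integral_indicator_one (hh hs),
      measureReal_eq_measureReal_iff] at hind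
    rwa [Measure.map_apply hg hs, Measure.map_apply hh hs]

end MeasureTheory

theorem cid_iff_martingale_iff_stoppingTime_general
    {Ω E : Type*} {mΩ : MeasurableSpace Ω} [MeasurableSpace E]
    (P : Measure Ω) [IsProbabilityMeasure P]
    (ℱ : Filtration ℕ mΩ)
    (X : ℕ → Ω → E) (hadapt : ∀ n, Measurable[ℱ (n + 1)] (X n)) :
    ((∀ (n k : ℕ) (f : E → ℝ), Measurable f → (∃ C, ∀ x, |f x| ≤ C) →
        P[(fun ω => f (X (n + k) ω)) | ℱ n] =ᵐ[P] P[(fun ω => f (X n ω)) | ℱ n]) ↔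
      (∀ f : E → ℝ, Measurable f → (∃ C, ∀ x, |f x| ≤ C) →
        Martingale (fun n => P[(fun ω => f (X n ω)) | ℱ n]) ℱ P)) ∧
    ((∀ (n k : ℕ) (f : E → ℝ), Measurable f → (∃ C, ∀ x, |f x| ≤ C) →
        P[(fun ω => f (X (n + k) ω)) | ℱ n] =ᵐ[P] P[(fun ω => f (X n ω)) | ℱ n]) ↔
      (∀ τ : Ω → ℕ, IsStoppingTime ℱ (fun ω => (τ ω : WithTop ℕ)) →
        Measure.map (fun ω => X (τ ω) ω) P = Measure.map (X 0) P)) := by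
  have hX n : Measurable (X n) := (hadapt n).mono (ℱ.le (n + 1)) le_rfl
  have cid_iff_martingale :
      (∀ (n k : ℕ) (f : E → ℝ), Measurable f → (∃ C, ∀ x, |f x| ≤ C) →
        P[(fun ω => f (X (n + k) ω)) | ℱ n] =ᵐ[P] P[(fun ω => f (X n ω)) | ℱ n]) ↔
      (∀ f : E → ℝ, Measurable f → (∃ C, ∀ x, |f x| ≤ C) →
        Martingale (fun n => P[(fun ω => f (X n ω)) | ℱ n]) ℱ P) :=
    ⟨fun h f hf hC => martingale_condExp_iff.mpr fun n k => h n k f hf hC,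
      fun h n k f hf hC => martingale_condExp_iff.mp (h f hf hC) n k⟩
  refine ⟨cid_iff_martingale, cid_iff_martingale.trans ?_⟩
  have law_iff (τ : Ω → ℕ) (hτ : IsStoppingTime ℱ (fun ω => (τ ω : WithTop ℕ))) :=
    map_eq_map_iff_integral_comp_eq (μ := P)
      (measurable_apply_randomIndex hX hτ.measurable_nat) (hX 0)
  have martingale_iff (f : E → ℝ) (hf : Measurable f) (C : ℝ) (hC : ∀ x, |f x| ≤ C) :=
    martingale_condExp_iff_integral_randomIndex_eq (μ := P) (ℱ := ℱ)
      (fun n => hf.comp (hX n)) fun n ω => hC (X n ω)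
  exact ⟨fun h τ hτ => (law_iff τ hτ).mpr fun f hf ⟨C, hC⟩ =>
      (martingale_iff f hf C hC).mp (h f hf ⟨C, hC⟩) τ hτ,
    fun h f hf ⟨C, hC⟩ => (martingale_iff f hf C hC).mpr fun τ hτ =>
      (law_iff τ hτ).mp (h τ hτ) f hf ⟨C, hC⟩⟩

/-- Equivalent characterizations of conditionally identically distributed (c.i.d.)
sequences with respect to a filtration `ℱ`.  Here `X n` stands for the observation
`X_{n+1}` of the paper, so that `X n` is `ℱ (n+1)`-measurable and the predictive
distribution of `X n` is taken given `ℱ n`.  The three conditions are: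
(i) `E[f(X_{n+k}) | ℱ_n] = E[f(X_{n+1}) | ℱ_n]` for all `k ≥ 1`, `n ≥ 0`;
(ii) `(E[f(X_{n+1}) | ℱ_n])_n` is a `ℱ`-martingale for every bounded measurable `f`;
(iii) `X_{τ+1}` has the same law as `X_1` for every (finite) stopping time `τ`. -/
theorem cid_iff_martingale_iff_stoppingTime
    {Ω E : Type*} {mΩ : MeasurableSpace Ω} [MeasurableSpace E]
    [TopologicalSpace E] [PolishSpace E] [BorelSpace E]
    (P : Measure Ω) [IsProbabilityMeasure P]
    (ℱ : Filtration ℕ mΩ)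
    (X : ℕ → Ω → E) (hadapt : ∀ n, Measurable[ℱ (n + 1)] (X n)) :
    ((∀ (n k : ℕ) (f : E → ℝ), Measurable f → (∃ C, ∀ x, |f x| ≤ C) →
        P[(fun ω => f (X (n + k) ω)) | ℱ n] =ᵐ[P] P[(fun ω => f (X n ω)) | ℱ n]) ↔
      (∀ f : E → ℝ, Measurable f → (∃ C, ∀ x, |f x| ≤ C) →
        Martingale (fun n => P[(fun ω => f (X n ω)) | ℱ n]) ℱ P)) ∧
    ((∀ (n k : ℕ) (f : E → ℝ), Measurable f → (∃ C, ∀ x, |f x| ≤ C) →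
        P[(fun ω => f (X (n + k) ω)) | ℱ n] =ᵐ[P] P[(fun ω => f (X n ω)) | ℱ n]) ↔
      (∀ τ : Ω → ℕ, IsStoppingTime ℱ (fun ω => (τ ω : WithTop ℕ)) →
        Measure.map (fun ω => X (τ ω) ω) P = Measure.map (X 0) P)) :=
  cid_iff_martingale_iff_stoppingTime_general P ℱ X hadapt
end

section
/- Let (X_n, F_n) be a process where each F_n is a random probability measure on a Polish space X. If (i) conditionally on the whole sequence (F_n), the X_n are independent with X_n having conditional distribution F_n, and (ii) (F_n) is a measure-valued martingale with respect to its natural filtration, then (X_n) is conditionally identically distributed (c.i.d.) with respect to its natural filtration. -/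
open MeasureTheory ProbabilityTheory Filter
open scoped ENNReal NNReal Topology

section AuxCid

variable {α : Type*} {mα : MeasurableSpace α}

lemma auxCid_integrable_of_bound (P : Measure α) [IsFiniteMeasure P] {g : α → ℝ}
    (hg : AEStronglyMeasurable g P) {C : ℝ} (h : ∀ ω, |g ω| ≤ C) : Integrable g P :=
  ⟨hg, HasFiniteIntegral.of_bounded (C := C) (Filter.Eventually.of_forall fun ω => by
    simpa [Real.norm_eq_abs] using h ω)⟩

lemma auxCid_integral_rep {μ : Measure α} [IsProbabilityMeasure μ] {f : α → ℝ}
    (hf : Measurable f) {C : ℝ} (hb : ∀ x, |f x| ≤ C) :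
    ∫ x, f x ∂μ = (∫⁻ x, ENNReal.ofReal (f x) ∂μ).toReal
      - (∫⁻ x, ENNReal.ofReal (-f x) ∂μ).toReal :=
  integral_eq_lintegral_pos_part_sub_lintegral_neg_part
    (auxCid_integrable_of_bound μ hf.aestronglyMeasurable hb)

lemma auxCid_abs_integral_le {μ : Measure α} [IsProbabilityMeasure μ] {f : α → ℝ}
    {C : ℝ} (hb : ∀ x, |f x| ≤ C) : |∫ x, f x ∂μ| ≤ C := by
  have := norm_integral_le_of_norm_le_const (μ := μ) (f := f) (C := C)
    (Filter.Eventually.of_forall fun x => by simpa [Real.norm_eq_abs] using hb x)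
  simpa [Real.norm_eq_abs] using this

lemma auxCid_measurable_integral_measure {f : α → ℝ} (hf : Measurable f) :
    Measurable fun μ : Measure α =>
      (∫⁻ x, ENNReal.ofReal (f x) ∂μ).toReal - (∫⁻ x, ENNReal.ofReal (-f x) ∂μ).toReal :=
  ((ENNReal.measurable_toReal.comp
      (Measure.measurable_lintegral (ENNReal.measurable_ofReal.comp hf))).sub
    (ENNReal.measurable_toReal.comp
      (Measure.measurable_lintegral (ENNReal.measurable_ofReal.comp hf.neg))))

lemma auxCid_measurable_intF {Ω : Type*}
    {F : Ω → Measure α} (hFprob : ∀ ω, IsProbabilityMeasure (F ω)) {f : α → ℝ}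
    (hf : Measurable f) {C : ℝ} (hb : ∀ x, |f x| ≤ C) :
    Measurable[MeasurableSpace.comap F inferInstance] fun ω => ∫ x, f x ∂(F ω) := by
  have hrep : (fun ω => ∫ x, f x ∂(F ω)) =
      (fun μ : Measure α =>
        (∫⁻ x, ENNReal.ofReal (f x) ∂μ).toReal
          - (∫⁻ x, ENNReal.ofReal (-f x) ∂μ).toReal) ∘ F := by
    funext ω
    haveI := hFprob ω
    exact auxCid_integral_rep hf hb
  rw [hrep]
  exact (auxCid_measurable_integral_measure hf).comp (measurable_iff_comap_le.2 le_rfl)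

/-- σ-algebra generated by finitely many random elements. -/
@[reducible] def cidSup {Ω β : Type*} [MeasurableSpace β] (Y : ℕ → Ω → β) (n : ℕ) :
    MeasurableSpace Ω :=
  ⨆ i ∈ Finset.range n, MeasurableSpace.comap (Y i) inferInstance

/-- σ-algebra generated by a whole sequence of random elements. -/
@[reducible] def cidSupAll {Ω β : Type*} [MeasurableSpace β] (Y : ℕ → Ω → β) :
    MeasurableSpace Ω :=
  ⨆ n, MeasurableSpace.comap (Y n) inferInstance

end AuxCid

set_option maxHeartbeats 2000000 in
/-- If, conditionally on the whole sequence of random probability measures `(F_n)`, the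
`X_n` are independent with `X_n ~ F_n` (encoded through the product formula for bounded
measurable functions), and `(F_n)` is a measure-valued martingale with respect to its
natural filtration, then `(X_n)` is c.i.d. with respect to its natural filtration. -/
theorem state_space_construction_cid
    {Ω E : Type*} {mΩ : MeasurableSpace Ω} [MeasurableSpace E]
    [TopologicalSpace E] [PolishSpace E] [BorelSpace E]
    (P : Measure Ω) [IsProbabilityMeasure P]
    (X : ℕ → Ω → E) (hX : ∀ n, Measurable (X n))
    (F : ℕ → Ω → Measure E) (hF : ∀ n, Measurable (F n))
    (hFprob : ∀ n ω, IsProbabilityMeasure (F n ω))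
    (hcondiid : ∀ (s : Finset ℕ) (f : ℕ → E → ℝ),
      (∀ i, Measurable (f i)) → (∀ i, ∃ C, ∀ x, |f i x| ≤ C) →
      P[(fun ω => ∏ i ∈ s, f i (X i ω)) |
          ⨆ n, MeasurableSpace.comap (F n) inferInstance]
        =ᵐ[P] fun ω => ∏ i ∈ s, ∫ x, f i x ∂(F i ω))
    (hmart : ∀ (n : ℕ) (A : Set E), MeasurableSet A →
      P[(fun ω => (F (n + 1) ω A).toReal) |
          ⨆ k ∈ Finset.range (n + 1), MeasurableSpace.comap (F k) inferInstance]
        =ᵐ[P] fun ω => (F n ω A).toReal) :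
    ∀ (n k : ℕ) (f : E → ℝ), Measurable f → (∃ C, ∀ x, |f x| ≤ C) →
      P[(fun ω => f (X (n + k) ω)) |
          ⨆ m ∈ Finset.range n, MeasurableSpace.comap (X m) inferInstance]
        =ᵐ[P] P[(fun ω => f (X n ω)) |
          ⨆ m ∈ Finset.range n, MeasurableSpace.comap (X m) inferInstance] := by
  intro n k f hf hbnd
  obtain ⟨C, hC⟩ := hbnd
  have hcomapF_le : ∀ j, MeasurableSpace.comap (F j) inferInstance ≤ mΩ :=
    fun j => (hF j).comap_le
  have h𝒢le : cidSupAll F ≤ mΩ := iSup_le fun j => hcomapF_le j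
  have hGle : ∀ j, cidSup F (j + 1) ≤ mΩ := fun j => iSup₂_le fun i _ => hcomapF_le i
  have hGself : ∀ j, MeasurableSpace.comap (F j) inferInstance ≤ cidSup F (j + 1) :=
    fun j => le_iSup₂ (f := fun i (_ : i ∈ Finset.range (j + 1)) =>
      MeasurableSpace.comap (F i) inferInstance) j (by simp)
  have hGmono : ∀ {i j : ℕ}, i ≤ j → cidSup F (i + 1) ≤ cidSup F (j + 1) := by
    intro i j hij
    refine iSup₂_le fun a ha => ?_
    have ha' : a ∈ Finset.range (j + 1) := by
      simp only [Finset.mem_range] at ha ⊢; omega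
    exact le_iSup₂ (f := fun a (_ : a ∈ Finset.range (j + 1)) =>
      MeasurableSpace.comap (F a) inferInstance) a ha'
  haveI : SigmaFinite (P.trim h𝒢le) :=
    @IsFiniteMeasure.toSigmaFinite _ _ _ (isFiniteMeasure_trim h𝒢le)
  haveI hGsf : ∀ j, SigmaFinite (P.trim (hGle j)) := fun j =>
    @IsFiniteMeasure.toSigmaFinite _ _ _ (isFiniteMeasure_trim (hGle j))
  -- measurability of ω ↦ ∫ f dF_j ω
  have hφmeas : ∀ (j : ℕ) (g : E → ℝ), Measurable g → ∀ (D : ℝ), (∀ x, |g x| ≤ D) →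
      Measurable[MeasurableSpace.comap (F j) inferInstance] fun ω => ∫ x, g x ∂(F j ω) :=
    fun j g hg D hD => auxCid_measurable_intF (hFprob j) hg hD
  have hφbound : ∀ (j : ℕ) (g : E → ℝ), Measurable g → ∀ (D : ℝ), (∀ x, |g x| ≤ D) →
      ∀ ω, |∫ x, g x ∂(F j ω)| ≤ D := by
    intro j g hg D hD ω
    haveI := hFprob j ω
    exact auxCid_abs_integral_le hD
  have hφint : ∀ (j : ℕ) (g : E → ℝ), Measurable g → ∀ (D : ℝ), (∀ x, |g x| ≤ D) →
      Integrable (fun ω => ∫ x, g x ∂(F j ω)) P := by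
    intro j g hg D hD
    exact auxCid_integrable_of_bound P
      (((hφmeas j g hg D hD).mono (hcomapF_le j) le_rfl).aestronglyMeasurable)
      (hφbound j g hg D hD)
  -- one-step martingale property for bounded functions
  have hstep : ∀ (j : ℕ) (g : E → ℝ), Measurable g → ∀ (D : ℝ), (∀ x, |g x| ≤ D) →
      P[(fun ω => ∫ x, g x ∂(F (j + 1) ω)) | cidSup F (j + 1)]
        =ᵐ[P] fun ω => ∫ x, g x ∂(F j ω) := by
    intro j g hg D hD
    refine (ae_eq_condExp_of_forall_setIntegral_eq (hGle j)
      (hφint (j + 1) g hg D hD)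
      (fun s _ _ => (hφint j g hg D hD).integrableOn)
      ?_
      (((hφmeas j g hg D hD).mono (hGself j) le_rfl)
        |>.stronglyMeasurable.aestronglyMeasurable )).symm
    intro S hS _
    have hSmeas : MeasurableSet S := hGle j S hS
    -- the two "bind" measures agree
    have hbindeq : (P.restrict S).bind (F (j + 1)) = (P.restrict S).bind (F j) := by
      refine Measure.ext fun A hA => ?_
      rw [Measure.bind_apply hA (hF (j + 1)).aemeasurable, Measure.bind_apply hA (hF j).aemeasurable]
      have hmeasA : ∀ (M : ℕ), Measurable fun ω => (F M ω A).toReal := fun M =>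
        ENNReal.measurable_toReal.comp ((Measure.measurable_coe hA).comp (hF M))
      have hintA : ∀ (M : ℕ), Integrable (fun ω => (F M ω A).toReal) P := by
        intro M
        refine auxCid_integrable_of_bound P (hmeasA M).aestronglyMeasurable (C := 1) ?_
        intro ω
        haveI := hFprob M ω
        rw [abs_of_nonneg ENNReal.toReal_nonneg]
        exact ENNReal.toReal_le_of_le_ofReal one_pos.le
          (by simpa using prob_le_one (μ := F M ω) (s := A))
      have hre : ∫ ω in S, (F (j + 1) ω A).toReal ∂P
          = ∫ ω in S, (F j ω A).toReal ∂P := by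
        rw [← setIntegral_condExp (hGle j) (hintA (j + 1)) hS]
        exact setIntegral_congr_ae hSmeas ((hmart j A hA).mono fun ω hω _ => hω)
      have hlift : ∀ (M : ℕ), ∫⁻ ω, F M ω A ∂(P.restrict S)
          = ENNReal.ofReal (∫ ω in S, (F M ω A).toReal ∂P) := by
        intro M
        rw [ofReal_integral_eq_lintegral_ofReal ((hintA M).restrict)
          (Filter.Eventually.of_forall fun ω => ENNReal.toReal_nonneg)]
        refine lintegral_congr fun ω => ?_
        haveI := hFprob M ω
        exact (ENNReal.ofReal_toReal (measure_ne_top _ _)).symm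
      rw [hlift (j + 1), hlift j, hre]
    -- lintegral version
    have hlin : ∀ (g' : E → ℝ≥0∞), Measurable g' →
        ∫⁻ ω in S, ∫⁻ x, g' x ∂(F (j + 1) ω) ∂P = ∫⁻ ω in S, ∫⁻ x, g' x ∂(F j ω) ∂P := by
      intro g' hg'
      rw [← Measure.lintegral_bind (hF (j + 1)).aemeasurable hg'.aemeasurable,
        ← Measure.lintegral_bind (hF j).aemeasurable hg'.aemeasurable,
        hbindeq]
    -- from lintegral to Bochner integrals
    have hterm : ∀ (M : ℕ) (g' : E → ℝ≥0∞), Measurable g' →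
        (∀ x, g' x ≤ ENNReal.ofReal D) →
        ∫ ω in S, (∫⁻ x, g' x ∂(F M ω)).toReal ∂P
          = (∫⁻ ω in S, ∫⁻ x, g' x ∂(F M ω) ∂P).toReal := by
      intro M g' hg' hg'b
      refine integral_toReal (((Measure.measurable_lintegral hg').comp (hF M)).aemeasurable)
        (Filter.Eventually.of_forall fun ω => ?_)
      haveI := hFprob M ω
      calc ∫⁻ x, g' x ∂(F M ω) ≤ ∫⁻ _, ENNReal.ofReal D ∂(F M ω) :=
            lintegral_mono fun x => hg'b x
        _ = ENNReal.ofReal D := by simp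
        _ < ⊤ := ENNReal.ofReal_lt_top
    have hposb : ∀ x, ENNReal.ofReal (g x) ≤ ENNReal.ofReal D := fun x =>
      ENNReal.ofReal_le_ofReal ((le_abs_self _).trans (hD x))
    have hnegb : ∀ x, ENNReal.ofReal (-g x) ≤ ENNReal.ofReal D := fun x =>
      ENNReal.ofReal_le_ofReal ((neg_le_abs _).trans (hD x))
    have hintterm : ∀ (M : ℕ) (g' : E → ℝ≥0∞), Measurable g' →
        (∀ x, g' x ≤ ENNReal.ofReal D) →
        Integrable (fun ω => (∫⁻ x, g' x ∂(F M ω)).toReal) (P.restrict S) := by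
      intro M g' hg' hg'b
      refine auxCid_integrable_of_bound (P.restrict S)
        (((ENNReal.measurable_toReal.comp
          ((Measure.measurable_lintegral hg').comp (hF M)))).aestronglyMeasurable)
        (C := (ENNReal.ofReal D).toReal) fun ω => ?_
      rw [abs_of_nonneg ENNReal.toReal_nonneg]
      refine ENNReal.toReal_mono ENNReal.ofReal_ne_top ?_
      haveI := hFprob M ω
      calc ∫⁻ x, g' x ∂(F M ω) ≤ ∫⁻ _, ENNReal.ofReal D ∂(F M ω) :=
            lintegral_mono fun x => hg'b x
        _ = ENNReal.ofReal D := by simp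
    have hrep : ∀ (M : ℕ), ∫ ω in S, (∫ x, g x ∂(F M ω)) ∂P
        = (∫⁻ ω in S, ∫⁻ x, ENNReal.ofReal (g x) ∂(F M ω) ∂P).toReal
          - (∫⁻ ω in S, ∫⁻ x, ENNReal.ofReal (-g x) ∂(F M ω) ∂P).toReal := by
      intro M
      have h1 : (fun ω => ∫ x, g x ∂(F M ω)) = fun ω =>
          (∫⁻ x, ENNReal.ofReal (g x) ∂(F M ω)).toReal
            - (∫⁻ x, ENNReal.ofReal (-g x) ∂(F M ω)).toReal := by
        funext ω
        haveI := hFprob M ω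
        exact auxCid_integral_rep hg hD
      rw [h1, integral_sub
        (hintterm M (fun x => ENNReal.ofReal (g x)) (ENNReal.measurable_ofReal.comp hg) hposb)
        (hintterm M (fun x => ENNReal.ofReal (-g x))
          (ENNReal.measurable_ofReal.comp hg.neg) hnegb),
        hterm M (fun x => ENNReal.ofReal (g x)) (ENNReal.measurable_ofReal.comp hg) hposb,
        hterm M (fun x => ENNReal.ofReal (-g x))
          (ENNReal.measurable_ofReal.comp hg.neg) hnegb]
    rw [hrep j, hrep (j + 1),
      hlin (fun x => ENNReal.ofReal (g x)) (ENNReal.measurable_ofReal.comp hg),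
      hlin (fun x => ENNReal.ofReal (-g x)) (ENNReal.measurable_ofReal.comp hg.neg)]
  -- iterated martingale property
  have hclaim : ∀ (j m : ℕ) (g : E → ℝ), Measurable g → ∀ (D : ℝ), (∀ x, |g x| ≤ D) →
      P[(fun ω => ∫ x, g x ∂(F (j + m) ω)) | cidSup F (j + 1)]
        =ᵐ[P] fun ω => ∫ x, g x ∂(F j ω) := by
    intro j m
    induction m with
    | zero =>
      intro g hg D hD
      have h := condExp_of_stronglyMeasurable (hGle j)
        (((hφmeas j g hg D hD).mono (hGself j) le_rfl).stronglyMeasurable)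
        (hφint j g hg D hD)
      simp only [Nat.add_zero]
      rw [h]
    | succ m ih =>
      intro g hg D hD
      have h1 : P[(fun ω => ∫ x, g x ∂(F (j + (m + 1)) ω)) | cidSup F (j + 1)]
          =ᵐ[P] P[ P[(fun ω => ∫ x, g x ∂(F ((j + m) + 1) ω)) | cidSup F ((j + m) + 1)]
            | cidSup F (j + 1)] := by
        have h2 := condExp_condExp_of_le (f := fun ω => ∫ x, g x ∂(F ((j + m) + 1) ω))
          (μ := P) (hGmono (Nat.le_add_right j m)) (hGle (j + m))
        have heq : j + (m + 1) = (j + m) + 1 := by omega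
        rw [heq]
        exact h2.symm
      refine h1.trans ?_
      refine (condExp_congr_ae (hstep (j + m) g hg D hD)).trans ?_
      exact ih g hg D hD
  -- integrability of f ∘ X M
  have hfXint : ∀ (M : ℕ), Integrable (fun ω => f (X M ω)) P := fun M =>
    auxCid_integrable_of_bound P ((hf.comp (hX M)).aestronglyMeasurable)
      (fun ω => hC (X M ω))
  -- key rectangle computation
  have hkey : ∀ (t : Finset ℕ), (∀ i ∈ t, i < n) → ∀ (A : ℕ → Set E),
      (∀ i, MeasurableSet (A i)) →
      ∫ ω in ⋂ i ∈ t, X i ⁻¹' (A i), f (X (n + k) ω) ∂P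
        = ∫ ω in ⋂ i ∈ t, X i ⁻¹' (A i), f (X n ω) ∂P := by
    intro t ht A hA
    set S : Set Ω := ⋂ i ∈ t, X i ⁻¹' (A i) with hSdef
    have hSmeas : MeasurableSet S := by
      refine MeasurableSet.biInter (Set.to_countable _) fun i _ => ?_
      exact (hX i) (hA i)
    set H : Ω → ℝ := fun ω => ∏ i ∈ t, (F i ω (A i)).toReal with hHdef
    -- step 1: relate set integral to ∫ φ_M · H
    have hstep1 : ∀ (M : ℕ), n ≤ M →
        ∫ ω in S, f (X M ω) ∂P = ∫ ω, (∫ x, f x ∂(F M ω)) * H ω ∂P := by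
      intro M hM
      have hMt : M ∉ t := fun hmem => absurd (ht M hmem) (by omega)
      set fi : ℕ → E → ℝ := fun i => if i = M then f else (A i).indicator (fun _ => (1:ℝ))
        with hfidef
      have hfimeas : ∀ i, Measurable (fi i) := by
        intro i
        by_cases h : i = M
        · simp only [hfidef, h, if_true]; exact hf
        · simp only [hfidef, if_neg h]; exact measurable_const.indicator (hA i)
      have hfibnd : ∀ i, ∃ D, ∀ x, |fi i x| ≤ D := by
        intro i
        by_cases h : i = M
        · exact ⟨C, fun x => by simp only [hfidef, h, if_true]; exact hC x⟩
        · refine ⟨1, fun x => ?_⟩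
          simp only [hfidef, if_neg h]
          by_cases hx : x ∈ A i <;> simp [Set.indicator_apply, hx]
      have hcid := hcondiid (insert M t) fi hfimeas hfibnd
      -- pointwise identity for the product
      have hprod : ∀ ω, S.indicator (fun ω => f (X M ω)) ω
          = ∏ i ∈ insert M t, fi i (X i ω) := by
        intro ω
        rw [Finset.prod_insert hMt]
        have hMval : fi M (X M ω) = f (X M ω) := by simp [hfidef]
        by_cases hω : ω ∈ S
        · have h1 : ∀ i ∈ t, fi i (X i ω) = 1 := by
            intro i hi
            have hne : i ≠ M := fun h => hMt (h ▸ hi)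
            have hxa : X i ω ∈ A i := Set.mem_iInter₂.1 hω i hi
            simp [hfidef, hne, Set.indicator_apply, hxa]
          rw [Finset.prod_congr rfl h1]
          simp [Set.indicator_of_mem hω, hMval]
        · obtain ⟨i, hi, hxi⟩ : ∃ i ∈ t, X i ω ∉ A i := by
            by_contra hcon
            push_neg at hcon
            exact hω (Set.mem_iInter₂.2 fun i hi => hcon i hi)
          have hzero : fi i (X i ω) = 0 := by
            have hne : i ≠ M := fun h => hMt (h ▸ hi)
            simp [hfidef, hne, Set.indicator_apply, hxi]
          rw [Finset.prod_eq_zero hi hzero]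
          simp [Set.indicator_of_notMem hω]
      -- the product is integrable
      have hDb : ∀ i, ∀ x, |fi i x| ≤ max |C| 1 := by
        intro i x
        by_cases h : i = M
        · simp only [hfidef, h, if_true]
          exact le_trans (le_trans (hC x) (le_abs_self C)) (le_max_left _ _)
        · simp only [hfidef, if_neg h]
          refine le_trans ?_ (le_max_right _ _)
          by_cases hx : x ∈ A i <;> simp [Set.indicator_apply, hx]
      have hprodmeas : Measurable fun ω => ∏ i ∈ insert M t, fi i (X i ω) :=
        Finset.measurable_prod _ fun i _ => (hfimeas i).comp (hX i)
      have hprodint : Integrable (fun ω => ∏ i ∈ insert M t, fi i (X i ω)) P := by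
        refine auxCid_integrable_of_bound P hprodmeas.aestronglyMeasurable
          (C := (max |C| 1) ^ (insert M t).card) fun ω => ?_
        rw [Finset.abs_prod]
        calc ∏ i ∈ insert M t, |fi i (X i ω)|
            ≤ ∏ _i ∈ insert M t, max |C| 1 :=
              Finset.prod_le_prod (fun i _ => abs_nonneg _) (fun i _ => hDb i (X i ω))
          _ = (max |C| 1) ^ (insert M t).card := by rw [Finset.prod_const]
      -- product of the integrals
      have hprodint_eq : ∀ ω, (∏ i ∈ insert M t, ∫ x, fi i x ∂(F i ω))
          = (∫ x, f x ∂(F M ω)) * H ω := by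
        intro ω
        rw [Finset.prod_insert hMt]
        congr 1
        · simp [hfidef]
        · refine Finset.prod_congr rfl fun i hi => ?_
          have hne : i ≠ M := fun h => hMt (h ▸ hi)
          simp only [hfidef, if_neg hne]
          haveI := hFprob i ω
          exact integral_indicator_one (hA i)
      calc ∫ ω in S, f (X M ω) ∂P
          = ∫ ω, S.indicator (fun ω => f (X M ω)) ω ∂P := (integral_indicator hSmeas).symm
        _ = ∫ ω, ∏ i ∈ insert M t, fi i (X i ω) ∂P :=
            integral_congr_ae (Filter.Eventually.of_forall hprod)
        _ = ∫ ω, (P[(fun ω => ∏ i ∈ insert M t, fi i (X i ω)) | cidSupAll F]) ω ∂P :=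
            (integral_condExp h𝒢le).symm
        _ = ∫ ω, ∏ i ∈ insert M t, ∫ x, fi i x ∂(F i ω) ∂P := integral_congr_ae hcid
        _ = ∫ ω, (∫ x, f x ∂(F M ω)) * H ω ∂P :=
            integral_congr_ae (Filter.Eventually.of_forall hprodint_eq)
    -- step 2: the two right-hand sides agree via the martingale property
    have hHmeasG : Measurable[cidSup F (n + 1)] H := by
      refine Finset.measurable_prod _ fun i hi => ?_
      have hle : MeasurableSpace.comap (F i) inferInstance ≤ cidSup F (n + 1) := by
        refine le_iSup₂ (f := fun a (_ : a ∈ Finset.range (n + 1)) =>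
          MeasurableSpace.comap (F a) inferInstance) i ?_
        simp only [Finset.mem_range]
        exact lt_of_lt_of_le (ht i hi) (Nat.le_succ n)
      exact ((ENNReal.measurable_toReal.comp (Measure.measurable_coe (hA i))).comp
        (measurable_iff_comap_le.2 le_rfl)).mono hle le_rfl
    have hHbnd : ∀ ω, |H ω| ≤ 1 := by
      intro ω
      rw [hHdef, Finset.abs_prod]
      refine Finset.prod_le_one (fun i _ => abs_nonneg _) fun i _ => ?_
      haveI := hFprob i ω
      rw [abs_of_nonneg ENNReal.toReal_nonneg]
      exact ENNReal.toReal_le_of_le_ofReal one_pos.le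
        (by simpa using prob_le_one (μ := F i ω) (s := A i))
    have hHmeas : Measurable H := hHmeasG.mono (hGle n) le_rfl
    have hHφint : ∀ (M : ℕ), Integrable (fun ω => H ω * ∫ x, f x ∂(F M ω)) P := by
      intro M
      refine auxCid_integrable_of_bound P
        ((hHmeas.mul ((hφmeas M f hf C hC).mono (hcomapF_le M) le_rfl)).aestronglyMeasurable)
        (C := 1 * |C|) fun ω => ?_
      rw [abs_mul]
      exact mul_le_mul (hHbnd ω) ((hφbound M f hf C hC ω).trans (le_abs_self C))
        (abs_nonneg _) zero_le_one
    have hstep2 : ∫ ω, (∫ x, f x ∂(F (n + k) ω)) * H ω ∂P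
        = ∫ ω, (∫ x, f x ∂(F n ω)) * H ω ∂P := by
      have hcomm : ∀ (M : ℕ), ∫ ω, (∫ x, f x ∂(F M ω)) * H ω ∂P
          = ∫ ω, H ω * (∫ x, f x ∂(F M ω)) ∂P := by
        intro M; simp_rw [mul_comm]
      rw [hcomm (n + k), hcomm n]
      have hpull : ∀ (M : ℕ), ∫ ω, H ω * (∫ x, f x ∂(F M ω)) ∂P
          = ∫ ω, H ω * (P[(fun ω => ∫ x, f x ∂(F M ω)) | cidSup F (n + 1)]) ω ∂P := by
        intro M
        rw [← integral_condExp (hGle n) (f := fun ω => H ω * ∫ x, f x ∂(F M ω))]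
        refine integral_congr_ae ?_
        have h3 := condExp_mul_of_stronglyMeasurable_left (μ := P) (m := cidSup F (n + 1))
          hHmeasG.stronglyMeasurable (by simpa [Pi.mul_def] using hHφint M)
          (hφint M f hf C hC)
        simpa [Pi.mul_def] using h3
      rw [hpull (n + k), hpull n]
      refine integral_congr_ae ?_
      filter_upwards [hclaim n k f hf C hC, hclaim n 0 f hf C hC] with ω h1 h2
      rw [h1]
      simp only [Nat.add_zero] at h2
      rw [h2]
    rw [hstep1 (n + k) (Nat.le_add_right n k), hstep1 n le_rfl, hstep2]
  -- Dynkin argument: the set integrals agree on the whole σ-algebra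
  have hm_le : cidSup X n ≤ mΩ := iSup₂_le fun i _ => (hX i).comap_le
  haveI : SigmaFinite (P.trim hm_le) :=
    @IsFiniteMeasure.toSigmaFinite _ _ _ (isFiniteMeasure_trim hm_le)
  have hsets : ∀ S : Set Ω, MeasurableSet[cidSup X n] S →
      ∫ ω in S, f (X (n + k) ω) ∂P = ∫ ω in S, f (X n ω) ∂P := by
    have h_eq : cidSup X n = MeasurableSpace.generateFrom
        (piiUnionInter (fun i => {s | MeasurableSet[MeasurableSpace.comap (X i)
          inferInstance] s}) (↑(Finset.range n) : Set ℕ)) :=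
      (generateFrom_piiUnionInter_measurableSet
        (fun i => MeasurableSpace.comap (X i) inferInstance) (↑(Finset.range n) : Set ℕ)).symm
    have h_pi : IsPiSystem (piiUnionInter (fun i => {s | MeasurableSet[MeasurableSpace.comap
        (X i) inferInstance] s}) (↑(Finset.range n) : Set ℕ)) :=
      isPiSystem_piiUnionInter _ (fun i => @MeasurableSpace.isPiSystem_measurableSet Ω
        (MeasurableSpace.comap (X i) inferInstance)) _
    intro S hS
    refine @MeasurableSpace.induction_on_inter Ω (cidSup X n)
      (fun S _ => ∫ ω in S, f (X (n + k) ω) ∂P = ∫ ω in S, f (X n ω) ∂P) _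
      h_eq h_pi ?_ ?_ ?_ ?_ S hS
    · simp
    · -- basic rectangles
      rintro u ⟨pt, hptS, ft, hft, rfl⟩
      have hchoice : ∀ i ∈ pt, ∃ B : Set E, MeasurableSet B ∧ X i ⁻¹' B = ft i := fun i hi =>
        hft i hi
      choose! B hB1 hB2 using hchoice
      have hAmeas : ∀ i, MeasurableSet (if h : i ∈ pt then B i else Set.univ) := by
        intro i
        by_cases h : i ∈ pt
        · simp only [h, dif_pos]; exact hB1 i h
        · simp only [h, dif_neg, not_false_iff]; exact MeasurableSet.univ
      have hules : ∀ i ∈ pt, i < n := by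
        intro i hi
        have := hptS hi
        simpa [Finset.mem_range] using this
      have huA : (⋂ i ∈ pt, ft i)
          = ⋂ i ∈ pt, X i ⁻¹' (if h : i ∈ pt then B i else Set.univ) := by
        refine Set.iInter₂_congr fun i hi => ?_
        simp only [hi, dif_pos]
        exact (hB2 i hi).symm
      rw [huA]
      exact hkey pt hules _ hAmeas
    · -- complements
      intro u hu hind
      have humeas : MeasurableSet u := hm_le u hu
      have h1 := integral_add_compl humeas (hfXint (n + k))
      have h2 := integral_add_compl humeas (hfXint n)
      have htot : ∫ ω, f (X (n + k) ω) ∂P = ∫ ω, f (X n ω) ∂P := by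
        have h3 := hkey ∅ (by simp) (fun _ => Set.univ) (fun _ => MeasurableSet.univ)
        simpa using h3
      linarith [hind, h1, h2, htot]
    · -- countable disjoint unions
      intro g hdisj hgmeas hind
      have hgm : ∀ i, MeasurableSet (g i) := fun i => hm_le _ (hgmeas i)
      rw [integral_iUnion hgm hdisj (hfXint (n + k)).integrableOn,
        integral_iUnion hgm hdisj (hfXint n).integrableOn]
      exact tsum_congr hind
  -- conclude via uniqueness of conditional expectation
  refine ((ae_eq_condExp_of_forall_setIntegral_eq hm_le (hfXint (n + k))
    (fun s _ _ => integrable_condExp.integrableOn)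
    (fun s hs _ => ?_)
    (stronglyMeasurable_condExp.aestronglyMeasurable)).symm)
  rw [setIntegral_condExp hm_le (hfXint n) hs]
  exact (hsets s hs).symm
end

section
/- Let (X_n^I)_{n≥1} be a stationary process with X_n^I = (X_{n,i}, i ∈ I) such that for every finite J ⊂ I, every j ∈ J and every n ≥ 0, (X_{1:n}^J, X_{n+1}^{J\{j}}, X_{n+1,j}) has the same distribution as (X_{1:n}^J, X_{n+1}^{J\{j}}, X_{n+2,j}). Then the array [X_{n,i}] is partially exchangeable. -/
/-!
Fix finitely many columns `J` and a bounded measurable `f`. Partial c.i.d. says that, given the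
rows before `N` and the other entries of row `N`, the entries `X N j` and `X (N + 1) j` have the
same conditional law; by the tower property every future entry of column `j` then has the same
conditional expectation given the rows `≤ n`. Hence the predictions
`Mₙ = 𝔼[f (X (n + 1) j) | rows ≤ n]` form a bounded martingale and converge in `L¹`.

For distinct entries `(r a, c a)` beyond row `n`, peeling them off highest row first replaces each
entry by its prediction at its own row and then at time `n`, so `𝔼[∏ f_a (X (r a) (c a))]` is
`𝔼[∏ M^a_n]` up to the `L¹` increments of these martingales. Stationarity shifts the rows past
any `n`, so the expectation is the limit of `𝔼[∏ M^a_n]`, which does not depend on the rows: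
the finite-dimensional laws are invariant under permutations within columns.
-/

open MeasureTheory ProbabilityTheory Filter
open scoped ENNReal NNReal Topology

lemma Finset.abs_prod_le_one {κ : Type*} {A : Finset κ} {g : κ → ℝ}
    (hg : ∀ a ∈ A, |g a| ≤ 1) : |∏ a ∈ A, g a| ≤ 1 := by
  rw [Finset.abs_prod]
  exact Finset.prod_le_one (fun a _ => abs_nonneg _) hg

namespace MeasureTheory

variable {Ω : Type*} {mΩ : MeasurableSpace Ω} {P : Measure Ω}

lemma integrable_comp_of_abs_le [IsFiniteMeasure P] {E : Type*} [MeasurableSpace E]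
    {Y : Ω → E} {f : E → ℝ} {C : ℝ} (hY : Measurable Y) (hf : Measurable f)
    (hfb : ∀ x, |f x| ≤ C) : Integrable (fun ω => f (Y ω)) P :=
  .of_bound (hf.comp hY).aestronglyMeasurable C (.of_forall fun ω => hfb (Y ω))

lemma integral_mul_condExp [IsFiniteMeasure P] {m : MeasurableSpace Ω} (hm : m ≤ mΩ)
    {W h : Ω → ℝ} {C : ℝ} (hW : StronglyMeasurable[m] W) (hWb : ∀ᵐ ω ∂P, |W ω| ≤ C)
    (hh : Integrable h P) :
    ∫ ω, W ω * P[h|m] ω ∂P = ∫ ω, W ω * h ω ∂P := by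
  have hWh : Integrable (W * h) P := hh.bdd_mul (hW.mono hm).aestronglyMeasurable hWb
  calc ∫ ω, W ω * P[h|m] ω ∂P = ∫ ω, P[W * h|m] ω ∂P :=
        integral_congr_ae (condExp_mul_of_stronglyMeasurable_left hW hWh hh).symm
    _ = ∫ ω, W ω * h ω ∂P := integral_condExp hm

lemma abs_integral_mul_sub_integral_mul_le {W g h : Ω → ℝ} (hW : AEStronglyMeasurable W P)
    (hWb : ∀ᵐ ω ∂P, |W ω| ≤ 1) (hg : Integrable g P) (hh : Integrable h P) :
    |∫ ω, W ω * g ω ∂P - ∫ ω, W ω * h ω ∂P| ≤ ∫ ω, |g ω - h ω| ∂P := by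
  have hWb' : ∀ᵐ ω ∂P, ‖W ω‖ ≤ 1 := by simpa only [Real.norm_eq_abs] using hWb
  rw [← integral_sub (hg.bdd_mul hW hWb') (hh.bdd_mul hW hWb'), ← Real.norm_eq_abs]
  refine norm_integral_le_of_norm_le (hg.sub hh).abs ?_
  filter_upwards [hWb] with ω hω
  rw [← mul_sub, norm_mul, Real.norm_eq_abs, Real.norm_eq_abs]
  exact mul_le_of_le_one_left (abs_nonneg _) hω

lemma condExp_comap_ae_eq_of_map_prod_eq [IsFiniteMeasure P] {β : Type*}
    [mβ : MeasurableSpace β] {T : Ω → β} {Y Y' : Ω → ℝ} (hT : Measurable T)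
    (hY : Measurable Y) (hY' : Measurable Y') (hYi : Integrable Y P) (hY'i : Integrable Y' P)
    (hlaw : P.map (fun ω => (T ω, Y ω)) = P.map (fun ω => (T ω, Y' ω))) :
    P[Y|mβ.comap T] =ᵐ[P] P[Y'|mβ.comap T] := by
  have setIntegral_eq : ∀ Z : Ω → ℝ, Measurable Z → ∀ B, MeasurableSet B →
      ∫ ω in T ⁻¹' B, Z ω ∂P = ∫ p in B ×ˢ Set.univ, p.2 ∂(P.map fun ω => (T ω, Z ω)) :=
    fun Z hZ B hB => by
      rw [setIntegral_map (hB.prod .univ) measurable_snd.aestronglyMeasurable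
        (hT.prodMk hZ).aemeasurable, Set.mk_preimage_prod, Set.preimage_univ, Set.inter_univ]
  refine ae_eq_condExp_of_forall_setIntegral_eq hT.comap_le hY'i
    (fun _ _ _ => integrable_condExp.integrableOn) ?_
    stronglyMeasurable_condExp.aestronglyMeasurable
  rintro _ ⟨B, hB, rfl⟩ -
  rw [setIntegral_condExp hT.comap_le hYi ⟨B, hB, rfl⟩, setIntegral_eq Y hY B hB, hlaw,
    setIntegral_eq Y' hY' B hB]

lemma uniformIntegrable_of_ae_abs_le [IsFiniteMeasure P] {ι : Type*} {M : ι → Ω → ℝ} {C : ℝ}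
    (hM : ∀ i, AEStronglyMeasurable (M i) P) (hb : ∀ i, ∀ᵐ ω ∂P, |M i ω| ≤ C) :
    UniformIntegrable M 1 P := by
  refine uniformIntegrable_of le_rfl ENNReal.one_ne_top hM fun _ _ =>
    ⟨C.toNNReal + 1, fun i => ?_⟩
  have hzero : {ω | C.toNNReal + 1 ≤ ‖M i ω‖₊}.indicator (M i) =ᵐ[P] 0 := by
    filter_upwards [hb i] with ω hω
    refine Set.indicator_of_notMem (fun h => ?_) _
    have h' : (C.toNNReal : ℝ) + 1 ≤ |M i ω| := by exact_mod_cast h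
    linarith [C.le_coe_toNNReal]
  simp [eLpNorm_congr_ae hzero]

lemma Martingale.tendsto_integral_abs_sub [IsFiniteMeasure P] {ℱ : Filtration ℕ mΩ}
    {M : ℕ → Ω → ℝ} {C : ℝ} (hM : Martingale M ℱ P) (hb : ∀ n, ∀ᵐ ω ∂P, |M n ω| ≤ C)
    {u : ℕ → ℕ} (hu : Tendsto u atTop atTop) :
    Tendsto (fun n => ∫ ω, |M (u n) ω - M n ω| ∂P) atTop (𝓝 0) := by
  set L := ℱ.limitProcess M P
  have hMm : ∀ n, AEStronglyMeasurable (M n) P :=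
    fun n => ((hM.stronglyAdapted n).mono (ℱ.le n)).aestronglyMeasurable
  have hMi : ∀ n, Integrable (M n) P := fun n => .of_bound (hMm n) C (by simpa using hb n)
  have hUI := uniformIntegrable_of_ae_abs_le hMm hb
  obtain ⟨R, hR⟩ := hUI.2.2
  have hLi : Integrable L P :=
    memLp_one_iff_integrable.1 (hM.submartingale.memLp_limitProcess hR)
  have hdist : ∀ n, Integrable (fun ω => |M n ω - L ω|) P := fun n => ((hMi n).sub hLi).abs
  have hL1 : Tendsto (fun n => ∫ ω, |M n ω - L ω| ∂P) atTop (𝓝 0) := by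
    refine ((ENNReal.tendsto_toReal ENNReal.zero_ne_top).comp
      (hM.submartingale.tendsto_eLpNorm_one_limitProcess hUI)).congr fun n => ?_
    rw [Function.comp_apply, eLpNorm_one_eq_lintegral_enorm,
      ← ofReal_integral_norm_eq_lintegral_enorm ((hMi n).sub hLi),
      ENNReal.toReal_ofReal (integral_nonneg fun _ => norm_nonneg _)]
    rfl
  refine squeeze_zero (fun n => integral_nonneg fun _ => abs_nonneg _) (fun n => ?_)
    (by simpa using (hL1.comp hu).add hL1)
  calc ∫ ω, |M (u n) ω - M n ω| ∂P ≤ ∫ ω, |M (u n) ω - L ω| + |M n ω - L ω| ∂P :=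
        integral_mono ((hMi _).sub (hMi n)).abs ((hdist _).add (hdist n)) fun ω => by
          linarith [abs_sub_le (M (u n) ω) (L ω) (M n ω), abs_sub_comm (L ω) (M n ω)]
    _ = _ := integral_add (hdist _) (hdist n)

lemma Measure.ext_of_integral_prod_eq {E κ : Type*} [MeasurableSpace E] [Fintype κ]
    {μ ν : Measure (κ → E)} [IsFiniteMeasure μ] [IsFiniteMeasure ν]
    (h : ∀ f : κ → E → ℝ, (∀ a, Measurable (f a)) → (∀ a x, |f a x| ≤ 1) →
      ∫ y, ∏ a, f a (y a) ∂μ = ∫ y, ∏ a, f a (y a) ∂ν) :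
    μ = ν := by
  have hbox : ∀ A : κ → Set E, (∀ a, MeasurableSet (A a)) →
      μ (Set.univ.pi A) = ν (Set.univ.pi A) := by
    intro A hA
    have hind : ∀ y : κ → E,
        ∏ a, (A a).indicator (1 : E → ℝ) (y a) = (Set.univ.pi A).indicator 1 y := by
      intro y
      by_cases hy : y ∈ Set.univ.pi A
      · rw [Set.indicator_of_mem hy]
        exact Finset.prod_eq_one fun a _ => Set.indicator_of_mem (hy a (Set.mem_univ a)) _
      · obtain ⟨a, ha⟩ : ∃ a, y a ∉ A a := by simpa [Set.mem_univ_pi] using hy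
        rw [Set.indicator_of_notMem hy]
        exact Finset.prod_eq_zero (Finset.mem_univ a) (Set.indicator_of_notMem ha _)
    have := h (fun a => (A a).indicator 1) (fun a => measurable_one.indicator (hA a))
      fun a x => by by_cases hx : x ∈ A a <;> simp [hx]
    simp_rw [hind, integral_indicator_one (MeasurableSet.univ_pi hA)] at this
    exact (ENNReal.toReal_eq_toReal_iff' (measure_ne_top _ _) (measure_ne_top _ _)).1 this
  refine ext_of_generate_finite _ generateFrom_pi.symm isPiSystem_pi ?_ ?_
  · rintro _ ⟨A, hA, rfl⟩
    exact hbox A fun a => hA a (Set.mem_univ a)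
  · simpa using hbox (fun _ => Set.univ) fun _ => .univ

end MeasureTheory

namespace PartiallyCID

variable {Ω E I : Type*} {mΩ : MeasurableSpace Ω} [mE : MeasurableSpace E]
  {X : ℕ → I → Ω → E} {J : Finset I}

def pastFiltration (hX : ∀ n i, Measurable (X n i)) (J : Finset I) : Filtration ℕ mΩ where
  seq n := ⨆ m ≤ n, ⨆ i ∈ J, mE.comap (X m i)
  mono' _ _ hnk := iSup₂_mono' fun m hm => ⟨m, hm.trans hnk, le_rfl⟩
  le' _ := iSup₂_le fun m _ => iSup₂_le fun i _ => (hX m i).comap_le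

/-- The paper's `(X_{1:N}^J, X_{N+1}^{J∖{j}})` (rows are `0`-based here). -/
def pastExcept (X : ℕ → I → Ω → E) (J : Finset I) (N : ℕ) (j : I) (ω : Ω) :
    (Fin N × J → E) × ({i : I // i ∈ J ∧ i ≠ j} → E) :=
  (fun q => X q.1 q.2 ω, fun i => X N i.1 ω)

abbrev sigmaPastExcept (X : ℕ → I → Ω → E) (J : Finset I) (N : ℕ) (j : I) :
    MeasurableSpace Ω :=
  MeasurableSpace.comap (pastExcept X J N j) inferInstance

def IsPartiallyCID (X : ℕ → I → Ω → E) (P : Measure Ω) : Prop :=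
  ∀ (J : Finset I) (j : I), j ∈ J → ∀ n : ℕ,
    P.map (fun ω => (pastExcept X J n j ω, X (n + 1) j ω)) =
      P.map (fun ω => (pastExcept X J n j ω, X n j ω))

section SigmaAlgebras

lemma measurable_pastFiltration {hX : ∀ n i, Measurable (X n i)} {m n : ℕ} {i : I}
    (hmn : m ≤ n) (hi : i ∈ J) : Measurable[pastFiltration hX J n] (X m i) :=
  measurable_iff_comap_le.2 <|
    le_iSup₂_of_le m hmn (le_iSup₂_of_le (f := fun i _ => mE.comap (X m i)) i hi le_rfl)

lemma measurable_sigmaPastExcept {m N : ℕ} {i j : I} (hi : i ∈ J)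
    (h : m < N ∨ m = N ∧ i ≠ j) : Measurable[sigmaPastExcept X J N j] (X m i) := by
  have hpast : Measurable[sigmaPastExcept X J N j] (pastExcept X J N j) := comap_measurable _
  rcases h with hlt | ⟨rfl, hij⟩
  · exact (measurable_pi_apply (⟨⟨m, hlt⟩, ⟨i, hi⟩⟩ : Fin N × J)).comp
      (measurable_fst.comp hpast)
  · exact (measurable_pi_apply (⟨i, hi, hij⟩ : {i : I // i ∈ J ∧ i ≠ j})).comp
      (measurable_snd.comp hpast)

lemma measurable_pastExcept (hX : ∀ n i, Measurable (X n i)) (N : ℕ) (j : I) :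
    Measurable (pastExcept X J N j) :=
  (measurable_pi_lambda _ fun _ => hX _ _).prodMk (measurable_pi_lambda _ fun _ => hX _ _)

lemma pastFiltration_le_sigmaPastExcept {hX : ∀ n i, Measurable (X n i)} {n N : ℕ}
    (hnN : n < N) (j : I) : pastFiltration hX J n ≤ sigmaPastExcept X J N j :=
  iSup₂_le fun _ hm => iSup₂_le fun _ hi =>
    (measurable_sigmaPastExcept hi (.inl (hm.trans_lt hnN))).comap_le

lemma sigmaPastExcept_le_pastFiltration (hX : ∀ n i, Measurable (X n i)) (N : ℕ) (j : I) :
    sigmaPastExcept X J N j ≤ pastFiltration hX J N :=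
  Measurable.comap_le <|
    (@measurable_pi_lambda _ _ _ (pastFiltration hX J N) _ _ fun q =>
      measurable_pastFiltration q.1.2.le q.2.2).prodMk
    (@measurable_pi_lambda _ _ _ (pastFiltration hX J N) _ _ fun i =>
      measurable_pastFiltration le_rfl i.2.1)

-- The entries of `A` lie in earlier rows, or in row `r a₀` but (by injectivity) another column.
lemma measurable_prod_sigmaPastExcept {κ : Type*} {r : κ → ℕ} {c : κ → I} {f : κ → E → ℝ}
    (hinj : Function.Injective fun a => (r a, c a)) (hc : ∀ a, c a ∈ J)
    (hf : ∀ a, Measurable (f a)) {A : Finset κ} {a₀ : κ} (ha₀ : a₀ ∉ A)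
    (hmax : ∀ a ∈ A, r a ≤ r a₀) :
    Measurable[sigmaPastExcept X J (r a₀) (c a₀)] fun ω => ∏ a ∈ A, f a (X (r a) (c a) ω) := by
  refine Finset.measurable_prod _ fun a ha => (hf a).comp (measurable_sigmaPastExcept (hc a) ?_)
  refine (hmax a ha).lt_or_eq.imp_right fun heq => ⟨heq, fun hceq => ?_⟩
  exact ha₀ (hinj (Prod.ext heq hceq) ▸ ha)

end SigmaAlgebras

section Laws

variable {P : Measure Ω}

lemma isPartiallyCID_of_map_eq (hX : ∀ n i, Measurable (X n i))
    (h : ∀ (J : Finset I) (j : I), j ∈ J → ∀ n : ℕ,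
      P.map (fun ω => ((fun q : Fin n × J => X q.1 (q.2 : I) ω),
        (fun i : {i : I // i ∈ J ∧ i ≠ j} => X n i.1 ω), X (n + 1) j ω)) =
      P.map (fun ω => ((fun q : Fin n × J => X q.1 (q.2 : I) ω),
        (fun i : {i : I // i ∈ J ∧ i ≠ j} => X n i.1 ω), X n j ω))) :
    IsPartiallyCID X P := by
  intro J j hj n
  have reassoc : ∀ k, P.map (fun ω => (pastExcept X J n j ω, X k j ω)) =
      (P.map fun ω => ((fun q : Fin n × J => X q.1 (q.2 : I) ω),
        (fun i : {i : I // i ∈ J ∧ i ≠ j} => X n i.1 ω), X k j ω)).map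
        MeasurableEquiv.prodAssoc.symm := fun k =>
    (Measure.map_map MeasurableEquiv.prodAssoc.symm.measurable
      ((measurable_pastExcept hX n j).fst.prodMk
        ((measurable_pastExcept hX n j).snd.prodMk (hX k j)))).symm
  rw [reassoc, reassoc, h J j hj n]

lemma map_shift_eq (hX : ∀ n i, Measurable (X n i))
    (hstat : P.map (fun ω (p : ℕ × I) => X (p.1 + 1) p.2 ω) = P.map (fun ω p => X p.1 p.2 ω))
    (n : ℕ) :
    P.map (fun ω (p : ℕ × I) => X (p.1 + n) p.2 ω) = P.map (fun ω p => X p.1 p.2 ω) := by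
  induction n with
  | zero => rfl
  | succ n ih =>
    have harray : ∀ k, Measurable fun ω (p : ℕ × I) => X (p.1 + k) p.2 ω :=
      fun k => measurable_pi_lambda _ fun _ => hX _ _
    have harray₀ : Measurable fun ω (p : ℕ × I) => X p.1 p.2 ω := harray 0
    have hshift : Measurable fun (y : ℕ × I → E) (p : ℕ × I) => y (p.1 + n, p.2) :=
      measurable_pi_lambda _ fun _ => measurable_pi_apply _
    calc P.map (fun ω (p : ℕ × I) => X (p.1 + (n + 1)) p.2 ω)
        = (P.map fun ω (p : ℕ × I) => X (p.1 + 1) p.2 ω).map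
            fun y p => y (p.1 + n, p.2) := (Measure.map_map hshift (harray 1)).symm
      _ = P.map (fun ω (p : ℕ × I) => X (p.1 + n) p.2 ω) := by
        rw [hstat, Measure.map_map hshift harray₀]
        rfl
      _ = _ := ih

lemma integral_prod_shift_eq {κ : Type*} [Fintype κ] {r : κ → ℕ} {c : κ → I}
    {f : κ → E → ℝ} (hX : ∀ n i, Measurable (X n i))
    (hstat : P.map (fun ω (p : ℕ × I) => X (p.1 + 1) p.2 ω) = P.map (fun ω p => X p.1 p.2 ω))
    (hf : ∀ a, Measurable (f a)) (n : ℕ) :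
    ∫ ω, ∏ a, f a (X (r a + n) (c a) ω) ∂P = ∫ ω, ∏ a, f a (X (r a) (c a) ω) ∂P := by
  have hΦ : Measurable fun (y : ℕ × I → E) => ∏ a, f a (y (r a, c a)) :=
    Finset.measurable_prod _ fun a _ => (hf a).comp (measurable_pi_apply _)
  have harray : ∀ k, Measurable fun ω (p : ℕ × I) => X (p.1 + k) p.2 ω :=
    fun k => measurable_pi_lambda _ fun _ => hX _ _
  calc ∫ ω, ∏ a, f a (X (r a + n) (c a) ω) ∂P
      = ∫ y, ∏ a, f a (y (r a, c a)) ∂(P.map fun ω (p : ℕ × I) => X (p.1 + n) p.2 ω) :=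
        (integral_map (harray n).aemeasurable hΦ.aestronglyMeasurable).symm
    _ = ∫ y, ∏ a, f a (y (r a, c a)) ∂(P.map fun ω (p : ℕ × I) => X p.1 p.2 ω) := by
        rw [map_shift_eq hX hstat n]
    _ = ∫ ω, ∏ a, f a (X (r a) (c a) ω) ∂P :=
        integral_map (harray 0).aemeasurable hΦ.aestronglyMeasurable

end Laws

section Prediction

variable {P : Measure Ω} {j : I} {f : E → ℝ}

noncomputable def prediction (P : Measure Ω) (hX : ∀ n i, Measurable (X n i)) (J : Finset I)
    (f : E → ℝ) (j : I) (n : ℕ) : Ω → ℝ :=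
  P[fun ω => f (X (n + 1) j ω)|pastFiltration hX J n]

lemma abs_prediction_le_one {hX : ∀ n i, Measurable (X n i)} (hfb : ∀ x, |f x| ≤ 1) (n : ℕ) :
    ∀ᵐ ω ∂P, |prediction P hX J f j n ω| ≤ 1 :=
  ae_bdd_abs_condExp_of_ae_bdd_abs (.of_forall fun _ => hfb _)

variable [IsFiniteMeasure P]

lemma condExp_sigmaPastExcept_ae_eq (hX : ∀ n i, Measurable (X n i))
    (hpcid : IsPartiallyCID X P) (hj : j ∈ J) (hf : Measurable f) (hfb : ∀ x, |f x| ≤ 1)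
    (N : ℕ) :
    P[fun ω => f (X (N + 1) j ω)|sigmaPastExcept X J N j] =ᵐ[P]
      P[fun ω => f (X N j ω)|sigmaPastExcept X J N j] := by
  have hT := measurable_pastExcept hX (J := J) N j
  refine condExp_comap_ae_eq_of_map_prod_eq hT (hf.comp (hX _ _)) (hf.comp (hX _ _))
    (integrable_comp_of_abs_le (hX _ _) hf hfb) (integrable_comp_of_abs_le (hX _ _) hf hfb) ?_
  have hmap := congrArg (Measure.map (Prod.map id f)) (hpcid J j hj N)
  rwa [Measure.map_map (measurable_id.prodMap hf) (hT.prodMk (hX _ _)),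
    Measure.map_map (measurable_id.prodMap hf) (hT.prodMk (hX _ _))] at hmap

lemma condExp_pastFiltration_ae_eq_prediction (hX : ∀ n i, Measurable (X n i))
    (hpcid : IsPartiallyCID X P) (hj : j ∈ J) (hf : Measurable f) (hfb : ∀ x, |f x| ≤ 1)
    {n N : ℕ} (hnN : n < N) :
    P[fun ω => f (X N j ω)|pastFiltration hX J n] =ᵐ[P] prediction P hX J f j n := by
  induction N, hnN using Nat.le_induction with
  | base => rfl
  | succ N hnN ih =>
    have hG := (sigmaPastExcept_le_pastFiltration hX N j).trans ((pastFiltration hX J).le N)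
    have hle := pastFiltration_le_sigmaPastExcept (J := J) (hX := hX) hnN j
    calc P[fun ω => f (X (N + 1) j ω)|pastFiltration hX J n]
        =ᵐ[P] P[P[fun ω => f (X (N + 1) j ω)|sigmaPastExcept X J N j]|pastFiltration hX J n] :=
          (condExp_condExp_of_le hle hG).symm
      _ =ᵐ[P] P[P[fun ω => f (X N j ω)|sigmaPastExcept X J N j]|pastFiltration hX J n] :=
          condExp_congr_ae (condExp_sigmaPastExcept_ae_eq hX hpcid hj hf hfb N)
      _ =ᵐ[P] P[fun ω => f (X N j ω)|pastFiltration hX J n] := condExp_condExp_of_le hle hG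
      _ =ᵐ[P] prediction P hX J f j n := ih

lemma martingale_prediction (hX : ∀ n i, Measurable (X n i)) (hpcid : IsPartiallyCID X P)
    (hj : j ∈ J) (hf : Measurable f) (hfb : ∀ x, |f x| ≤ 1) :
    Martingale (prediction P hX J f j) (pastFiltration hX J) P := by
  refine ⟨fun n => stronglyMeasurable_condExp, fun n N hnN => ?_⟩
  calc P[prediction P hX J f j N|pastFiltration hX J n]
      =ᵐ[P] P[fun ω => f (X (N + 1) j ω)|pastFiltration hX J n] :=
        condExp_condExp_of_le ((pastFiltration hX J).mono hnN) ((pastFiltration hX J).le N)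
    _ =ᵐ[P] prediction P hX J f j n :=
        condExp_pastFiltration_ae_eq_prediction hX hpcid hj hf hfb (Nat.lt_succ_of_le hnN)

lemma integral_mul_eq_integral_mul_prediction (hX : ∀ n i, Measurable (X n i))
    (hpcid : IsPartiallyCID X P) (hj : j ∈ J) (hf : Measurable f) (hfb : ∀ x, |f x| ≤ 1)
    {N : ℕ} {W : Ω → ℝ} (hW : StronglyMeasurable[sigmaPastExcept X J N j] W)
    (hWb : ∀ᵐ ω ∂P, |W ω| ≤ 1) :
    ∫ ω, W ω * f (X N j ω) ∂P = ∫ ω, W ω * prediction P hX J f j N ω ∂P := by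
  have hGF := sigmaPastExcept_le_pastFiltration (J := J) hX N j
  have hG := hGF.trans ((pastFiltration hX J).le N)
  have hint : ∀ k, Integrable (fun ω => f (X k j ω)) P :=
    fun k => integrable_comp_of_abs_le (hX _ _) hf hfb
  calc ∫ ω, W ω * f (X N j ω) ∂P
      = ∫ ω, W ω * P[fun ω => f (X N j ω)|sigmaPastExcept X J N j] ω ∂P :=
        (integral_mul_condExp hG hW hWb (hint N)).symm
    _ = ∫ ω, W ω * P[fun ω => f (X (N + 1) j ω)|sigmaPastExcept X J N j] ω ∂P :=
        integral_congr_ae <|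
          (EventuallyEq.refl _ W).mul (condExp_sigmaPastExcept_ae_eq hX hpcid hj hf hfb N).symm
    _ = ∫ ω, W ω * f (X (N + 1) j ω) ∂P := integral_mul_condExp hG hW hWb (hint (N + 1))
    _ = ∫ ω, W ω * prediction P hX J f j N ω ∂P :=
        (integral_mul_condExp ((pastFiltration hX J).le N) (hW.mono hGF) hWb (hint _)).symm

end Prediction

section Products

variable {P : Measure Ω} [IsFiniteMeasure P] {κ : Type*} {r : κ → ℕ} {c : κ → I}
  {f : κ → E → ℝ}

theorem abs_integral_mul_prod_sub_le [DecidableEq κ] (hX : ∀ n i, Measurable (X n i))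
    (hpcid : IsPartiallyCID X P) (hinj : Function.Injective fun a => (r a, c a))
    (hc : ∀ a, c a ∈ J) (hf : ∀ a, Measurable (f a)) (hfb : ∀ a x, |f a x| ≤ 1) (A : Finset κ)
    {n : ℕ} (hr : ∀ a ∈ A, n < r a) {Z : Ω → ℝ}
    (hZ : StronglyMeasurable[pastFiltration hX J n] Z) (hZb : ∀ᵐ ω ∂P, |Z ω| ≤ 1) :
    |∫ ω, Z ω * ∏ a ∈ A, f a (X (r a) (c a) ω) ∂P -
        ∫ ω, Z ω * ∏ a ∈ A, prediction P hX J (f a) (c a) n ω ∂P| ≤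
      ∑ a ∈ A, ∫ ω, |prediction P hX J (f a) (c a) (r a) ω -
        prediction P hX J (f a) (c a) n ω| ∂P := by
  induction A using Finset.induction_on_max_value r generalizing Z with
  | empty => simp
  | insert a₀ A ha₀ hmax ih =>
  set M : κ → ℕ → Ω → ℝ := fun a k => prediction P hX J (f a) (c a) k
  set W : Ω → ℝ := fun ω => Z ω * ∏ a ∈ A, f a (X (r a) (c a) ω) with hW
  have hn : n < r a₀ := hr a₀ (Finset.mem_insert_self a₀ A)
  have hWm : StronglyMeasurable[sigmaPastExcept X J (r a₀) (c a₀)] W :=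
    ((hZ.measurable.mono (pastFiltration_le_sigmaPastExcept hn _) le_rfl).mul
      (measurable_prod_sigmaPastExcept hinj hc hf ha₀ hmax)).stronglyMeasurable
  have hWb : ∀ᵐ ω ∂P, |W ω| ≤ 1 := by
    filter_upwards [hZb] with ω hω
    rw [hW, abs_mul]
    exact mul_le_one₀ hω (abs_nonneg _) (Finset.abs_prod_le_one fun a _ => hfb a _)
  have hpeel : ∫ ω, W ω * f a₀ (X (r a₀) (c a₀) ω) ∂P = ∫ ω, W ω * M a₀ (r a₀) ω ∂P :=
    integral_mul_eq_integral_mul_prediction hX hpcid (hc a₀) (hf a₀) (hfb a₀) hWm hWb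
  have hstep : |∫ ω, W ω * M a₀ (r a₀) ω ∂P - ∫ ω, W ω * M a₀ n ω ∂P| ≤
      ∫ ω, |M a₀ (r a₀) ω - M a₀ n ω| ∂P :=
    abs_integral_mul_sub_integral_mul_le
      (hWm.mono ((sigmaPastExcept_le_pastFiltration hX _ _).trans
        ((pastFiltration hX J).le _))).aestronglyMeasurable
      hWb integrable_condExp integrable_condExp
  have hZM : ∀ᵐ ω ∂P, |Z ω * M a₀ n ω| ≤ 1 := by
    filter_upwards [hZb, abs_prediction_le_one (hfb a₀) n] with ω hZω hMω
    rw [abs_mul]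
    exact mul_le_one₀ hZω (abs_nonneg _) hMω
  have hIH := ih (fun a ha => hr a (Finset.mem_insert_of_mem ha))
    (hZ.mul stronglyMeasurable_condExp) hZM
  have hsplit_f : ∫ ω, Z ω * ∏ a ∈ insert a₀ A, f a (X (r a) (c a) ω) ∂P =
      ∫ ω, W ω * f a₀ (X (r a₀) (c a₀) ω) ∂P := by
    simp_rw [Finset.prod_insert ha₀, hW]
    congr 1 with ω
    ring
  have hregroup : ∫ ω, W ω * M a₀ n ω ∂P =
      ∫ ω, Z ω * M a₀ n ω * ∏ a ∈ A, f a (X (r a) (c a) ω) ∂P := by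
    congr 1 with ω
    ring
  rw [Finset.sum_insert ha₀, hsplit_f, hpeel]
  simp_rw [Finset.prod_insert ha₀, ← mul_assoc]
  calc _ ≤ |∫ ω, W ω * M a₀ (r a₀) ω ∂P - ∫ ω, W ω * M a₀ n ω ∂P| +
        |∫ ω, W ω * M a₀ n ω ∂P - ∫ ω, Z ω * M a₀ n ω * ∏ a ∈ A, M a n ω ∂P| :=
        abs_sub_le _ _ _
    _ ≤ _ := add_le_add hstep (hregroup ▸ hIH)

theorem tendsto_integral_prod_prediction [Fintype κ] (hX : ∀ n i, Measurable (X n i))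
    (hstat : P.map (fun ω (p : ℕ × I) => X (p.1 + 1) p.2 ω) = P.map (fun ω p => X p.1 p.2 ω))
    (hpcid : IsPartiallyCID X P) (hinj : Function.Injective fun a => (r a, c a))
    (hc : ∀ a, c a ∈ J) (hf : ∀ a, Measurable (f a)) (hfb : ∀ a x, |f a x| ≤ 1) :
    Tendsto (fun n => ∫ ω, ∏ a, prediction P hX J (f a) (c a) n ω ∂P) atTop
      (𝓝 (∫ ω, ∏ a, f a (X (r a) (c a) ω) ∂P)) := by
  classical
  have hbound : ∀ n, |∫ ω, ∏ a, prediction P hX J (f a) (c a) n ω ∂P -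
      ∫ ω, ∏ a, f a (X (r a) (c a) ω) ∂P| ≤
      ∑ a, ∫ ω, |prediction P hX J (f a) (c a) (r a + (n + 1)) ω -
        prediction P hX J (f a) (c a) n ω| ∂P := by
    intro n
    have hinj' : Function.Injective fun a => (r a + (n + 1), c a) := fun a b h => by
      simp only [Prod.mk.injEq, Nat.add_right_cancel_iff] at h
      exact hinj (Prod.ext h.1 h.2)
    have := abs_integral_mul_prod_sub_le hX hpcid hinj' hc hf hfb Finset.univ
      (n := n) (fun a _ => by omega) (Z := fun _ => 1) stronglyMeasurable_const
      (.of_forall fun _ => by simp)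
    simp only [one_mul, integral_prod_shift_eq hX hstat hf] at this
    rwa [abs_sub_comm] at this
  have hδ : Tendsto (fun n => ∑ a, ∫ ω, |prediction P hX J (f a) (c a) (r a + (n + 1)) ω -
      prediction P hX J (f a) (c a) n ω| ∂P) atTop (𝓝 0) := by
    simpa using tendsto_finsetSum Finset.univ fun a _ =>
      (martingale_prediction hX hpcid (hc a) (hf a) (hfb a)).tendsto_integral_abs_sub
        (abs_prediction_le_one (hfb a))
        (tendsto_atTop_mono (fun n => show n ≤ r a + (n + 1) by omega) tendsto_id)
  exact tendsto_iff_norm_sub_tendsto_zero.2 <|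
    squeeze_zero (fun _ => norm_nonneg _) (fun n => (Real.norm_eq_abs _).trans_le (hbound n)) hδ

theorem map_eq_of_injective [Fintype κ] [IsProbabilityMeasure P]
    (hX : ∀ n i, Measurable (X n i))
    (hstat : P.map (fun ω (p : ℕ × I) => X (p.1 + 1) p.2 ω) = P.map (fun ω p => X p.1 p.2 ω))
    (hpcid : IsPartiallyCID X P) {r r' : κ → ℕ} (hinj : Function.Injective fun a => (r a, c a))
    (hinj' : Function.Injective fun a => (r' a, c a)) :
    P.map (fun ω a => X (r a) (c a) ω) = P.map (fun ω a => X (r' a) (c a) ω) := by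
  classical
  have hmap : ∀ ρ : κ → ℕ, Measurable fun ω a => X (ρ a) (c a) ω :=
    fun ρ => measurable_pi_lambda _ fun _ => hX _ _
  have hc : ∀ a, c a ∈ Finset.univ.image c :=
    fun a => Finset.mem_image_of_mem c (Finset.mem_univ a)
  refine Measure.ext_of_integral_prod_eq fun f hf hfb => ?_
  have hΦ : Measurable fun y : κ → E => ∏ a, f a (y a) :=
    Finset.measurable_prod _ fun a _ => (hf a).comp (measurable_pi_apply a)
  rw [integral_map (hmap r).aemeasurable hΦ.aestronglyMeasurable,
    integral_map (hmap r').aemeasurable hΦ.aestronglyMeasurable]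
  exact tendsto_nhds_unique (tendsto_integral_prod_prediction hX hstat hpcid hinj hc hf hfb)
    (tendsto_integral_prod_prediction hX hstat hpcid hinj' hc hf hfb)

end Products

end PartiallyCID

theorem stationary_pcid_is_partially_exchangeable_general
    {Ω E I : Type*} {mΩ : MeasurableSpace Ω} [MeasurableSpace E]
    (P : Measure Ω) [IsProbabilityMeasure P]
    (X : ℕ → I → Ω → E) (hX : ∀ n i, Measurable (X n i))
    (hstat : Measure.map (fun ω => fun p : ℕ × I => X (p.1 + 1) p.2 ω) P =
      Measure.map (fun ω => fun p : ℕ × I => X p.1 p.2 ω) P)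
    (hpcid : ∀ (J : Finset I) (j : I), j ∈ J → ∀ n : ℕ,
      Measure.map (fun ω =>
        ((fun q : Fin n × J => X q.1 (q.2 : I) ω),
         (fun i : {i : I // i ∈ J ∧ i ≠ j} => X n i.1 ω),
         X (n + 1) j ω)) P =
      Measure.map (fun ω =>
        ((fun q : Fin n × J => X q.1 (q.2 : I) ω),
         (fun i : {i : I // i ∈ J ∧ i ≠ j} => X n i.1 ω),
         X n j ω)) P)
    (π : I → Equiv.Perm ℕ) :
    Measure.map (fun ω => fun p : ℕ × I => X (π p.2 p.1) p.2 ω) P =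
      Measure.map (fun ω => fun p : ℕ × I => X p.1 p.2 ω) P := by
  have harray : ∀ ρ : ℕ × I → ℕ, Measurable fun ω (p : ℕ × I) => X (ρ p) p.2 ω :=
    fun ρ => measurable_pi_lambda _ fun _ => hX _ _
  refine IsProjectiveLimit.unique (P := fun s => (P.map fun ω p => X p.1 p.2 ω).map s.restrict)
    (fun s => ?_) (fun _ => rfl)
  dsimp only
  rw [Measure.map_map s.measurable_restrict (harray _),
    Measure.map_map s.measurable_restrict (harray Prod.fst)]
  refine PartiallyCID.map_eq_of_injective hX hstat
    (PartiallyCID.isPartiallyCID_of_map_eq hX hpcid) (c := fun a : s => a.1.2)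
    (fun a b hab => ?_) (fun a b hab => Subtype.ext hab)
  obtain ⟨hrow, hcol⟩ := Prod.mk.inj hab
  exact Subtype.ext (Prod.ext ((π _).injective (hcol ▸ hrow)) hcol)

/-- A stationary process `(X_n^I)` which is partially c.i.d. in the distributional sense,
i.e. for every finite `J ⊆ I`, `j ∈ J` and `n ≥ 0`,
`(X_{1:n}^J, X_{n+1}^{J\{j}}, X_{n+1,j}) =_d (X_{1:n}^J, X_{n+1}^{J\{j}}, X_{n+2,j})`,
is partially exchangeable.  (Indices are `0`-based: row `n` of the Lean array is the
`(n+1)`-st observation of the paper.) -/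
theorem stationary_pcid_is_partially_exchangeable
    {Ω E I : Type*} {mΩ : MeasurableSpace Ω} [MeasurableSpace E]
    [TopologicalSpace E] [PolishSpace E] [BorelSpace E] [Countable I]
    (P : Measure Ω) [IsProbabilityMeasure P]
    (X : ℕ → I → Ω → E) (hX : ∀ n i, Measurable (X n i))
    (hstat : Measure.map (fun ω => fun p : ℕ × I => X (p.1 + 1) p.2 ω) P =
      Measure.map (fun ω => fun p : ℕ × I => X p.1 p.2 ω) P)
    (hpcid : ∀ (J : Finset I) (j : I), j ∈ J → ∀ n : ℕ,
      Measure.map (fun ω =>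
        ((fun q : Fin n × J => X q.1 (q.2 : I) ω),
         (fun i : {i : I // i ∈ J ∧ i ≠ j} => X n i.1 ω),
         X (n + 1) j ω)) P =
      Measure.map (fun ω =>
        ((fun q : Fin n × J => X q.1 (q.2 : I) ω),
         (fun i : {i : I // i ∈ J ∧ i ≠ j} => X n i.1 ω),
         X n j ω)) P)
    (π : I → Equiv.Perm ℕ) (hπ : ∀ i, ∃ N, ∀ n, N ≤ n → π i n = n) :
    Measure.map (fun ω => fun p : ℕ × I => X (π p.2 p.1) p.2 ω) P =
      Measure.map (fun ω => fun p : ℕ × I => X p.1 p.2 ω) P :=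
  stationary_pcid_is_partially_exchangeable_general (mΩ := mΩ) P X hX hstat hpcid π
end

section
/- For a process (X_n^I) adapted to a filtration G, the following are equivalent: (i) (X_n^I) is partially G-c.i.d.; (ii) for every j ∈ I and bounded measurable f, the process (E[f(X_{n+1,j}) | G_n^j])_{n≥0} is a martingale with respect to the filtration G^j = (G_n^j); (iii) for every n ≥ 0, j ∈ I, and every finite G-stopping time τ with τ ≥ n, (X_{n+1}^{I\{j}}, X_{τ+1,j}) =_d (X_{n+1}^{I\{j}}, X_{n+1,j}). -/
/-!
All three conditions say that, given `G_n^j`, the conditional law of `X_{n+k,j}` does not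
depend on `k`, i.e. `P(t ∩ {X_{n+k,j} ∈ B}) = P(t ∩ {X_{n,j} ∈ B})` for every
`t ∈ G_n^j`. (i) ⇔ (ii) is the tower property. For (i) ⇒ (iii), the one-step identity on the
events `t ∩ {τ > M} ∈ G_M^j` telescopes along the bounded stopping times `τ ∧ M`, and `M → ∞`
gives it for `τ`; the joint law in (iii) is the law of `X_{τ,j}` on the events
`{X_n^{I∖j} ∈ S} ∈ G_n^j`. For (iii) ⇒ (i), the stopping time equal to `n + k` on `A ∈ G_n` and
to `n` off `A` turns (iii) into the identity on the events `A ∩ {X_n^{I∖j} ∈ S}`, a π-system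
generating `G_n^j`.
-/

open MeasureTheory ProbabilityTheory Filter
open scoped ENNReal NNReal Topology

/-- The enlarged σ-algebra `G_n^j = G_n ∨ σ(X_{n+1,i} : i ≠ j)`.  With the `0`-based
convention `X n i` is the `(n+1)`-st observation of column `i`, so the concomitant
variables of row `n` (paper row `n+1`) are `X n i`, `i ≠ j`. -/
def enlargedSigma {Ω E I : Type*} {mΩ : MeasurableSpace Ω} [MeasurableSpace E]
    (ℱ : MeasureTheory.Filtration ℕ mΩ) (X : ℕ → I → Ω → E) (j : I) (n : ℕ) :
    MeasurableSpace Ω :=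
  ℱ n ⊔ ⨆ (i : I) (_ : i ≠ j), MeasurableSpace.comap (X n i) inferInstance

section

open Set

variable {Ω E : Type*} {m mΩ : MeasurableSpace Ω} [MeasurableSpace E]

theorem IsPiSystem.image2_inter {C D : Set (Set Ω)} (hC : IsPiSystem C) (hD : IsPiSystem D) :
    IsPiSystem (image2 (· ∩ ·) C D) := by
  rintro _ ⟨s₁, hs₁, t₁, ht₁, rfl⟩ _ ⟨s₂, hs₂, t₂, ht₂, rfl⟩ hne
  rw [inter_inter_inter_comm] at hne ⊢
  exact ⟨_, hC _ hs₁ _ hs₂ hne.left, _, hD _ ht₁ _ ht₂ hne.right, rfl⟩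

theorem MeasurableSpace.sup_eq_generateFrom_image2_inter (m₁ m₂ : MeasurableSpace Ω) :
    m₁ ⊔ m₂ =
      generateFrom (image2 (· ∩ ·) {s | MeasurableSet[m₁] s} {s | MeasurableSet[m₂] s}) := by
  refine le_antisymm (sup_le ?_ ?_) (generateFrom_le ?_)
  · exact fun s hs => measurableSet_generateFrom ⟨s, hs, univ, MeasurableSet.univ, inter_univ s⟩
  · exact fun s hs => measurableSet_generateFrom ⟨univ, MeasurableSet.univ, s, hs, univ_inter s⟩
  · rintro _ ⟨s, hs, t, ht, rfl⟩
    exact (le_sup_left (a := m₁) _ hs).inter (le_sup_right (a := m₁) _ ht)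

theorem measurable_process_apply {Z : ℕ → Ω → E} (hZ : ∀ k, Measurable (Z k)) {σ : Ω → ℕ}
    (hσ : Measurable σ) : Measurable fun ω => Z (σ ω) ω :=
  (measurable_from_prod_countable_left (f := fun p : Ω × ℕ => Z p.2 p.1) hZ).comp
    (measurable_id.prodMk hσ)

theorem MeasureTheory.IsStoppingTime.measurable_of_coe {𝒢 : Filtration ℕ mΩ} {τ : Ω → ℕ}
    (hτ : IsStoppingTime 𝒢 fun ω => (τ ω : WithTop ℕ)) : Measurable τ :=
  measurable_to_countable' fun k => 𝒢.le k {ω | τ ω = k} <| by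
    simpa only [Nat.cast_withTop, WithTop.coe_inj] using hτ.measurableSet_eq k

def CondIdentDistrib (m : MeasurableSpace Ω) (P : Measure[mΩ] Ω) (Z₁ Z₂ : Ω → E) : Prop :=
  ∀ ⦃t : Set Ω⦄, MeasurableSet[m] t → ∀ ⦃B : Set E⦄, MeasurableSet B →
    P (t ∩ Z₁ ⁻¹' B) = P (t ∩ Z₂ ⁻¹' B)

section CondIdentDistrib

variable {P : Measure Ω} {Z₁ Z₂ : Ω → E}

theorem CondIdentDistrib.mono {m' : MeasurableSpace Ω} (h : CondIdentDistrib m P Z₁ Z₂)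
    (hm : m' ≤ m) : CondIdentDistrib m' P Z₁ Z₂ :=
  fun _ ht => h (hm _ ht)

theorem map_restrict_apply_eq {Z : Ω → E} (hZ : Measurable Z) (t : Set Ω) {B : Set E}
    (hB : MeasurableSet B) : (P.restrict t).map Z B = P (t ∩ Z ⁻¹' B) := by
  rw [Measure.map_apply hZ hB, Measure.restrict_apply (hZ hB), inter_comm]

theorem condIdentDistrib_iff_condExp_ae_eq [IsFiniteMeasure P] (hm : m ≤ mΩ)
    (hZ₁ : Measurable Z₁) (hZ₂ : Measurable Z₂) :
    CondIdentDistrib m P Z₁ Z₂ ↔ ∀ f : E → ℝ, Measurable f → (∃ C, ∀ x, |f x| ≤ C) →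
      P[fun ω => f (Z₁ ω) | m] =ᵐ[P] P[fun ω => f (Z₂ ω) | m] := by
  have hint : ∀ {Z : Ω → E}, Measurable Z → ∀ {f : E → ℝ}, Measurable f →
      (∃ C, ∀ x, |f x| ≤ C) → Integrable (fun ω => f (Z ω)) P :=
    fun hZ _ hf ⟨C, hC⟩ => Integrable.of_bound (hf.comp hZ).aestronglyMeasurable C
      (ae_of_all _ fun ω => hC _)
  constructor
  · intro h f hf hbd
    refine (ae_eq_condExp_of_forall_setIntegral_eq hm (hint hZ₁ hf hbd)
      (fun _ _ _ => integrable_condExp.integrableOn) (fun t ht _ => ?_)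
      stronglyMeasurable_condExp.aestronglyMeasurable).symm
    have hlaw : (P.restrict t).map Z₁ = (P.restrict t).map Z₂ := Measure.ext fun B hB => by
      rw [map_restrict_apply_eq hZ₁ t hB, map_restrict_apply_eq hZ₂ t hB, h ht hB]
    rw [setIntegral_condExp hm (hint hZ₂ hf hbd) ht,
      ← integral_map hZ₂.aemeasurable hf.aestronglyMeasurable, ← hlaw,
      integral_map hZ₁.aemeasurable hf.aestronglyMeasurable]
  · intro h t ht B hB
    have hind : ∀ {Z : Ω → E}, Measurable Z →
        ∫ ω in t, B.indicator 1 (Z ω) ∂P = P.real (t ∩ Z ⁻¹' B) := fun hZ => by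
      rw [← integral_map hZ.aemeasurable (measurable_one.indicator hB).aestronglyMeasurable,
        integral_indicator_one hB, measureReal_def, map_restrict_apply_eq hZ t hB, measureReal_def]
    have hbd : ∃ C, ∀ x, |B.indicator (1 : E → ℝ) x| ≤ C :=
      ⟨1, fun x => by by_cases hx : x ∈ B <;> simp [hx]⟩
    have hreal : P.real (t ∩ Z₁ ⁻¹' B) = P.real (t ∩ Z₂ ⁻¹' B) := by
      rw [← hind hZ₁, ← hind hZ₂,
        ← setIntegral_condExp hm (hint hZ₁ (measurable_one.indicator hB) hbd) ht,
        ← setIntegral_condExp hm (hint hZ₂ (measurable_one.indicator hB) hbd) ht]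
      exact setIntegral_congr_ae (hm _ ht)
        ((h _ (measurable_one.indicator hB) hbd).mono fun ω hω _ => hω)
    exact (measureReal_eq_measureReal_iff).mp hreal

theorem condIdentDistrib_of_isPiSystem [IsFiniteMeasure P] {C : Set (Set Ω)} (hm : m ≤ mΩ)
    (hgen : m = MeasurableSpace.generateFrom C) (hC : IsPiSystem C) (huniv : univ ∈ C)
    (hZ₁ : Measurable Z₁) (hZ₂ : Measurable Z₂)
    (h : ∀ t ∈ C, ∀ ⦃B : Set E⦄, MeasurableSet B → P (t ∩ Z₁ ⁻¹' B) = P (t ∩ Z₂ ⁻¹' B)) :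
    CondIdentDistrib m P Z₁ Z₂ := by
  intro t ht B hB
  have hrestrict : ∀ {Z : Ω → E}, Measurable Z → ∀ s, P.restrict (Z ⁻¹' B) s = P (s ∩ Z ⁻¹' B) :=
    fun hZ _ => Measure.restrict_apply' (hZ hB)
  have := ext_on_measurableSpace_of_generate_finite mΩ (μ := P.restrict (Z₁ ⁻¹' B))
    (ν := P.restrict (Z₂ ⁻¹' B)) C
    (fun s hs => by rw [hrestrict hZ₁, hrestrict hZ₂]; exact h s hs hB) hm hgen hC
    (by rw [hrestrict hZ₁, hrestrict hZ₂]; exact h univ huniv hB) ht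
  rwa [hrestrict hZ₁, hrestrict hZ₂] at this

theorem map_prodMk_eq_iff_condIdentDistrib {F : Type*} [MeasurableSpace F] [IsFiniteMeasure P]
    {Y : Ω → F} (hY : Measurable Y) (hZ₁ : Measurable Z₁) (hZ₂ : Measurable Z₂) :
    P.map (fun ω => (Y ω, Z₁ ω)) = P.map (fun ω => (Y ω, Z₂ ω)) ↔
      CondIdentDistrib (MeasurableSpace.comap Y ‹_›) P Z₁ Z₂ := by
  have hrect : ∀ {Z : Ω → E}, Measurable Z → ∀ {S : Set F} {B : Set E}, MeasurableSet S →
      MeasurableSet B → P.map (fun ω => (Y ω, Z ω)) (S ×ˢ B) = P (Y ⁻¹' S ∩ Z ⁻¹' B) :=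
    fun hZ _ _ hS hB => by rw [Measure.map_apply (hY.prodMk hZ) (hS.prod hB), mk_preimage_prod]
  constructor
  · rintro h _ ⟨S, hS, rfl⟩ B hB
    rw [← hrect hZ₁ hS hB, ← hrect hZ₂ hS hB, h]
  · intro h
    refine ext_of_generate_finite _ generateFrom_prod.symm isPiSystem_prod ?_ ?_
    · rintro _ ⟨S, hS, B, hB, rfl⟩
      rw [hrect hZ₁ hS hB, hrect hZ₂ hS hB, h ⟨S, hS, rfl⟩ hB]
    · rw [Measure.map_apply (hY.prodMk hZ₁) MeasurableSet.univ,
        Measure.map_apply (hY.prodMk hZ₂) MeasurableSet.univ, preimage_univ, preimage_univ]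

theorem measure_inter_preimage_eq_of_piecewise [IsFiniteMeasure P] {A : Set Ω}
    [DecidablePred (· ∈ A)] (hA : MeasurableSet A)
    (h : CondIdentDistrib m P (A.piecewise Z₁ Z₂) Z₂) {t : Set Ω} (ht : MeasurableSet[m] t)
    {B : Set E} (hB : MeasurableSet B) : P (A ∩ t ∩ Z₁ ⁻¹' B) = P (A ∩ t ∩ Z₂ ⁻¹' B) := by
  have hsplit := h ht hB
  rw [← measure_inter_add_sdiff (t ∩ _) hA, ← measure_inter_add_sdiff (t ∩ Z₂ ⁻¹' B) hA,
    piecewise_preimage, inter_assoc, inter_assoc t, ite_inter_self, inter_sdiff_assoc,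
    inter_sdiff_assoc t (Z₂ ⁻¹' B), ite_sdiff_self] at hsplit
  have hcancel := (ENNReal.add_left_inj (measure_ne_top P _)).mp hsplit
  simpa only [inter_comm, inter_left_comm, inter_assoc] using hcancel

end CondIdentDistrib

section OptionalStopping

variable {P : Measure Ω} {𝒢 : Filtration ℕ mΩ} {Z : ℕ → Ω → E} {τ : Ω → ℕ}

theorem condIdentDistrib_stopped_min
    (hstep : ∀ k, CondIdentDistrib (𝒢 k) P (Z (k + 1)) (Z k))
    (hτ : IsStoppingTime 𝒢 fun ω => (τ ω : WithTop ℕ)) {n : ℕ} (hn : ∀ ω, n ≤ τ ω) {M : ℕ}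
    (hM : n ≤ M) : CondIdentDistrib (𝒢 n) P (fun ω => Z (min (τ ω) M) ω) (Z n) := by
  induction M, hM using Nat.le_induction with
  | base =>
    have hstopped : (fun ω => Z (min (τ ω) n) ω) = Z n :=
      funext fun ω => by rw [min_eq_right (hn ω)]
    exact hstopped ▸ fun _ _ _ _ => rfl
  | succ M hM ih =>
    intro t ht B hB
    set s := {ω | M < τ ω}
    have hs : MeasurableSet[𝒢 M] s := by
      simpa only [Nat.cast_withTop, WithTop.coe_lt_coe] using hτ.measurableSet_gt M
    have hts : MeasurableSet[𝒢 M] (t ∩ s) := (𝒢.mono hM _ ht).inter hs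
    have hsplit : ∀ W : Set Ω, P (t ∩ W) = P (t ∩ s ∩ W) + P (t \ s ∩ W) := fun W => by
      rw [← measure_inter_add_sdiff (t ∩ W) (𝒢.le M _ hs), inter_right_comm,
        inter_sdiff_right_comm]
    have hon : EqOn (fun ω => Z (min (τ ω) (M + 1)) ω) (Z (M + 1)) (t ∩ s) :=
      fun ω hω => by simp only [min_eq_right (show M + 1 ≤ τ ω from hω.2)]
    have hon' : EqOn (fun ω => Z (min (τ ω) M) ω) (Z M) (t ∩ s) :=
      fun ω hω => by simp only [min_eq_right (show M < τ ω from hω.2).le]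
    have hoff : EqOn (fun ω => Z (min (τ ω) (M + 1)) ω) (fun ω => Z (min (τ ω) M) ω) (t \ s) :=
      fun ω hω => by
        have hτM : τ ω ≤ M := not_lt.mp hω.2
        simp only [min_eq_left hτM, min_eq_left (hτM.trans M.le_succ)]
    calc P (t ∩ (fun ω => Z (min (τ ω) (M + 1)) ω) ⁻¹' B)
        = P (t ∩ s ∩ Z (M + 1) ⁻¹' B) + P (t \ s ∩ (fun ω => Z (min (τ ω) M) ω) ⁻¹' B) := by
          rw [hsplit, hon.inter_preimage_eq, hoff.inter_preimage_eq]
      _ = P (t ∩ s ∩ Z M ⁻¹' B) + P (t \ s ∩ (fun ω => Z (min (τ ω) M) ω) ⁻¹' B) := by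
          rw [hstep M hts hB]
      _ = P (t ∩ Z n ⁻¹' B) := by
          rw [← hon'.inter_preimage_eq, ← hsplit, ih ht hB]

theorem condIdentDistrib_stopped [IsFiniteMeasure P] (hZ : ∀ k, Measurable (Z k))
    (hstep : ∀ k, CondIdentDistrib (𝒢 k) P (Z (k + 1)) (Z k))
    (hτ : IsStoppingTime 𝒢 fun ω => (τ ω : WithTop ℕ)) {n : ℕ} (hn : ∀ ω, n ≤ τ ω) :
    CondIdentDistrib (𝒢 n) P (fun ω => Z (τ ω) ω) (Z n) := by
  intro t ht B hB
  have hτm := hτ.measurable_of_coe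
  have hlim : Tendsto (fun M => P (t ∩ (fun ω => Z (min (τ ω) M) ω) ⁻¹' B)) atTop
      (𝓝 (P (t ∩ (fun ω => Z (τ ω) ω) ⁻¹' B))) := by
    refine tendsto_measure_of_tendsto_indicator_of_isFiniteMeasure atTop P
      (fun M => (𝒢.le n _ ht).inter
        (measurable_process_apply hZ ((measurable_of_countable fun k => min k M).comp hτm) hB))
      fun ω => ?_
    filter_upwards [eventually_ge_atTop (τ ω)] with M hM
    simp only [mem_inter_iff, mem_preimage, min_eq_left hM]
  refine tendsto_nhds_unique hlim (tendsto_const_nhds.congr' ?_)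
  filter_upwards [eventually_ge_atTop n] with M hM
  exact (condIdentDistrib_stopped_min hstep hτ hn hM ht hB).symm

end OptionalStopping

theorem condExp_add_ae_eq_iff_condExp_condExp_succ {P : Measure Ω} [IsFiniteMeasure P]
    {𝒢 : Filtration ℕ mΩ} (V : ℕ → Ω → ℝ) :
    (∀ n k, P[V (n + k) | 𝒢 n] =ᵐ[P] P[V n | 𝒢 n]) ↔
      ∀ n, P[P[V (n + 1) | 𝒢 (n + 1)] | 𝒢 n] =ᵐ[P] P[V n | 𝒢 n] := by
  have htower : ∀ n (g : Ω → ℝ), P[P[g | 𝒢 (n + 1)] | 𝒢 n] =ᵐ[P] P[g | 𝒢 n] :=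
    fun n _ => condExp_condExp_of_le (𝒢.mono n.le_succ) (𝒢.le (n + 1))
  refine ⟨fun h n => (htower n _).trans (h n 1), fun h n k => ?_⟩
  induction k generalizing n with
  | zero => rfl
  | succ k ih =>
    calc P[V (n + (k + 1)) | 𝒢 n] = P[V (n + 1 + k) | 𝒢 n] := by
          rw [Nat.add_assoc, Nat.add_comm 1 k]
      _ =ᵐ[P] P[P[V (n + 1 + k) | 𝒢 (n + 1)] | 𝒢 n] := (htower n _).symm
      _ =ᵐ[P] P[P[V (n + 1) | 𝒢 (n + 1)] | 𝒢 n] := condExp_congr_ae (ih (n + 1))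
      _ =ᵐ[P] P[V n | 𝒢 n] := h n

section EnlargedFiltration

variable {I : Type*} {P : Measure Ω} {ℱ : Filtration ℕ mΩ} {X : ℕ → I → Ω → E}

def concomitants (X : ℕ → I → Ω → E) (j : I) (n : ℕ) (ω : Ω) : {i : I // i ≠ j} → E :=
  fun i => X n i.1 ω

theorem measurable_of_adapted_succ (hadapt : ∀ n i, Measurable[ℱ (n + 1)] (X n i)) (n : ℕ) (i : I) :
    Measurable (X n i) :=
  (hadapt n i).mono (ℱ.le _) le_rfl

theorem measurable_concomitants (hadapt : ∀ n i, Measurable[ℱ (n + 1)] (X n i)) (j : I) (n : ℕ) :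
    Measurable (concomitants X j n) :=
  measurable_pi_lambda _ fun i => measurable_of_adapted_succ hadapt n i.1

theorem enlargedSigma_eq_sup_comap (j : I) (n : ℕ) :
    enlargedSigma ℱ X j n = ℱ n ⊔ .comap (concomitants X j n) MeasurableSpace.pi := by
  rw [enlargedSigma, MeasurableSpace.pi, MeasurableSpace.comap_iSup, iSup_subtype']
  congr 1
  refine iSup_congr fun i => ?_
  rw [MeasurableSpace.comap_comp]
  rfl

def enlargedFiltration (hadapt : ∀ n i, Measurable[ℱ (n + 1)] (X n i)) (j : I) :
    Filtration ℕ mΩ where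
  seq := enlargedSigma ℱ X j
  mono' := monotone_nat_of_le_succ fun n =>
    sup_le ((ℱ.mono n.le_succ).trans le_sup_left)
      (iSup₂_le fun i _ => (measurable_iff_comap_le.mp (hadapt n i)).trans le_sup_left)
  le' n := sup_le (ℱ.le n) (iSup₂_le fun i _ =>
    measurable_iff_comap_le.mp (measurable_of_adapted_succ hadapt n i))

theorem enlargedSigma_le (hadapt : ∀ n i, Measurable[ℱ (n + 1)] (X n i)) (j : I) (n : ℕ) :
    enlargedSigma ℱ X j n ≤ mΩ :=
  (enlargedFiltration hadapt j).le n

theorem pcid_iff_condIdentDistrib [IsFiniteMeasure P]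
    (hadapt : ∀ n i, Measurable[ℱ (n + 1)] (X n i)) :
    (∀ (j : I) (n k : ℕ) (f : E → ℝ), Measurable f → (∃ C, ∀ x, |f x| ≤ C) →
        P[(fun ω => f (X (n + k) j ω)) | enlargedSigma ℱ X j n]
          =ᵐ[P] P[(fun ω => f (X n j ω)) | enlargedSigma ℱ X j n]) ↔
      ∀ (j : I) (n k : ℕ), CondIdentDistrib (enlargedSigma ℱ X j n) P (X (n + k) j) (X n j) :=
  forall_congr' fun j => forall_congr' fun n => forall_congr' fun _ =>
    (condIdentDistrib_iff_condExp_ae_eq (enlargedSigma_le hadapt j n)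
      (measurable_of_adapted_succ hadapt _ j) (measurable_of_adapted_succ hadapt n j)).symm

theorem map_concomitants_stopped_eq [IsFiniteMeasure P]
    (hadapt : ∀ n i, Measurable[ℱ (n + 1)] (X n i))
    (hcid : ∀ (j : I) (n k : ℕ), CondIdentDistrib (enlargedSigma ℱ X j n) P (X (n + k) j) (X n j))
    (n : ℕ) (j : I) {τ : Ω → ℕ} (hτ : IsStoppingTime ℱ fun ω => (τ ω : WithTop ℕ))
    (hn : ∀ ω, n ≤ τ ω) :
    P.map (fun ω => (concomitants X j n ω, X (τ ω) j ω)) =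
      P.map (fun ω => (concomitants X j n ω, X n j ω)) := by
  have hX := measurable_of_adapted_succ hadapt
  have hτ' : IsStoppingTime (enlargedFiltration hadapt j) fun ω => (τ ω : WithTop ℕ) :=
    fun k => le_sup_left (a := ℱ k) _ (hτ k)
  rw [map_prodMk_eq_iff_condIdentDistrib (measurable_concomitants hadapt j n)
    (measurable_process_apply (fun k => hX k j) hτ.measurable_of_coe) (hX n j)]
  exact (condIdentDistrib_stopped (fun k => hX k j) (fun k => hcid j k 1) hτ' hn).mono
    (le_sup_right.trans_eq (enlargedSigma_eq_sup_comap j n).symm)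

theorem condIdentDistrib_of_map_concomitants_stopped_eq [IsFiniteMeasure P]
    (hadapt : ∀ n i, Measurable[ℱ (n + 1)] (X n i))
    (hmap : ∀ (n : ℕ) (j : I) (τ : Ω → ℕ), IsStoppingTime ℱ (fun ω => (τ ω : WithTop ℕ)) →
      (∀ ω, n ≤ τ ω) → P.map (fun ω => (concomitants X j n ω, X (τ ω) j ω)) =
        P.map (fun ω => (concomitants X j n ω, X n j ω)))
    (j : I) (n k : ℕ) : CondIdentDistrib (enlargedSigma ℱ X j n) P (X (n + k) j) (X n j) := by
  classical
  have hX := measurable_of_adapted_succ hadapt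
  have hle := enlargedSigma_le hadapt j n
  rw [enlargedSigma_eq_sup_comap] at hle ⊢
  refine condIdentDistrib_of_isPiSystem hle
    (MeasurableSpace.sup_eq_generateFrom_image2_inter _ _)
    ((@MeasurableSpace.isPiSystem_measurableSet Ω (ℱ n)).image2_inter
      (@MeasurableSpace.isPiSystem_measurableSet Ω (.comap (concomitants X j n) .pi)))
    ⟨univ, @MeasurableSet.univ _ (ℱ n), univ, @MeasurableSet.univ _ (.comap _ _), univ_inter _⟩
    (hX _ j) (hX n j) ?_
  rintro _ ⟨A, hA, _, ⟨S, hS, rfl⟩, rfl⟩ B hB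
  set τ : Ω → ℕ := Aᶜ.piecewise (fun _ => n) fun _ => n + k
  have hτ : IsStoppingTime ℱ fun ω => (τ ω : WithTop ℕ) := by
    convert isStoppingTime_piecewise_const (𝒢 := ℱ) (Nat.le_add_right n k) hA.compl using 1
    funext ω
    by_cases hω : ω ∈ A <;> simp [τ, hω]
  have hXτ : (fun ω => X (τ ω) j ω) = A.piecewise (X (n + k) j) (X n j) := by
    funext ω
    by_cases hω : ω ∈ A <;> simp [τ, hω]
  have hlaw := hmap n j τ hτ fun ω => by by_cases hω : ω ∈ A <;> simp [τ, hω]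
  rw [map_prodMk_eq_iff_condIdentDistrib (measurable_concomitants hadapt j n)
    (measurable_process_apply (fun k => hX k j) hτ.measurable_of_coe) (hX n j), hXτ] at hlaw
  exact measure_inter_preimage_eq_of_piecewise (ℱ.le n _ hA) hlaw ⟨S, hS, rfl⟩ hB

end EnlargedFiltration

end

theorem pcid_equivalences_general
    {Ω E I : Type*} {mΩ : MeasurableSpace Ω} [MeasurableSpace E]
    (P : Measure Ω) [IsProbabilityMeasure P]
    (ℱ : Filtration ℕ mΩ)
    (X : ℕ → I → Ω → E) (hadapt : ∀ n i, Measurable[ℱ (n + 1)] (X n i)) :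
    ((∀ (j : I) (n k : ℕ) (f : E → ℝ), Measurable f → (∃ C, ∀ x, |f x| ≤ C) →
        P[(fun ω => f (X (n + k) j ω)) | enlargedSigma ℱ X j n]
          =ᵐ[P] P[(fun ω => f (X n j ω)) | enlargedSigma ℱ X j n]) ↔
      (∀ (j : I) (f : E → ℝ), Measurable f → (∃ C, ∀ x, |f x| ≤ C) → ∀ n : ℕ,
        P[(P[(fun ω => f (X (n + 1) j ω)) | enlargedSigma ℱ X j (n + 1)]) |
            enlargedSigma ℱ X j n]
          =ᵐ[P] P[(fun ω => f (X n j ω)) | enlargedSigma ℱ X j n])) ∧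
    ((∀ (j : I) (n k : ℕ) (f : E → ℝ), Measurable f → (∃ C, ∀ x, |f x| ≤ C) →
        P[(fun ω => f (X (n + k) j ω)) | enlargedSigma ℱ X j n]
          =ᵐ[P] P[(fun ω => f (X n j ω)) | enlargedSigma ℱ X j n]) ↔
      (∀ (n : ℕ) (j : I) (τ : Ω → ℕ), IsStoppingTime ℱ (fun ω => (τ ω : WithTop ℕ)) → (∀ ω, n ≤ τ ω) →
        Measure.map
            (fun ω => ((fun i : {i : I // i ≠ j} => X n i.1 ω), X (τ ω) j ω)) P =
          Measure.map
            (fun ω => ((fun i : {i : I // i ≠ j} => X n i.1 ω), X n j ω)) P)) := by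
  refine ⟨⟨fun h j f hf hbd => ?_, fun h j n k f hf hbd => ?_⟩, ?_⟩
  · exact (condExp_add_ae_eq_iff_condExp_condExp_succ (𝒢 := enlargedFiltration hadapt j)
      fun n ω => f (X n j ω)).mp (fun n k => h j n k f hf hbd)
  · exact (condExp_add_ae_eq_iff_condExp_condExp_succ (𝒢 := enlargedFiltration hadapt j)
      fun n ω => f (X n j ω)).mpr (h j f hf hbd) n k
  · rw [pcid_iff_condIdentDistrib hadapt]
    exact ⟨fun h n j τ hτ hn => map_concomitants_stopped_eq hadapt h n j hτ hn,
      condIdentDistrib_of_map_concomitants_stopped_eq hadapt⟩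

/-- Equivalent characterizations of partially c.i.d. processes:
(i) for every `j`, `(X_{n,j})` is c.i.d. with respect to the enlarged filtration `G^j`;
(ii) for every `j` and bounded measurable `f`, `(E[f(X_{n+1,j}) | G_n^j])_n` is a
martingale with respect to `G^j` (stated through the one-step tower property);
(iii) for every `n`, `j`, and finite stopping time `τ ≥ n`,
`(X_{n+1}^{I\{j}}, X_{τ+1,j}) =_d (X_{n+1}^{I\{j}}, X_{n+1,j})`. -/
theorem pcid_equivalences
    {Ω E I : Type*} {mΩ : MeasurableSpace Ω} [MeasurableSpace E]
    [TopologicalSpace E] [PolishSpace E] [BorelSpace E] [Countable I]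
    (P : Measure Ω) [IsProbabilityMeasure P]
    (ℱ : Filtration ℕ mΩ)
    (X : ℕ → I → Ω → E) (hadapt : ∀ n i, Measurable[ℱ (n + 1)] (X n i)) :
    ((∀ (j : I) (n k : ℕ) (f : E → ℝ), Measurable f → (∃ C, ∀ x, |f x| ≤ C) →
        P[(fun ω => f (X (n + k) j ω)) | enlargedSigma ℱ X j n]
          =ᵐ[P] P[(fun ω => f (X n j ω)) | enlargedSigma ℱ X j n]) ↔
      (∀ (j : I) (f : E → ℝ), Measurable f → (∃ C, ∀ x, |f x| ≤ C) → ∀ n : ℕ,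
        P[(P[(fun ω => f (X (n + 1) j ω)) | enlargedSigma ℱ X j (n + 1)]) |
            enlargedSigma ℱ X j n]
          =ᵐ[P] P[(fun ω => f (X n j ω)) | enlargedSigma ℱ X j n])) ∧
    ((∀ (j : I) (n k : ℕ) (f : E → ℝ), Measurable f → (∃ C, ∀ x, |f x| ≤ C) →
        P[(fun ω => f (X (n + k) j ω)) | enlargedSigma ℱ X j n]
          =ᵐ[P] P[(fun ω => f (X n j ω)) | enlargedSigma ℱ X j n]) ↔
      (∀ (n : ℕ) (j : I) (τ : Ω → ℕ), IsStoppingTime ℱ (fun ω => (τ ω : WithTop ℕ)) → (∀ ω, n ≤ τ ω) →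
        Measure.map
            (fun ω => ((fun i : {i : I // i ≠ j} => X n i.1 ω), X (τ ω) j ω)) P =
          Measure.map
            (fun ω => ((fun i : {i : I // i ≠ j} => X n i.1 ω), X n j ω)) P)) :=
  pcid_equivalences_general P ℱ X hadapt
end

section
/- A c.i.d. sequence (X_n) is exchangeable if and only if for every n ≥ 1 and every permutation π of {1,...,n}, P[X_{n+1} ∈ · | X_1 ∈ A_1, ..., X_n ∈ A_n] = P[X_{n+1} ∈ · | X_{π(1)} ∈ A_1, ..., X_{π(n)} ∈ A_n] for all measurable sets A_1, ..., A_n such that the conditioning events have positive probability. -/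
open MeasureTheory ProbabilityTheory Filter Set
open scoped ENNReal NNReal Topology ProbabilityTheory

set_option linter.unusedSectionVars false
set_option maxHeartbeats 1000000

theorem Equiv.Perm.inv_apply_self {α : Type*} (f : Equiv.Perm α) (x : α) : f⁻¹ (f x) = x :=
  f.symm_apply_apply x

theorem Equiv.Perm.apply_inv_self {α : Type*} (f : Equiv.Perm α) (x : α) : f (f⁻¹ x) = x :=
  f.apply_symm_apply x

namespace CidAux

variable {Ω E : Type*} {mΩ : MeasurableSpace Ω} [MeasurableSpace E]
  (P : Measure Ω) [IsProbabilityMeasure P] {X : ℕ → Ω → E}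

/-- the natural filtration σ(X_0,…,X_{n-1}) -/
def F (X : ℕ → Ω → E) (n : ℕ) : MeasurableSpace Ω :=
  ⨆ m ∈ Finset.range n, MeasurableSpace.comap (X m) inferInstance

/-- the conditionally-identically-distributed property, as in the statement -/
def Hcid (P : Measure Ω) (X : ℕ → Ω → E) : Prop :=
  ∀ (n k : ℕ) (f : E → ℝ), Measurable f → (∃ C, ∀ x, |f x| ≤ C) →
      P[(fun ω => f (X (n + k) ω)) | F X n] =ᵐ[P] P[(fun ω => f (X n ω)) | F X n]

/-- the predictive-symmetry property, as in the statement -/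
def HSym (P : Measure Ω) (X : ℕ → Ω → E) : Prop :=
  ∀ (n : ℕ) (σ : Equiv.Perm (Fin n)) (A : Fin n → Set E),
      (∀ m, MeasurableSet (A m)) →
      P (⋂ m : Fin n, X m ⁻¹' A m) ≠ 0 →
      P (⋂ m : Fin n, X (σ m) ⁻¹' A m) ≠ 0 →
      Measure.map (X n) (P[|⋂ m : Fin n, X m ⁻¹' A m]) =
        Measure.map (X n) (P[|⋂ m : Fin n, X (σ m) ⁻¹' A m])

/-- rectangle event on the first `N₀` coordinates -/
def Rect (X : ℕ → Ω → E) (N₀ : ℕ) (A : Fin N₀ → Set E) : Set Ω :=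
  ⋂ m : Fin N₀, X (m : ℕ) ⁻¹' A m

theorem F_le (hX : ∀ n, Measurable (X n)) (n : ℕ) : F X n ≤ mΩ :=
  iSup_le fun m => iSup_le fun _ => (hX m).comap_le

theorem measurableSet_F_preimage {m n : ℕ} (hmn : m < n) {S : Set E}
    (hS : MeasurableSet S) : MeasurableSet[F X n] (X m ⁻¹' S) :=
  le_iSup₂ (f := fun m (_ : m ∈ Finset.range n) =>
    MeasurableSpace.comap (X m) inferInstance) m (Finset.mem_range.mpr hmn) _ ⟨S, hS, rfl⟩

theorem measurableSet_rect_F {N₀ n : ℕ} (h : N₀ ≤ n) {A : Fin N₀ → Set E}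
    (hA : ∀ m, MeasurableSet (A m)) : MeasurableSet[F X n] (Rect X N₀ A) :=
  MeasurableSet.iInter fun m =>
    measurableSet_F_preimage (lt_of_lt_of_le m.isLt h) (hA m)

theorem rect_zero (A : Fin 0 → Set E) : Rect X 0 A = univ := by simp [Rect]

theorem cid_inter (hX : ∀ n, Measurable (X n)) (hcid : Hcid P X)
    {n j : ℕ} (hnj : n ≤ j) {s : Set Ω} (hs : MeasurableSet[F X n] s)
    {C : Set E} (hC : MeasurableSet C) :
    P (s ∩ X j ⁻¹' C) = P (s ∩ X n ⁻¹' C) := by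
  obtain ⟨k, rfl⟩ : ∃ k, j = n + k := ⟨j - n, by omega⟩
  set f : E → ℝ := C.indicator (fun _ => (1 : ℝ)) with hf
  have hfm : Measurable f := measurable_const.indicator hC
  have hfb : ∃ D, ∀ x, |f x| ≤ D := by
    refine ⟨1, fun x => ?_⟩
    by_cases h : x ∈ C <;> simp [hf, h]
  have hcomp : ∀ i : ℕ, (fun ω => f (X i ω)) = (X i ⁻¹' C).indicator (fun _ => (1:ℝ)) := by
    intro i; funext ω; by_cases h : X i ω ∈ C <;> simp [hf, h]
  have hint : ∀ i : ℕ, Integrable (fun ω => f (X i ω)) P := by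
    intro i; rw [hcomp i]
    exact (integrable_const (1:ℝ)).indicator (hX i hC)
  have hsm : MeasurableSet s := F_le hX n s hs
  haveI : SigmaFinite (P.trim (F_le hX n)) := by infer_instance
  have h1 : ∫ ω in s, f (X (n+k) ω) ∂P = ∫ ω in s, f (X n ω) ∂P := by
    rw [← setIntegral_condExp (F_le hX n) (hint (n+k)) hs,
        ← setIntegral_condExp (F_le hX n) (hint n) hs]
    exact setIntegral_congr_ae hsm ((hcid n k f hfm hfb).mono fun ω h _ => h)
  have h2 : ∀ i : ℕ, ∫ ω in s, f (X i ω) ∂P = (P (s ∩ X i ⁻¹' C)).toReal := by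
    intro i
    rw [hcomp i, setIntegral_indicator (hX i hC)]
    simp [Measure.restrict_apply, hsm.inter (hX i hC)]; rfl
  rw [h2, h2] at h1
  exact ENNReal.toReal_eq_toReal_iff' (measure_ne_top P _) (measure_ne_top P _) |>.mp h1

/-- helper: integral of a product of two sums of indicators -/
theorem integral_sum_ind_mul (w w' : Finset ℕ) (s t : ℕ → Set Ω)
    (hs : ∀ i, MeasurableSet (s i)) (ht : ∀ j, MeasurableSet (t j)) :
    ∫ ω, (∑ i ∈ w, (s i).indicator (fun _ => (1:ℝ)) ω) *
        (∑ j ∈ w', (t j).indicator (fun _ => (1:ℝ)) ω) ∂P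
      = ∑ i ∈ w, ∑ j ∈ w', (P (s i ∩ t j)).toReal := by
  have hrw : (fun ω => (∑ i ∈ w, (s i).indicator (fun _ => (1:ℝ)) ω) *
      (∑ j ∈ w', (t j).indicator (fun _ => (1:ℝ)) ω))
      = fun ω => ∑ i ∈ w, ∑ j ∈ w', (s i ∩ t j).indicator (fun _ => (1:ℝ)) ω := by
    funext ω
    rw [Finset.sum_mul_sum]
    refine Finset.sum_congr rfl fun i _ => Finset.sum_congr rfl fun j _ => ?_
    rw [← Set.inter_indicator_mul]
    simp
  rw [hrw, integral_finset_sum]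
  · refine Finset.sum_congr rfl fun i _ => ?_
    rw [integral_finset_sum]
    · refine Finset.sum_congr rfl fun j _ => ?_
      rw [integral_indicator_const (1:ℝ) ((hs i).inter (ht j))]
      simp; rfl
    · exact fun j _ => (integrable_const (1:ℝ)).indicator ((hs i).inter (ht j))
  · intro i _
    exact integrable_finset_sum _ fun j _ =>
      (integrable_const (1:ℝ)).indicator ((hs i).inter (ht j))

theorem integrable_sum_ind_mul (w w' : Finset ℕ) (s t : ℕ → Set Ω)
    (hs : ∀ i, MeasurableSet (s i)) (ht : ∀ j, MeasurableSet (t j)) :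
    Integrable (fun ω => (∑ i ∈ w, (s i).indicator (fun _ => (1:ℝ)) ω) *
        (∑ j ∈ w', (t j).indicator (fun _ => (1:ℝ)) ω)) P := by
  have hrw : (fun ω => (∑ i ∈ w, (s i).indicator (fun _ => (1:ℝ)) ω) *
      (∑ j ∈ w', (t j).indicator (fun _ => (1:ℝ)) ω))
      = fun ω => ∑ i ∈ w, ∑ j ∈ w', (s i ∩ t j).indicator (fun _ => (1:ℝ)) ω := by
    funext ω
    rw [Finset.sum_mul_sum]
    refine Finset.sum_congr rfl fun i _ => Finset.sum_congr rfl fun j _ => ?_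
    rw [← Set.inter_indicator_mul]
    simp
  rw [hrw]
  exact integrable_finset_sum _ fun i _ => integrable_finset_sum _ fun j _ =>
    (integrable_const (1:ℝ)).indicator ((hs i).inter (ht j))

theorem sum_ind_nonneg (w : Finset ℕ) (s : ℕ → Set Ω) (ω : Ω) :
    0 ≤ ∑ i ∈ w, (s i).indicator (fun _ => (1:ℝ)) ω :=
  Finset.sum_nonneg fun i _ => Set.indicator_nonneg (fun _ _ => zero_le_one) ω

theorem sum_ind_le (w : Finset ℕ) (s : ℕ → Set Ω) (ω : Ω) :
    ∑ i ∈ w, (s i).indicator (fun _ => (1:ℝ)) ω ≤ (w.card : ℝ) := by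
  calc ∑ i ∈ w, (s i).indicator (fun _ => (1:ℝ)) ω ≤ ∑ i ∈ w, 1 :=
        Finset.sum_le_sum fun i _ => by by_cases h : ω ∈ s i <;> simp [h]
    _ = (w.card : ℝ) := by simp


variable {N₀ : ℕ} {A : Fin N₀ → Set E} {B C : Set E}

theorem rect_single (hX : ∀ n, Measurable (X n)) (hcid : Hcid P X) (hA : ∀ m, MeasurableSet (A m)) (hB : MeasurableSet B)
    {i i' : ℕ} (hi : N₀ ≤ i) (hi' : N₀ ≤ i') :
    P (Rect X N₀ A ∩ X i ⁻¹' B) = P (Rect X N₀ A ∩ X i' ⁻¹' B) := by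
  rw [cid_inter P hX hcid hi (measurableSet_rect_F le_rfl hA) hB,
      cid_inter P hX hcid hi' (measurableSet_rect_F le_rfl hA) hB]

/-- F1a : sliding the top coordinate -/
theorem t_slide (hX : ∀ n, Measurable (X n)) (hcid : Hcid P X) (hA : ∀ m, MeasurableSet (A m)) (hB : MeasurableSet B)
    (hC : MeasurableSet C) {i j j' : ℕ} (hi : N₀ ≤ i) (hij : i < j) (hij' : i < j') :
    P ((Rect X N₀ A ∩ X i ⁻¹' B) ∩ X j ⁻¹' C)
      = P ((Rect X N₀ A ∩ X i ⁻¹' B) ∩ X j' ⁻¹' C) := by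
  have hs : MeasurableSet[F X (i+1)] (Rect X N₀ A ∩ X i ⁻¹' B) :=
    (measurableSet_rect_F (by omega) hA).inter
      (measurableSet_F_preimage (by omega) hB)
  rw [cid_inter P hX hcid (by omega : i + 1 ≤ j) hs hC,
      cid_inter P hX hcid (by omega : i + 1 ≤ j') hs hC]

/-- F1b : moving the middle coordinate, using predictive symmetry -/
theorem t_move (hX : ∀ n, Measurable (X n)) (hcid : Hcid P X) (hsym : HSym P X) (hA : ∀ m, MeasurableSet (A m)) (hB : MeasurableSet B)
    (hC : MeasurableSet C) {i i' J : ℕ} (hi : N₀ ≤ i) (hi' : N₀ ≤ i')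
    (hiJ : i < J) (hi'J : i' < J) :
    P ((Rect X N₀ A ∩ X i ⁻¹' B) ∩ X J ⁻¹' C)
      = P ((Rect X N₀ A ∩ X i' ⁻¹' B) ∩ X J ⁻¹' C) := by
  rcases eq_or_ne i i' with rfl | hne
  · rfl
  -- the conditioning sets
  classical
  set A'' : Fin J → Set E := fun m =>
    if h : (m : ℕ) < N₀ then A ⟨m, h⟩ else if (m : ℕ) = i then B else univ with hA''
  have hA''m : ∀ m, MeasurableSet (A'' m) := by
    intro m; rw [hA'']; dsimp only
    split_ifs with h1 h2
    · exact hA _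
    · exact hB
    · exact MeasurableSet.univ
  set σ : Equiv.Perm (Fin J) := Equiv.swap ⟨i, hiJ⟩ ⟨i', hi'J⟩ with hσ
  have he₁ : (⋂ m : Fin J, X m ⁻¹' A'' m) = Rect X N₀ A ∩ X i ⁻¹' B := by
    ext ω
    simp only [mem_iInter, mem_preimage, mem_inter_iff, Rect]
    constructor
    · intro h
      refine ⟨fun m => ?_, ?_⟩
      · have := h ⟨(m : ℕ), by omega⟩
        rw [hA''] at this; simp only at this
        rw [dif_pos m.isLt] at this
        simpa using this
      · have := h ⟨i, hiJ⟩
        rw [hA''] at this; simp only at this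
        rw [dif_neg (by omega)] at this
        simpa using this
    · rintro ⟨h1, h2⟩ m
      rw [hA'']; dsimp only
      split_ifs with ha hb
      · exact h1 ⟨(m : ℕ), ha⟩
      · have : (m : ℕ) = i := hb
        rw [this]; exact h2
      · trivial
  have he₂ : (⋂ m : Fin J, X (σ m) ⁻¹' A'' m) = Rect X N₀ A ∩ X i' ⁻¹' B := by
    ext ω
    simp only [mem_iInter, mem_preimage, mem_inter_iff, Rect]
    constructor
    · intro h
      refine ⟨fun m => ?_, ?_⟩
      · have hm : (⟨(m : ℕ), by omega⟩ : Fin J) ≠ ⟨i, hiJ⟩ := by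
          intro hcontra
          have := congrArg (Fin.val) hcontra
          simp at this; omega
        have hm' : (⟨(m : ℕ), by omega⟩ : Fin J) ≠ ⟨i', hi'J⟩ := by
          intro hcontra
          have := congrArg (Fin.val) hcontra
          simp at this; omega
        have := h ⟨(m : ℕ), by omega⟩
        rw [hσ, Equiv.swap_apply_of_ne_of_ne hm hm'] at this
        rw [hA''] at this; simp only at this
        rw [dif_pos m.isLt] at this
        simpa using this
      · have := h ⟨i, hiJ⟩
        rw [hσ, Equiv.swap_apply_left] at this
        rw [hA''] at this; simp only at this
        rw [dif_neg (by omega)] at this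
        simpa using this
    · rintro ⟨h1, h2⟩ m
      rw [hA'']; dsimp only
      split_ifs with ha hb
      · have hm : σ m = m := by
          rw [hσ]
          refine Equiv.swap_apply_of_ne_of_ne ?_ ?_ <;>
            · intro hcontra
              have := congrArg (Fin.val) hcontra
              simp at this; omega
        rw [hm]
        exact h1 ⟨(m : ℕ), ha⟩
      · have hmi : m = ⟨i, hiJ⟩ := by
          apply Fin.ext; exact hb
        rw [hmi, hσ, Equiv.swap_apply_left]
        exact h2
      · trivial
  have hmeas₁ : MeasurableSet (Rect X N₀ A ∩ X i ⁻¹' B) :=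
    (MeasurableSet.iInter fun m => hX _ (hA m)).inter (hX i hB)
  have hmeas₂ : MeasurableSet (Rect X N₀ A ∩ X i' ⁻¹' B) :=
    (MeasurableSet.iInter fun m => hX _ (hA m)).inter (hX i' hB)
  have hpp : P (Rect X N₀ A ∩ X i ⁻¹' B) = P (Rect X N₀ A ∩ X i' ⁻¹' B) :=
    rect_single P hX hcid hA hB hi hi'
  rcases eq_or_ne (P (Rect X N₀ A ∩ X i ⁻¹' B)) 0 with hzero | hpos
  · have h1 : P ((Rect X N₀ A ∩ X i ⁻¹' B) ∩ X J ⁻¹' C) = 0 :=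
      measure_mono_null Set.inter_subset_left hzero
    have h2 : P ((Rect X N₀ A ∩ X i' ⁻¹' B) ∩ X J ⁻¹' C) = 0 :=
      measure_mono_null Set.inter_subset_left (hpp ▸ hzero)
    rw [h1, h2]
  · have h₁ : P (⋂ m : Fin J, X m ⁻¹' A'' m) ≠ 0 := by rw [he₁]; exact hpos
    have h₂ : P (⋂ m : Fin J, X (σ m) ⁻¹' A'' m) ≠ 0 := by
      rw [he₂, ← hpp]; exact hpos
    have hmap := hsym J σ A'' hA''m h₁ h₂
    have := congrArg (fun μ : Measure E => μ C) hmap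
    simp only [Measure.map_apply (hX J) hC] at this
    rw [cond_apply (he₁ ▸ hmeas₁) P, cond_apply (he₂ ▸ hmeas₂) P, he₁, he₂, hpp] at this
    have hfin : P (Rect X N₀ A ∩ X i' ⁻¹' B) ≠ ⊤ := measure_ne_top P _
    have hpos' : P (Rect X N₀ A ∩ X i' ⁻¹' B) ≠ 0 := hpp ▸ hpos
    calc P ((Rect X N₀ A ∩ X i ⁻¹' B) ∩ X J ⁻¹' C)
        = P (Rect X N₀ A ∩ X i' ⁻¹' B) *
          ((P (Rect X N₀ A ∩ X i' ⁻¹' B))⁻¹ *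
            P ((Rect X N₀ A ∩ X i ⁻¹' B) ∩ X J ⁻¹' C)) := by
          rw [← mul_assoc, ENNReal.mul_inv_cancel hpos' hfin, one_mul]
      _ = P (Rect X N₀ A ∩ X i' ⁻¹' B) *
          ((P (Rect X N₀ A ∩ X i' ⁻¹' B))⁻¹ *
            P ((Rect X N₀ A ∩ X i' ⁻¹' B) ∩ X J ⁻¹' C)) := by rw [this]
      _ = P ((Rect X N₀ A ∩ X i' ⁻¹' B) ∩ X J ⁻¹' C) := by
          rw [← mul_assoc, ENNReal.mul_inv_cancel hpos' hfin, one_mul]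


/-- F1 : the whole two-extra-coordinates quantity is placement independent -/
theorem t_const (hX : ∀ n, Measurable (X n)) (hcid : Hcid P X) (hsym : HSym P X)
    (hA : ∀ m, MeasurableSet (A m)) (hB : MeasurableSet B) (hC : MeasurableSet C)
    {i j : ℕ} (hi : N₀ ≤ i) (hij : i < j) :
    P ((Rect X N₀ A ∩ X i ⁻¹' B) ∩ X j ⁻¹' C)
      = P ((Rect X N₀ A ∩ X N₀ ⁻¹' B) ∩ X (N₀ + 1) ⁻¹' C) := by
  set J := i + j + N₀ + 2 with hJ
  calc P ((Rect X N₀ A ∩ X i ⁻¹' B) ∩ X j ⁻¹' C)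
      = P ((Rect X N₀ A ∩ X i ⁻¹' B) ∩ X J ⁻¹' C) :=
        t_slide P hX hcid hA hB hC hi hij (by omega)
    _ = P ((Rect X N₀ A ∩ X N₀ ⁻¹' B) ∩ X J ⁻¹' C) :=
        t_move P hX hcid hsym hA hB hC hi le_rfl (by omega) (by omega)
    _ = P ((Rect X N₀ A ∩ X N₀ ⁻¹' B) ∩ X (N₀+1) ⁻¹' C) :=
        t_slide P hX hcid hA hB hC le_rfl (by omega) (by omega)

/-- key swap of the two coordinates above a rectangle -/
theorem swap_main (hX : ∀ n, Measurable (X n)) (hcid : Hcid P X) (hsym : HSym P X)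
    (hA : ∀ m, MeasurableSet (A m)) (hB : MeasurableSet B) (hC : MeasurableSet C) :
    P ((Rect X N₀ A ∩ X N₀ ⁻¹' B) ∩ X (N₀ + 1) ⁻¹' C)
      = P ((Rect X N₀ A ∩ X N₀ ⁻¹' C) ∩ X (N₀ + 1) ⁻¹' B) := by
  set R := Rect X N₀ A with hR
  have hRm : MeasurableSet R := MeasurableSet.iInter fun m => hX _ (hA m)
  set S := (P ((R ∩ X N₀ ⁻¹' B) ∩ X (N₀+1) ⁻¹' C)).toReal with hSdef
  set S' := (P ((R ∩ X N₀ ⁻¹' C) ∩ X (N₀+1) ⁻¹' B)).toReal with hS'def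
  suffices hss : S = S' by
    exact ENNReal.toReal_eq_toReal_iff' (measure_ne_top P _) (measure_ne_top P _) |>.mp hss
  have hS_eq : ∀ i j : ℕ, N₀ ≤ i → i < j →
      (P ((R ∩ X i ⁻¹' B) ∩ X j ⁻¹' C)).toReal = S := fun i j hi hij => by
    rw [hSdef, t_const P hX hcid hsym hA hB hC hi hij]
  have hS'_eq : ∀ i j : ℕ, N₀ ≤ i → i < j →
      (P ((R ∩ X i ⁻¹' C) ∩ X j ⁻¹' B)).toReal = S' := fun i j hi hij => by
    rw [hS'def, t_const P hX hcid hsym hA hC hB hi hij]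
  -- global constants for the set C
  set c := (P (X 0 ⁻¹' C)).toReal with hcdef
  set g := (P ((X 0 ⁻¹' C) ∩ X 1 ⁻¹' C)).toReal with hgdef
  have hc_eq : ∀ i : ℕ, (P (X i ⁻¹' C)).toReal = c := fun i => by
    have := rect_single P hX hcid (A := fun m : Fin 0 => univ)
      (fun m => MeasurableSet.univ) hC (Nat.zero_le i) (Nat.zero_le 0)
    rw [rect_zero, univ_inter, univ_inter] at this
    rw [hcdef, this]
  have hg_eq : ∀ i j : ℕ, i < j → (P ((X i ⁻¹' C) ∩ X j ⁻¹' C)).toReal = g :=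
    fun i j hij => by
    have := t_const P hX hcid hsym (A := fun m : Fin 0 => univ)
      (fun m => MeasurableSet.univ) hC hC (Nat.zero_le i) hij
    rw [rect_zero, univ_inter, univ_inter] at this
    rw [hgdef, this]
  have hc1 : c ≤ 1 := by
    rw [hcdef]
    simpa using ENNReal.toReal_mono ENNReal.one_ne_top prob_le_one
  have hg0 : 0 ≤ g := ENNReal.toReal_nonneg
  -- the ε-approximation
  have habs : ∀ ε : ℝ, 0 < ε → |S - S'| ≤ ε := by
    intro ε hε
    set m : ℕ := max 1 ⌈(4:ℝ)/ε^2⌉₊ with hm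
    have hm1 : 1 ≤ m := le_max_left _ _
    have hmR : (0:ℝ) < m := by positivity
    have hm4 : (4:ℝ)/ε^2 ≤ m := le_trans (Nat.le_ceil _) (by exact_mod_cast le_max_right _ _)
    set w1 := Finset.Ico N₀ (N₀ + m) with hw1
    set w2 := Finset.Ico (N₀ + m) (N₀ + 2*m) with hw2
    set w3 := Finset.Ico (N₀ + 2*m) (N₀ + 3*m) with hw3
    have hcard1 : w1.card = m := by rw [hw1, Nat.card_Ico]; omega
    have hcard2 : w2.card = m := by rw [hw2, Nat.card_Ico]; omega
    have hcard3 : w3.card = m := by rw [hw3, Nat.card_Ico]; omega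
    set sB : ℕ → Set Ω := fun i => R ∩ X i ⁻¹' B with hsB
    set tC : ℕ → Set Ω := fun j => X j ⁻¹' C with htC
    have hsBm : ∀ i, MeasurableSet (sB i) := fun i => hRm.inter (hX i hB)
    have htCm : ∀ j, MeasurableSet (tC j) := fun j => hX j hC
    set u : Ω → ℝ := fun ω => ∑ i ∈ w2, (sB i).indicator (fun _ => (1:ℝ)) ω with hu
    set f1 : Ω → ℝ := fun ω => ∑ j ∈ w1, (tC j).indicator (fun _ => (1:ℝ)) ω with hf1
    set f3 : Ω → ℝ := fun ω => ∑ j ∈ w3, (tC j).indicator (fun _ => (1:ℝ)) ω with hf3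
    -- first moments
    have hU3 : ∫ ω, u ω * f3 ω ∂P = (m:ℝ)^2 * S := by
      rw [hu, hf3, integral_sum_ind_mul P w2 w3 sB tC hsBm htCm]
      have : ∀ i ∈ w2, ∀ j ∈ w3, (P (sB i ∩ tC j)).toReal = S := by
        intro i hi j hj
        rw [hw2, Finset.mem_Ico] at hi; rw [hw3, Finset.mem_Ico] at hj
        exact hS_eq i j (by omega) (by omega)
      rw [Finset.sum_congr rfl fun i hi =>
        Finset.sum_congr rfl fun j hj => this i hi j hj]
      simp [hcard2, hcard3]; ring
    have hU1 : ∫ ω, u ω * f1 ω ∂P = (m:ℝ)^2 * S' := by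
      rw [hu, hf1, integral_sum_ind_mul P w2 w1 sB tC hsBm htCm]
      have : ∀ i ∈ w2, ∀ j ∈ w1, (P (sB i ∩ tC j)).toReal = S' := by
        intro i hi j hj
        rw [hw2, Finset.mem_Ico] at hi; rw [hw1, Finset.mem_Ico] at hj
        have hset : sB i ∩ tC j = (R ∩ X j ⁻¹' C) ∩ X i ⁻¹' B := by
          rw [hsB, htC]; dsimp only; rw [Set.inter_right_comm]
        rw [hset]
        exact hS'_eq j i (by omega) (by omega)
      rw [Finset.sum_congr rfl fun i hi =>
        Finset.sum_congr rfl fun j hj => this i hi j hj]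
      simp [hcard2, hcard1]; ring
    -- second moments of f's
    have hdiag : ∀ (w : Finset ℕ), w.card = m → (∀ i ∈ w, ∀ j ∈ w, i ≠ j) → True := fun _ _ _ => trivial
    have hff : ∀ w w' : Finset ℕ, w.card = m → w'.card = m →
        (∀ i ∈ w, ∀ j ∈ w', i < j) →
        ∫ ω, (∑ j ∈ w, (tC j).indicator (fun _ => (1:ℝ)) ω) *
          (∑ j ∈ w', (tC j).indicator (fun _ => (1:ℝ)) ω) ∂P = (m:ℝ)^2 * g := by
      intro w w' hcw hcw' hlt
      rw [integral_sum_ind_mul P w w' tC tC htCm htCm]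
      rw [Finset.sum_congr rfl fun i hi => Finset.sum_congr rfl fun j hj =>
        hg_eq i j (hlt i hi j hj)]
      simp [hcw, hcw']; ring
    have hself : ∀ w : Finset ℕ, w.card = m →
        ∫ ω, (∑ j ∈ w, (tC j).indicator (fun _ => (1:ℝ)) ω) *
          (∑ j ∈ w, (tC j).indicator (fun _ => (1:ℝ)) ω) ∂P
          = (m:ℝ) * c + ((m:ℝ)^2 - m) * g := by
      intro w hcw
      rw [integral_sum_ind_mul P w w tC tC htCm htCm]
      have hterm : ∀ i ∈ w, ∀ j ∈ w, (P (tC i ∩ tC j)).toReal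
          = g + if j = i then c - g else 0 := by
        intro i hi j hj
        rcases lt_trichotomy i j with h | h | h
        · rw [if_neg (by omega), hg_eq i j h]; ring
        · subst h
          rw [if_pos rfl, htC]; dsimp only
          rw [Set.inter_self, hc_eq i]; ring
        · rw [if_neg (by omega), Set.inter_comm, hg_eq j i h]; ring
      rw [Finset.sum_congr rfl fun i hi => Finset.sum_congr rfl fun j hj => hterm i hi j hj]
      have hrow : ∀ i ∈ w, ∑ j ∈ w, (g + if j = i then c - g else 0)
          = (m:ℝ) * g + (c - g) := by
        intro i hi
        rw [Finset.sum_add_distrib, Finset.sum_const, Finset.sum_ite_eq' w i (fun _ => c - g)]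
        simp [hcw, if_pos hi]
      rw [Finset.sum_congr rfl hrow]
      simp [hcw]; ring
    -- integral of Δ²
    have hintff : ∀ w w' : Finset ℕ, Integrable (fun ω =>
        (∑ j ∈ w, (tC j).indicator (fun _ => (1:ℝ)) ω) *
        (∑ j ∈ w', (tC j).indicator (fun _ => (1:ℝ)) ω)) P :=
      fun w w' => integrable_sum_ind_mul P w w' tC tC htCm htCm
    have h33 : ∫ ω, f3 ω * f3 ω ∂P = (m:ℝ) * c + ((m:ℝ)^2 - (m:ℝ)) * g :=
      hself w3 hcard3
    have h11 : ∫ ω, f1 ω * f1 ω ∂P = (m:ℝ) * c + ((m:ℝ)^2 - (m:ℝ)) * g :=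
      hself w1 hcard1
    have h13 : ∫ ω, f1 ω * f3 ω ∂P = (m:ℝ)^2 * g :=
      hff w1 w3 hcard1 hcard3 (by
        intro i hi j hj
        rw [hw1, Finset.mem_Ico] at hi; rw [hw3, Finset.mem_Ico] at hj; omega)
    have h31 : ∫ ω, f3 ω * f1 ω ∂P = (m:ℝ)^2 * g := by
      refine (integral_congr_ae (Eventually.of_forall fun ω => ?_)).trans h13
      exact mul_comm _ _
    have hi33 : Integrable (fun ω => f3 ω * f3 ω) P := hintff w3 w3
    have hi31 : Integrable (fun ω => f3 ω * f1 ω) P := hintff w3 w1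
    have hi13 : Integrable (fun ω => f1 ω * f3 ω) P := hintff w1 w3
    have hi11 : Integrable (fun ω => f1 ω * f1 ω) P := hintff w1 w1
    have hD : ∫ ω, (f3 ω - f1 ω)^2 ∂P = 2*(m:ℝ)*c - 2*(m:ℝ)*g := by
      have e : ∫ ω, (f3 ω - f1 ω)^2 ∂P
          = ∫ ω, ((f3 ω * f3 ω - f3 ω * f1 ω) - (f1 ω * f3 ω - f1 ω * f1 ω)) ∂P :=
        integral_congr_ae (Eventually.of_forall fun ω => by ring)
      have hiA : Integrable (fun ω => f3 ω * f3 ω - f3 ω * f1 ω) P := by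
        exact hi33.sub hi31
      have hiB : Integrable (fun ω => f1 ω * f3 ω - f1 ω * f1 ω) P := by
        exact hi13.sub hi11
      rw [e, integral_sub hiA hiB, integral_sub hi33 hi31,
        integral_sub hi13 hi11, h33, h31, h13, h11]
      ring
    -- pointwise bound
    set ε' : ℝ := 2 / ε with hε'
    have hε'pos : 0 < ε' := by positivity
    have hptbound : ∀ ω, |u ω * (f3 ω - f1 ω)|
        ≤ (m:ℝ) * ((f3 ω - f1 ω)^2 / (2*ε') + ε'/2) := by
      intro ω
      have h1 : |u ω| ≤ (m:ℝ) := by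
        rw [abs_of_nonneg (sum_ind_nonneg _ _ _)]
        have := sum_ind_le w2 sB ω
        rwa [hcard2] at this
      have h2 : |f3 ω - f1 ω| ≤ (f3 ω - f1 ω)^2 / (2*ε') + ε'/2 := by
        rw [div_add_div _ _ (by positivity : (2*ε') ≠ 0) (by norm_num : (2:ℝ) ≠ 0)]
        rw [le_div_iff₀ (by positivity)]
        nlinarith [sq_nonneg (|f3 ω - f1 ω| - ε'), sq_abs (f3 ω - f1 ω)]
      calc |u ω * (f3 ω - f1 ω)| = |u ω| * |f3 ω - f1 ω| := abs_mul _ _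
        _ ≤ (m:ℝ) * ((f3 ω - f1 ω)^2 / (2*ε') + ε'/2) := by
            apply mul_le_mul h1 h2 (abs_nonneg _)
            positivity
    -- integrability facts
    have hintuf : ∀ w' : Finset ℕ, Integrable (fun ω =>
        u ω * (∑ j ∈ w', (tC j).indicator (fun _ => (1:ℝ)) ω)) P :=
      fun w' => integrable_sum_ind_mul P w2 w' sB tC hsBm htCm
    have hintΔ2 : Integrable (fun ω => (f3 ω - f1 ω)^2) P := by
      have hptw : (fun ω => (f3 ω - f1 ω)^2)
          = fun ω => (f3 ω * f3 ω - f3 ω * f1 ω) - (f1 ω * f3 ω - f1 ω * f1 ω) := by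
        funext ω; ring
      rw [hptw]
      exact (hi33.sub hi31).sub (hi13.sub hi11)
    -- final bound
    have hkey : |(m:ℝ)^2 * S - (m:ℝ)^2 * S'| ≤ (m:ℝ) * ((2*(m:ℝ)*c - 2*(m:ℝ)*g) / (2*ε') + ε'/2) := by
      rw [← hU3, ← hU1, ← integral_sub (hintuf w3) (hintuf w1)]
      have hint2 : Integrable (fun ω => u ω * f3 ω - u ω * f1 ω) P :=
        (hintuf w3).sub (hintuf w1)
      calc |∫ ω, (u ω * f3 ω - u ω * f1 ω) ∂P|
          ≤ ∫ ω, |u ω * f3 ω - u ω * f1 ω| ∂P := by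
            simpa [Real.norm_eq_abs] using
              norm_integral_le_integral_norm (fun ω => u ω * f3 ω - u ω * f1 ω) (μ := P)
        _ ≤ ∫ ω, (m:ℝ) * ((f3 ω - f1 ω)^2 / (2*ε') + ε'/2) ∂P := by
            apply integral_mono hint2.abs
            · exact (((hintΔ2.div_const _).add (integrable_const _)).const_mul _)
            · intro ω
              have := hptbound ω
              calc |u ω * f3 ω - u ω * f1 ω| = |u ω * (f3 ω - f1 ω)| := by ring_nf
                _ ≤ _ := this
        _ = (m:ℝ) * ((2*(m:ℝ)*c - 2*(m:ℝ)*g) / (2*ε') + ε'/2) := by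
            rw [integral_const_mul]
            congr 1
            rw [integral_add (hintΔ2.div_const _) (integrable_const _),
              integral_div, hD, integral_const]
            simp
    -- conclude
    have hcg : 2*(m:ℝ)*c - 2*(m:ℝ)*g ≤ 2*(m:ℝ) := by nlinarith
    have hstep1 : (2*(m:ℝ)*c - 2*(m:ℝ)*g) / (2*ε') ≤ (2*(m:ℝ)) / (2*ε') := by
      gcongr
    have habs2 : |(m:ℝ)^2 * S - (m:ℝ)^2 * S'| = |S - S'| * (m:ℝ)^2 := by
      rw [← mul_sub, abs_mul, abs_of_nonneg (by positivity : (0:ℝ) ≤ (m:ℝ)^2)]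
      ring
    have hkey2 : |S - S'| * (m:ℝ)^2 ≤ (m:ℝ) * ((2*(m:ℝ)) / (2*ε') + ε'/2) := by
      rw [← habs2]
      refine hkey.trans ?_
      have := hstep1
      nlinarith [hmR]
    have e0 : (2*(m:ℝ)) / (2*ε') = (m:ℝ) * ε / 2 := by
      rw [hε']; field_simp
    have e1 : ε'/2 = 1/ε := by rw [hε']; field_simp
    have hfinal : |S - S'| * (m:ℝ)^2 ≤ ε * (m:ℝ)^2 := by
      rw [e0, e1] at hkey2
      have hmm : (m:ℝ)/ε ≤ (m:ℝ)^2 * ε / 4 := by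
        rw [div_le_div_iff₀ hε (by norm_num)]
        have : (4:ℝ)/ε^2 * ε^2 ≤ (m:ℝ) * ε^2 := by
          apply mul_le_mul_of_nonneg_right hm4 (by positivity)
        calc (m:ℝ) * 4 = 4/ε^2 * ε^2 * (m:ℝ) := by field_simp
          _ ≤ (m:ℝ) * ε^2 * (m:ℝ) := by
              apply mul_le_mul_of_nonneg_right this (by positivity)
          _ = (m:ℝ)^2 * ε * ε := by ring
      calc |S - S'| * (m:ℝ)^2 ≤ (m:ℝ) * ((m:ℝ) * ε / 2 + 1/ε) := hkey2
        _ = (m:ℝ)^2 * ε/2 + (m:ℝ)/ε := by ring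
        _ ≤ (m:ℝ)^2 * ε/2 + (m:ℝ)^2 * ε/4 := by linarith
        _ ≤ ε * (m:ℝ)^2 := by nlinarith [sq_nonneg (m:ℝ), hε, hmR]
    have hm2 : (0:ℝ) < (m:ℝ)^2 := by positivity
    exact le_of_mul_le_mul_right (by linarith [hfinal]) hm2
  have : |S - S'| ≤ 0 := by
    by_contra h
    push_neg at h
    have := habs (|S - S'|/2) (by linarith)
    linarith
  have := abs_nonneg (S - S')
  have : |S - S'| = 0 := le_antisymm ‹|S - S'| ≤ 0› (abs_nonneg _)
  have := abs_eq_zero.mp this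
  linarith


/-- invariance of joint laws under a permutation of the first `n` indices. -/
def Good (P : Measure Ω) (X : ℕ → Ω → E) {n : ℕ} (σ : Equiv.Perm (Fin n)) : Prop :=
  ∀ A : Fin n → Set E, (∀ m, MeasurableSet (A m)) →
    P (⋂ m : Fin n, X (m : ℕ) ⁻¹' A (σ m)) = P (⋂ m : Fin n, X (m : ℕ) ⁻¹' A m)

theorem good_mul {n : ℕ} {σ ρ : Equiv.Perm (Fin n)} (hσ : Good P X σ)
    (hρ : Good P X ρ) : Good P X (σ * ρ) := by
  intro A hA
  have h1 := hρ (fun m => A (σ m)) (fun m => hA _)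
  have h2 := hσ A hA
  calc P (⋂ m : Fin n, X (m : ℕ) ⁻¹' A ((σ * ρ) m))
      = P (⋂ m : Fin n, X (m : ℕ) ⁻¹' A (σ (ρ m))) := rfl
    _ = P (⋂ m : Fin n, X (m : ℕ) ⁻¹' A (σ m)) := h1
    _ = P (⋂ m : Fin n, X (m : ℕ) ⁻¹' A m) := h2

theorem good_inv {n : ℕ} {σ : Equiv.Perm (Fin n)} (hσ : Good P X σ) :
    Good P X σ⁻¹ := by
  intro A hA
  have h1 := hσ (fun m => A (σ⁻¹ m)) (fun m => hA _)
  have h2 : (⋂ m : Fin n, X (m : ℕ) ⁻¹' A (σ⁻¹ (σ m)))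
      = ⋂ m : Fin n, X (m : ℕ) ⁻¹' A m := by
    refine iInter_congr fun m => ?_
    rw [Equiv.Perm.inv_apply_self]
  rw [h2] at h1
  exact h1.symm

/-- splitting an intersection over `Fin (n+1)` -/
theorem iInter_split {n : ℕ} (B : Fin (n+1) → Set E) :
    (⋂ m : Fin (n+1), X (m : ℕ) ⁻¹' B m)
      = (⋂ m : Fin n, X (m : ℕ) ⁻¹' B m.castSucc) ∩ X n ⁻¹' B (Fin.last n) := by
  ext ω
  simp only [mem_iInter, mem_inter_iff, mem_preimage]
  constructor
  · intro h
    exact ⟨fun m => h m.castSucc, h (Fin.last n)⟩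
  · rintro ⟨h1, h2⟩ m
    induction m using Fin.lastCases with
    | last => exact h2
    | cast i => exact h1 i

/-- reindexing an intersection by a permutation -/
theorem iInter_perm {n : ℕ} (ρ : Equiv.Perm (Fin n)) (B : Fin n → Set E) :
    (⋂ m : Fin n, X ((ρ m : ℕ)) ⁻¹' B m)
      = ⋂ m : Fin n, X (m : ℕ) ⁻¹' B (ρ⁻¹ m) := by
  ext ω
  simp only [mem_iInter, mem_preimage]
  constructor
  · intro h k
    have := h (ρ⁻¹ k)
    rwa [Equiv.Perm.apply_inv_self] at this
  · intro h m
    have := h (ρ m)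
    rwa [Equiv.Perm.inv_apply_self] at this

/-- restriction of a permutation fixing the last element -/
def restrictPerm {n : ℕ} (σ : Equiv.Perm (Fin (n+1))) (hlast : σ (Fin.last n) = Fin.last n) :
    Equiv.Perm (Fin n) where
  toFun m := (σ m.castSucc).castPred (by
    intro h
    exact absurd (σ.injective (h.trans hlast.symm)) (Fin.castSucc_lt_last m).ne)
  invFun m := (σ⁻¹ m.castSucc).castPred (by
    intro h
    have hlast' : σ⁻¹ (Fin.last n) = Fin.last n := by
      rw [← hlast, Equiv.Perm.inv_apply_self]
      exact hlast.symm
    exact absurd (σ⁻¹.injective (h.trans hlast'.symm)) (Fin.castSucc_lt_last m).ne)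
  left_inv m := by
    apply Fin.castSucc_injective
    rw [Fin.castSucc_castPred, Fin.castSucc_castPred, Equiv.Perm.inv_apply_self]
  right_inv m := by
    apply Fin.castSucc_injective
    rw [Fin.castSucc_castPred, Fin.castSucc_castPred, Equiv.Perm.apply_inv_self]

theorem restrictPerm_castSucc {n : ℕ} (σ : Equiv.Perm (Fin (n+1)))
    (hlast : σ (Fin.last n) = Fin.last n) (m : Fin n) :
    ((restrictPerm σ hlast) m).castSucc = σ m.castSucc := by
  simp [restrictPerm, Fin.castSucc_castPred]

theorem restrictPerm_inv_castSucc {n : ℕ} (σ : Equiv.Perm (Fin (n+1)))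
    (hlast : σ (Fin.last n) = Fin.last n) (m : Fin n) :
    (((restrictPerm σ hlast))⁻¹ m).castSucc = σ⁻¹ m.castSucc := by
  have : ((restrictPerm σ hlast))⁻¹ m = (restrictPerm σ hlast).symm m := rfl
  rw [this]
  simp [restrictPerm, Fin.castSucc_castPred]

theorem goodFix {n : ℕ} (hX : ∀ n, Measurable (X n)) (hsym : HSym P X)
    (σ : Equiv.Perm (Fin (n+1))) (hlast : σ (Fin.last n) = Fin.last n)
    (IH : ∀ ρ : Equiv.Perm (Fin n), Good P X ρ) : Good P X σ := by
  intro A hA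
  set σ' := restrictPerm σ hlast with hσ'
  set D : Fin n → Set E := fun m => A m.castSucc with hD
  have hDm : ∀ m, MeasurableSet (D m) := fun m => hA _
  -- split both sides
  have e : (⋂ m : Fin n, X (m : ℕ) ⁻¹' A ((σ m.castSucc)))
      = ⋂ m : Fin n, X (m : ℕ) ⁻¹' D (σ' m) := by
    refine iInter_congr fun m => ?_
    rw [hD]; dsimp only
    rw [hσ', restrictPerm_castSucc]
  have hsplit1 : (⋂ m : Fin (n+1), X (m : ℕ) ⁻¹' A (σ m))
      = (⋂ m : Fin n, X (m : ℕ) ⁻¹' D (σ' m)) ∩ X n ⁻¹' A (Fin.last n) := by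
    rw [iInter_split (fun m => A (σ m)), hlast, e]
  have hsplit2 : (⋂ m : Fin (n+1), X (m : ℕ) ⁻¹' A m)
      = (⋂ m : Fin n, X (m : ℕ) ⁻¹' D m) ∩ X n ⁻¹' A (Fin.last n) := by
    rw [iInter_split A]
  have hpref : P (⋂ m : Fin n, X (m : ℕ) ⁻¹' D (σ' m))
      = P (⋂ m : Fin n, X (m : ℕ) ⁻¹' D m) := IH σ' D hDm
  have hm1 : MeasurableSet (⋂ m : Fin n, X (m : ℕ) ⁻¹' D (σ' m)) :=
    MeasurableSet.iInter fun m => hX _ (hDm _)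
  have hm2 : MeasurableSet (⋂ m : Fin n, X (m : ℕ) ⁻¹' D m) :=
    MeasurableSet.iInter fun m => hX _ (hDm _)
  rw [hsplit1, hsplit2]
  rcases eq_or_ne (P (⋂ m : Fin n, X (m : ℕ) ⁻¹' D m)) 0 with hzero | hpos
  · have z1 : P (⋂ m : Fin n, X (m : ℕ) ⁻¹' D (σ' m)) = 0 := hpref.trans hzero
    rw [measure_mono_null Set.inter_subset_left z1,
      measure_mono_null Set.inter_subset_left hzero]
  · -- use predictive symmetry
    have hperm : (⋂ m : Fin n, X ((σ'⁻¹ m : Fin n) : ℕ) ⁻¹' D m)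
        = ⋂ m : Fin n, X (m : ℕ) ⁻¹' D (σ' m) := by
      rw [iInter_perm σ'⁻¹ D]
      refine iInter_congr fun m => ?_
      rw [inv_inv]
    have h₁ : P (⋂ m : Fin n, X (m : ℕ) ⁻¹' D m) ≠ 0 := hpos
    have h₂ : P (⋂ m : Fin n, X ((σ'⁻¹ m : Fin n) : ℕ) ⁻¹' D m) ≠ 0 := by
      rw [hperm, hpref]; exact hpos
    have hmap := hsym n σ'⁻¹ D hDm h₁ h₂
    have happ := congrArg (fun μ : Measure E => μ (A (Fin.last n))) hmap
    simp only [Measure.map_apply (hX n) (hA _)] at happ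
    rw [cond_apply hm2 P, cond_apply (hperm ▸ hm1) P] at happ
    rw [hperm] at happ
    rw [hpref] at happ
    -- cancel
    have hfin : P (⋂ m : Fin n, X (m : ℕ) ⁻¹' D m) ≠ ⊤ := measure_ne_top P _
    have hc := congrArg (fun x => P (⋂ m : Fin n, X (m : ℕ) ⁻¹' D m) * x) happ
    simp only [← mul_assoc, ENNReal.mul_inv_cancel hpos hfin, one_mul] at hc
    exact hc.symm


theorem goodTau {N₀ : ℕ} (hX : ∀ n, Measurable (X n)) (hcid : Hcid P X)
    (hsym : HSym P X) :
    Good P X (Equiv.swap (⟨N₀, by omega⟩ : Fin (N₀+2)) ⟨N₀+1, by omega⟩) := by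
  intro A hA
  set a : Fin (N₀+2) := ⟨N₀, by omega⟩ with ha
  set b : Fin (N₀+2) := ⟨N₀+1, by omega⟩ with hb
  set τ := Equiv.swap a b with hτ
  set A' : Fin N₀ → Set E := fun m => A ⟨(m : ℕ), by omega⟩ with hA'
  have hA'm : ∀ m, MeasurableSet (A' m) := fun m => hA _
  have hval : ∀ m : Fin (N₀+2), (m : ℕ) < N₀ → τ m = m := by
    intro m hm
    rw [hτ]
    refine Equiv.swap_apply_of_ne_of_ne ?_ ?_ <;>
      · intro hcontra
        have := congrArg Fin.val hcontra
        rw [ha] at * ; rw [hb] at *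
        simp at this
        omega
  have hsplitgen : ∀ (G : Fin (N₀+2) → Set E),
      (⋂ m : Fin (N₀+2), X (m : ℕ) ⁻¹' G m)
        = (Rect X N₀ (fun m => G ⟨(m : ℕ), by omega⟩) ∩ X N₀ ⁻¹' G a)
            ∩ X (N₀+1) ⁻¹' G b := by
    intro G
    ext ω
    simp only [Rect, mem_iInter, mem_inter_iff, mem_preimage]
    constructor
    · intro h
      exact ⟨⟨fun m => h ⟨(m : ℕ), by omega⟩, h a⟩, h b⟩
    · rintro ⟨⟨h1, h2⟩, h3⟩ m
      rcases lt_trichotomy (m : ℕ) N₀ with hm | hm | hm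
      · have := h1 ⟨(m : ℕ), hm⟩
        simpa [Fin.eta] using this
      · have : m = a := by rw [ha]; exact Fin.ext hm
        rw [this]; exact h2
      · have : m = b := by
          rw [hb]; apply Fin.ext; have := m.isLt; simp; omega
        rw [this]; exact h3
  have hL : (⋂ m : Fin (N₀+2), X (m : ℕ) ⁻¹' A (τ m))
      = (Rect X N₀ A' ∩ X N₀ ⁻¹' A b) ∩ X (N₀+1) ⁻¹' A a := by
    rw [hsplitgen (fun m => A (τ m))]
    have e1 : (fun m : Fin N₀ => A (τ ⟨(m : ℕ), by omega⟩)) = A' := by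
      funext m
      rw [hval ⟨(m : ℕ), by omega⟩ (by simpa using m.isLt), hA']
    have e2 : A (τ a) = A b := by rw [hτ, Equiv.swap_apply_left]
    have e3 : A (τ b) = A a := by rw [hτ, Equiv.swap_apply_right]
    rw [e1, e2, e3]
  have hR : (⋂ m : Fin (N₀+2), X (m : ℕ) ⁻¹' A m)
      = (Rect X N₀ A' ∩ X N₀ ⁻¹' A a) ∩ X (N₀+1) ⁻¹' A b := by
    rw [hsplitgen A]
  rw [hL, hR]
  exact swap_main P hX hcid hsym hA'm (hA b) (hA a)

theorem goodAll (hX : ∀ n, Measurable (X n)) (hcid : Hcid P X) (hsym : HSym P X) :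
    ∀ (n : ℕ) (σ : Equiv.Perm (Fin n)), Good P X σ := by
  intro n
  induction n with
  | zero =>
    intro σ A hA
    have : ∀ m : Fin 0, False := fun m => absurd m.isLt (by omega)
    simp
  | succ n IH =>
    intro σ
    by_cases hlast : σ (Fin.last n) = Fin.last n
    · exact goodFix P hX hsym σ hlast IH
    · -- n ≥ 1
      rcases n with _ | N₀
      · refine absurd (Fin.ext ?_) hlast
        have h1 := (σ (Fin.last 0)).isLt
        omega
      · set a : Fin (N₀+2) := ⟨N₀, by omega⟩ with ha
        set b : Fin (N₀+2) := ⟨N₀+1, by omega⟩ with hb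
        have hblast : b = Fin.last (N₀+1) := rfl
        set τ := Equiv.swap a b with hτ
        have hab : a ≠ b := by
          intro h; have := congrArg Fin.val h; simp [ha, hb] at this
        have hσb : σ⁻¹ b ≠ b := by
          intro h
          apply hlast
          rw [← hblast]
          calc σ b = σ (σ⁻¹ b) := by rw [h]
            _ = b := Equiv.Perm.apply_inv_self σ b
        set σ₁ := Equiv.swap (σ⁻¹ b) a with hσ₁
        set σ₂ := σ * σ₁⁻¹ * τ⁻¹ with hσ₂
        have hdecomp : σ = σ₂ * τ * σ₁ := by
          rw [hσ₂]
          group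
        have hσ₁last : σ₁ (Fin.last (N₀+1)) = Fin.last (N₀+1) := by
          rw [← hblast, hσ₁]
          exact Equiv.swap_apply_of_ne_of_ne (Ne.symm hσb) (Ne.symm hab)
        have hσ₂last : σ₂ (Fin.last (N₀+1)) = Fin.last (N₀+1) := by
          rw [← hblast, hσ₂]
          have h1 : τ⁻¹ b = a := by
            rw [hτ, Equiv.swap_inv]; exact Equiv.swap_apply_right a b
          have h2 : σ₁⁻¹ a = σ⁻¹ b := by
            rw [hσ₁, Equiv.swap_inv]; exact Equiv.swap_apply_right _ _
          show σ (σ₁⁻¹ (τ⁻¹ b)) = b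
          rw [h1, h2, Equiv.Perm.apply_inv_self]
        have g1 : Good P X σ₁ := goodFix P hX hsym σ₁ hσ₁last IH
        have g2 : Good P X σ₂ := goodFix P hX hsym σ₂ hσ₂last IH
        have gτ : Good P X τ := goodTau P hX hcid hsym
        have : Good P X (σ₂ * τ * σ₁) :=
          good_mul P (good_mul P g2 gτ) g1
        rwa [← hdecomp] at this


/-- restriction of a finitely supported permutation of ℕ to `Fin N` -/
def permFin (π : Equiv.Perm ℕ) {N : ℕ} (hπ : ∀ k, N ≤ k → π k = k) :
    Equiv.Perm (Fin N) where
  toFun i := ⟨π i, by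
    by_contra h
    push_neg at h
    have := hπ _ h
    have := π.injective this
    omega⟩
  invFun i := ⟨π⁻¹ i, by
    by_contra h
    push_neg at h
    have h1 : π (π⁻¹ (i : ℕ)) = π⁻¹ (i : ℕ) := hπ _ h
    have h2 : π (π⁻¹ (i : ℕ)) = (i : ℕ) := Equiv.Perm.apply_inv_self π _
    have := i.isLt
    omega⟩
  left_inv i := by
    apply Fin.ext
    simp [Equiv.Perm.inv_apply_self]
  right_inv i := by
    apply Fin.ext
    simp [Equiv.Perm.apply_inv_self]

theorem permFin_val (π : Equiv.Perm ℕ) {N : ℕ} (hπ : ∀ k, N ≤ k → π k = k) (i : Fin N) :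
    ((permFin π hπ) i : ℕ) = π (i : ℕ) := rfl

/-- equality of the `N`-dimensional distributions -/
theorem findim (hX : ∀ n, Measurable (X n))
    (hgood : ∀ (n : ℕ) (σ : Equiv.Perm (Fin n)), Good P X σ)
    (π : Equiv.Perm ℕ) {N : ℕ} (hπ : ∀ k, N ≤ k → π k = k) :
    Measure.map (fun ω => fun j : Fin N => X (π (j : ℕ)) ω) P
      = Measure.map (fun ω => fun j : Fin N => X (j : ℕ) ω) P := by
  have hmeas1 : Measurable (fun ω => fun j : Fin N => X (π (j : ℕ)) ω) :=
    measurable_pi_lambda _ fun j => hX _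
  have hmeas2 : Measurable (fun ω => fun j : Fin N => X (j : ℕ) ω) :=
    measurable_pi_lambda _ fun j => hX _
  haveI : IsProbabilityMeasure (Measure.map (fun ω => fun j : Fin N => X (π (j : ℕ)) ω) P) :=
    Measure.isProbabilityMeasure_map hmeas1.aemeasurable
  haveI : IsProbabilityMeasure (Measure.map (fun ω => fun j : Fin N => X (j : ℕ) ω) P) :=
    Measure.isProbabilityMeasure_map hmeas2.aemeasurable
  refine ext_of_generate_finite _ generateFrom_pi.symm isPiSystem_pi ?_ ?_
  · rintro _ ⟨A, hA, rfl⟩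
    have hA' : ∀ j, MeasurableSet (A j) := fun j => hA j (Set.mem_univ j)
    have hApi : MeasurableSet (Set.pi Set.univ A) := MeasurableSet.univ_pi hA'
    rw [Measure.map_apply hmeas1 hApi, Measure.map_apply hmeas2 hApi]
    have hpre1 : (fun ω => fun j : Fin N => X (π (j : ℕ)) ω) ⁻¹' (Set.pi Set.univ A)
        = ⋂ j : Fin N, X (((permFin π hπ) j : ℕ)) ⁻¹' A j := by
      ext ω
      simp [Set.mem_pi, permFin_val]
    have hpre2 : (fun ω => fun j : Fin N => X (j : ℕ) ω) ⁻¹' (Set.pi Set.univ A)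
        = ⋂ j : Fin N, X ((j : ℕ)) ⁻¹' A j := by
      ext ω
      simp [Set.mem_pi]
    rw [hpre1, hpre2, iInter_perm (permFin π hπ) A]
    exact hgood N (permFin π hπ)⁻¹ A hA'
  · simp

/-- conclusion of the backward direction -/
theorem backward_exchangeable (hX : ∀ n, Measurable (X n))
    (hgood : ∀ (n : ℕ) (σ : Equiv.Perm (Fin n)), Good P X σ)
    (π : Equiv.Perm ℕ) (hπ : ∃ N, ∀ k, N ≤ k → π k = k) :
    Measure.map (fun ω => fun n => X (π n) ω) P
      = Measure.map (fun ω => fun n => X n ω) P := by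
  obtain ⟨N₁, hπ₁⟩ := hπ
  have hmeasπ : Measurable (fun ω => fun n : ℕ => X (π n) ω) :=
    measurable_pi_lambda _ fun n => hX _
  have hmeas : Measurable (fun ω => fun n : ℕ => X n ω) :=
    measurable_pi_lambda _ fun n => hX _
  haveI : IsProbabilityMeasure (Measure.map (fun ω => fun n : ℕ => X (π n) ω) P) :=
    Measure.isProbabilityMeasure_map hmeasπ.aemeasurable
  haveI : IsProbabilityMeasure (Measure.map (fun ω => fun n : ℕ => X n ω) P) :=
    Measure.isProbabilityMeasure_map hmeas.aemeasurable
  refine ext_of_generate_finite _ generateFrom_measurableCylinders.symm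
    isPiSystem_measurableCylinders ?_ ?_
  · intro t ht
    obtain ⟨s, S, hS, rfl⟩ := (mem_measurableCylinders t).mp ht
    set N : ℕ := max (s.sup id + 1) N₁ with hN
    have hsN : ∀ i ∈ s, (i : ℕ) < N := by
      intro i hi
      have : i ≤ s.sup id := Finset.le_sup (f := id) hi
      omega
    have hπN : ∀ k, N ≤ k → π k = k := fun k hk => hπ₁ k (by omega)
    -- the projection from Fin N → E to the cylinder coordinates
    set proj : (Fin N → E) → (∀ i : s, E) := fun g i => g ⟨(i : ℕ), hsN i i.2⟩ with hproj
    have hprojm : Measurable proj :=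
      measurable_pi_lambda _ fun i => measurable_pi_apply _
    have hfac : ∀ (ρ : Equiv.Perm ℕ),
        Measure.map (fun ω => fun n : ℕ => X (ρ n) ω) P (cylinder s S)
          = Measure.map (fun ω => fun j : Fin N => X (ρ (j : ℕ)) ω) P (proj ⁻¹' S) := by
      intro ρ
      have hmρ : Measurable (fun ω => fun n : ℕ => X (ρ n) ω) :=
        measurable_pi_lambda _ fun n => hX _
      have hmρ' : Measurable (fun ω => fun j : Fin N => X (ρ (j : ℕ)) ω) :=
        measurable_pi_lambda _ fun j => hX _
      rw [Measure.map_apply hmρ (hS.cylinder), Measure.map_apply hmρ' (hprojm hS)]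
      rfl
    have h1 : Measure.map (fun ω => fun n : ℕ => X (π n) ω) P (cylinder s S)
        = Measure.map (fun ω => fun j : Fin N => X (π (j : ℕ)) ω) P (proj ⁻¹' S) := hfac π
    have h2 : Measure.map (fun ω => fun n : ℕ => X ((1 : Equiv.Perm ℕ) n) ω) P (cylinder s S)
        = Measure.map (fun ω => fun j : Fin N => X ((1 : Equiv.Perm ℕ) (j : ℕ)) ω) P
          (proj ⁻¹' S) := hfac 1
    simp only [Equiv.Perm.one_apply] at h2
    rw [h1, h2, findim P hX hgood π hπN]
  · simp


theorem rect_inv (hX : ∀ n, Measurable (X n))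
    (hexch : ∀ π : Equiv.Perm ℕ, (∃ N, ∀ k, N ≤ k → π k = k) →
      Measure.map (fun ω => fun n => X (π n) ω) P =
        Measure.map (fun ω => fun n => X n ω) P)
    (π : Equiv.Perm ℕ) (hπ : ∃ N, ∀ k, N ≤ k → π k = k)
    {N : ℕ} (A : Fin N → Set E) (hA : ∀ m, MeasurableSet (A m)) :
    P (⋂ m : Fin N, X (π (m : ℕ)) ⁻¹' A m) = P (⋂ m : Fin N, X (m : ℕ) ⁻¹' A m) := by
  set T : Set (ℕ → E) := ⋂ m : Fin N, (fun f : ℕ → E => f (m : ℕ)) ⁻¹' A m with hT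
  have hTm : MeasurableSet T :=
    MeasurableSet.iInter fun m => (measurable_pi_apply _) (hA m)
  have hmeasπ : Measurable (fun ω => fun n : ℕ => X (π n) ω) :=
    measurable_pi_lambda _ fun n => hX _
  have hmeas : Measurable (fun ω => fun n : ℕ => X n ω) :=
    measurable_pi_lambda _ fun n => hX _
  have h := congrArg (fun μ : Measure (ℕ → E) => μ T) (hexch π hπ)
  simp only [Measure.map_apply hmeasπ hTm, Measure.map_apply hmeas hTm] at h
  have hpre1 : (fun ω => fun n : ℕ => X (π n) ω) ⁻¹' T
      = ⋂ m : Fin N, X (π (m : ℕ)) ⁻¹' A m := by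
    ext ω; simp [hT]
  have hpre2 : (fun ω => fun n : ℕ => X n ω) ⁻¹' T
      = ⋂ m : Fin N, X ((m : ℕ)) ⁻¹' A m := by
    ext ω; simp [hT]
  rwa [hpre1, hpre2] at h

theorem forward (hX : ∀ n, Measurable (X n))
    (hexch : ∀ π : Equiv.Perm ℕ, (∃ N, ∀ k, N ≤ k → π k = k) →
      Measure.map (fun ω => fun n => X (π n) ω) P =
        Measure.map (fun ω => fun n => X n ω) P) :
    HSym P X := by
  intro n σ A hA h1 h2
  classical
  set π : Equiv.Perm ℕ := σ.extendDomain Fin.equivSubtype with hπdef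
  have hπsupp : ∀ k, n ≤ k → π k = k := by
    intro k hk
    exact Equiv.Perm.extendDomain_apply_not_subtype _ _ (by omega)
  have hπval : ∀ m : Fin n, π (m : ℕ) = (σ m : ℕ) := by
    intro m
    have h := Equiv.Perm.extendDomain_apply_subtype σ
      (Fin.equivSubtype (n := n)) (b := (m : ℕ)) m.isLt
    rw [hπdef]
    simpa [Fin.equivSubtype] using h
  -- the two events, with an extra set C at position n
  have hEV : ∀ (C : Set E), MeasurableSet C →
      P ((⋂ m : Fin n, X (σ m) ⁻¹' A m) ∩ X n ⁻¹' C)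
        = P ((⋂ m : Fin n, X m ⁻¹' A m) ∩ X n ⁻¹' C) := by
    intro C hC
    set A' : Fin (n+1) → Set E := fun m =>
      if h : (m : ℕ) < n then A ⟨(m : ℕ), h⟩ else C with hA'
    have hA'm : ∀ m, MeasurableSet (A' m) := by
      intro m; rw [hA']; dsimp only
      split_ifs
      · exact hA _
      · exact hC
    have hpre1 : (⋂ m : Fin (n+1), X (π (m : ℕ)) ⁻¹' A' m)
        = (⋂ m : Fin n, X (σ m) ⁻¹' A m) ∩ X n ⁻¹' C := by
      ext ω
      simp only [mem_iInter, mem_inter_iff, mem_preimage]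
      constructor
      · intro h
        constructor
        · intro m
          have := h ⟨(m : ℕ), by omega⟩
          rw [hπval ⟨(m : ℕ), m.isLt⟩] at this
          rw [hA'] at this; dsimp only at this
          rw [dif_pos m.isLt] at this
          simpa using this
        · have := h ⟨n, by omega⟩
          rw [hπsupp n le_rfl] at this
          rw [hA'] at this; dsimp only at this
          rw [dif_neg (by omega)] at this
          exact this
      · rintro ⟨hh1, hh2⟩ m
        rcases lt_or_ge (m : ℕ) n with hm | hm
        · rw [hπval ⟨(m : ℕ), hm⟩]
          rw [hA']; dsimp only
          rw [dif_pos hm]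
          exact hh1 ⟨(m : ℕ), hm⟩
        · have hmn : (m : ℕ) = n := by have := m.isLt; omega
          rw [hmn, hπsupp n le_rfl]
          rw [hA']; dsimp only
          rw [hmn, dif_neg (by omega)]
          exact hh2
    have hpre2 : (⋂ m : Fin (n+1), X ((m : ℕ)) ⁻¹' A' m)
        = (⋂ m : Fin n, X m ⁻¹' A m) ∩ X n ⁻¹' C := by
      ext ω
      simp only [mem_iInter, mem_inter_iff, mem_preimage]
      constructor
      · intro h
        constructor
        · intro m
          have := h ⟨(m : ℕ), by omega⟩
          rw [hA'] at this; dsimp only at this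
          rw [dif_pos m.isLt] at this
          simpa using this
        · have := h ⟨n, by omega⟩
          rw [hA'] at this; dsimp only at this
          rw [dif_neg (by omega)] at this
          exact this
      · rintro ⟨hh1, hh2⟩ m
        rcases lt_or_ge (m : ℕ) n with hm | hm
        · rw [hA']; dsimp only
          rw [dif_pos hm]
          exact hh1 ⟨(m : ℕ), hm⟩
        · have hmn : (m : ℕ) = n := by have := m.isLt; omega
          rw [hA']; dsimp only
          rw [hmn, dif_neg (by omega)]
          exact hh2
    have := rect_inv P hX hexch π ⟨n, hπsupp⟩ A' hA'm
    rwa [hpre1, hpre2] at this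
  have hPP : P (⋂ m : Fin n, X (σ m) ⁻¹' A m) = P (⋂ m : Fin n, X m ⁻¹' A m) := by
    have := hEV univ MeasurableSet.univ
    simpa using this
  have hm1 : MeasurableSet (⋂ m : Fin n, X m ⁻¹' A m) :=
    MeasurableSet.iInter fun m => hX _ (hA m)
  have hm2 : MeasurableSet (⋂ m : Fin n, X (σ m) ⁻¹' A m) :=
    MeasurableSet.iInter fun m => hX _ (hA m)
  refine Measure.ext fun C hC => ?_
  rw [Measure.map_apply (hX n) hC, Measure.map_apply (hX n) hC,
    cond_apply hm1 P, cond_apply hm2 P, hPP, hEV C hC]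


end CidAux

/-- A c.i.d. sequence `(X_n)` is exchangeable if and only if its predictive
distributions are invariant under permutations of the conditioning events:
`P[X_{n+1} ∈ · | X_1 ∈ A_1,…,X_n ∈ A_n] = P[X_{n+1} ∈ · | X_{π(1)} ∈ A_1,…,X_{π(n)} ∈ A_n]`
whenever both conditioning events have positive probability.
Indices are `0`-based: `X n` is the paper's `X_{n+1}` and the natural filtration at
time `n` is `σ(X_0,…,X_{n-1})`. -/
theorem cid_exchangeable_iff_predictive_symmetry
    {Ω E : Type*} {mΩ : MeasurableSpace Ω} [MeasurableSpace E]
    [TopologicalSpace E] [PolishSpace E] [BorelSpace E]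
    (P : Measure Ω) [IsProbabilityMeasure P]
    (X : ℕ → Ω → E) (hX : ∀ n, Measurable (X n))
    (hcid : ∀ (n k : ℕ) (f : E → ℝ), Measurable f → (∃ C, ∀ x, |f x| ≤ C) →
      P[(fun ω => f (X (n + k) ω)) |
          ⨆ m ∈ Finset.range n, MeasurableSpace.comap (X m) inferInstance]
        =ᵐ[P] P[(fun ω => f (X n ω)) |
          ⨆ m ∈ Finset.range n, MeasurableSpace.comap (X m) inferInstance]) :
    (∀ π : Equiv.Perm ℕ, (∃ N, ∀ n, N ≤ n → π n = n) →
      Measure.map (fun ω => fun n => X (π n) ω) P =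
        Measure.map (fun ω => fun n => X n ω) P) ↔
    (∀ (n : ℕ) (σ : Equiv.Perm (Fin n)) (A : Fin n → Set E),
      (∀ m, MeasurableSet (A m)) →
      P (⋂ m : Fin n, X m ⁻¹' A m) ≠ 0 →
      P (⋂ m : Fin n, X (σ m) ⁻¹' A m) ≠ 0 →
      Measure.map (X n) (P[|⋂ m : Fin n, X m ⁻¹' A m]) =
        Measure.map (X n) (P[|⋂ m : Fin n, X (σ m) ⁻¹' A m])) := by
  constructor
  · intro hexch
    exact CidAux.forward P hX hexch
  · intro hsym π hπ
    exact CidAux.backward_exchangeable P hX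
      (CidAux.goodAll P hX (fun n k f hf hb => hcid n k f hf hb)
        (fun n σ A hA h1 h2 => hsym n σ A hA h1 h2)) π hπ
end
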